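/- arXiv:2605.09514 — 9 statements merged into one kernel-verified Lean document; each statement's English description precedes it below -/
import Mathlib

section
/- ATE doubly robust identity (Lemma, consistency appendix): Suppose h₀ : 𝒜×𝒳×𝒲 → ℝ satisfies the outcome bridge condition and φ₀ : 𝒜×𝒳×𝒵 → ℝ satisfies the ν-reweighting condition, and let ĥ : 𝒜×𝒳×𝒲 → ℝ and φ̂ : 𝒜×𝒳×𝒵 → ℝ be measurable, with Y, h₀(A,X,W), ĥ(A,X,W), φ₀(A,X,Z), φ̂(A,X,Z) all square-integrable under P (so that all displayed products are integrable). Define the σ(A)-measurable random variables M₀(ω) := ∫ h₀(A(ω),x,w) dν(x,w), M̂(ω) := ∫ ĥ(A(ω),x,w) dν(x,w), and K̂ := E[φ̂(A,X,Z)·(Y − ĥ(A,X,W)) | σ(A)]. Then, P-almost surely, M₀ − M̂ − K̂ = E[(φ₀(A,X,Z) − φ̂(A,X,Z))·(h₀(A,X,W) − ĥ(A,X,W)) | σ(A)]. -/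
open MeasureTheory


private lemma l2_integrable_mul {Ω : Type*} [MeasurableSpace Ω] {P : MeasureTheory.Measure Ω}
    {f g : Ω → ℝ} (hf : MeasureTheory.MemLp f 2 P) (hg : MeasureTheory.MemLp g 2 P) :
    MeasureTheory.Integrable (fun ω => f ω * g ω) P := by
  have h : MeasureTheory.MemLp (f • g) 1 P := hg.smul (r := 1) hf
  rw [MeasureTheory.memLp_one_iff_integrable] at h
  exact h

/-- ATE doubly robust identity. -/
theorem ate_doubly_robust_identity
    {Ω 𝓐 𝓧 𝓩 𝓦 : Type*}
    [MeasurableSpace Ω] [MeasurableSpace 𝓐] [MeasurableSpace 𝓧]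
    [MeasurableSpace 𝓩] [MeasurableSpace 𝓦]
    (P : Measure Ω) [IsProbabilityMeasure P]
    (A : Ω → 𝓐) (X : Ω → 𝓧) (Z : Ω → 𝓩) (W : Ω → 𝓦) (Y : Ω → ℝ)
    (hA : Measurable A) (hX : Measurable X) (hZ : Measurable Z)
    (hW : Measurable W) (hY : Measurable Y)
    (h0 hHat : 𝓐 × 𝓧 × 𝓦 → ℝ) (phi0 phiHat : 𝓐 × 𝓧 × 𝓩 → ℝ)
    (hh0 : Measurable h0) (hhHat : Measurable hHat)
    (hphi0 : Measurable phi0) (hphiHat : Measurable phiHat)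
    (hY2 : MemLp Y 2 P)
    (hh02 : MemLp (fun ω => h0 (A ω, X ω, W ω)) 2 P)
    (hhHat2 : MemLp (fun ω => hHat (A ω, X ω, W ω)) 2 P)
    (hphi02 : MemLp (fun ω => phi0 (A ω, X ω, Z ω)) 2 P)
    (hphiHat2 : MemLp (fun ω => phiHat (A ω, X ω, Z ω)) 2 P)
    -- outcome bridge condition
    (hbridge :
      P[Y | MeasurableSpace.comap (fun ω => (A ω, X ω, Z ω)) inferInstance]
        =ᵐ[P]
      P[(fun ω => h0 (A ω, X ω, W ω)) |
        MeasurableSpace.comap (fun ω => (A ω, X ω, Z ω)) inferInstance])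
    -- ν-reweighting condition, ν the law of (X, W)
    (hreweight : ∀ q : 𝓐 × 𝓧 × 𝓦 → ℝ, Measurable q →
      Integrable (fun ω => q (A ω, X ω, W ω)) P →
      Integrable (fun ω => phi0 (A ω, X ω, Z ω) * q (A ω, X ω, W ω)) P →
      P[(fun ω => phi0 (A ω, X ω, Z ω) * q (A ω, X ω, W ω)) |
        MeasurableSpace.comap A inferInstance]
        =ᵐ[P]
      fun ω => ∫ p, q (A ω, p) ∂(Measure.map (fun ω' => (X ω', W ω')) P)) :
    (fun ω =>
      (∫ p, h0 (A ω, p) ∂(Measure.map (fun ω' => (X ω', W ω')) P))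
        - (∫ p, hHat (A ω, p) ∂(Measure.map (fun ω' => (X ω', W ω')) P))
        - (P[(fun ω' => phiHat (A ω', X ω', Z ω') * (Y ω' - hHat (A ω', X ω', W ω'))) |
            MeasurableSpace.comap A inferInstance]) ω)
      =ᵐ[P]
    P[(fun ω => (phi0 (A ω, X ω, Z ω) - phiHat (A ω, X ω, Z ω))
        * (h0 (A ω, X ω, W ω) - hHat (A ω, X ω, W ω))) |
      MeasurableSpace.comap A inferInstance] := by
  have hmA_le : MeasurableSpace.comap A inferInstance ≤ ‹MeasurableSpace Ω› := hA.comap_le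
  have hmG_le : MeasurableSpace.comap (fun ω => (A ω, X ω, Z ω)) inferInstance
      ≤ ‹MeasurableSpace Ω› := (hA.prodMk (hX.prodMk hZ)).comap_le
  have hAG : MeasurableSpace.comap A inferInstance
      ≤ MeasurableSpace.comap (fun ω => (A ω, X ω, Z ω)) inferInstance := by
    have h1 : (MeasurableSpace.comap (Prod.fst : 𝓐 × 𝓧 × 𝓩 → 𝓐) inferInstance).comap
        (fun ω => (A ω, X ω, Z ω)) = MeasurableSpace.comap A inferInstance :=
      MeasurableSpace.comap_comp
    rw [← h1]
    exact MeasurableSpace.comap_mono measurable_fst.comap_le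
  set f00 : Ω → ℝ := fun ω => phi0 (A ω, X ω, Z ω) * h0 (A ω, X ω, W ω) with hf00
  set f01 : Ω → ℝ := fun ω => phi0 (A ω, X ω, Z ω) * hHat (A ω, X ω, W ω) with hf01
  set f10 : Ω → ℝ := fun ω => phiHat (A ω, X ω, Z ω) * h0 (A ω, X ω, W ω) with hf10
  set f11 : Ω → ℝ := fun ω => phiHat (A ω, X ω, Z ω) * hHat (A ω, X ω, W ω) with hf11
  set fY : Ω → ℝ := fun ω => phiHat (A ω, X ω, Z ω) * Y ω with hfY
  have intY : Integrable Y P := hY2.integrable one_le_two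
  have int_h0 : Integrable (fun ω => h0 (A ω, X ω, W ω)) P := hh02.integrable one_le_two
  have int_hHat : Integrable (fun ω => hHat (A ω, X ω, W ω)) P := hhHat2.integrable one_le_two
  have i00 : Integrable f00 P := l2_integrable_mul hphi02 hh02
  have i01 : Integrable f01 P := l2_integrable_mul hphi02 hhHat2
  have i10 : Integrable f10 P := l2_integrable_mul hphiHat2 hh02
  have i11 : Integrable f11 P := l2_integrable_mul hphiHat2 hhHat2
  have iY : Integrable fY P := l2_integrable_mul hphiHat2 hY2
  set mA := MeasurableSpace.comap A inferInstance with hmAdef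
  set mG := MeasurableSpace.comap (fun ω => (A ω, X ω, Z ω)) inferInstance with hmGdef
  have F1 := hreweight h0 hh0 int_h0 i00
  have F2 := hreweight hHat hhHat int_hHat i01
  have hsm : StronglyMeasurable[mG] (fun ω => phiHat (A ω, X ω, Z ω)) := by
    have hgm : Measurable[mG] (fun ω => (A ω, X ω, Z ω)) := by
      rw [hmGdef]; exact Measurable.of_comap_le le_rfl
    exact (hphiHat.comp hgm).stronglyMeasurable
  have pullY : P[fY | mG] =ᵐ[P] (fun ω => phiHat (A ω, X ω, Z ω)) * P[Y | mG] :=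
    condExp_mul_of_stronglyMeasurable_left hsm iY intY
  have pullH : P[f10 | mG] =ᵐ[P]
      (fun ω => phiHat (A ω, X ω, Z ω)) * P[(fun ω => h0 (A ω, X ω, W ω)) | mG] :=
    condExp_mul_of_stronglyMeasurable_left hsm i10 int_h0
  have hGeq : P[fY | mG] =ᵐ[P] P[f10 | mG] := by
    filter_upwards [pullY, pullH, hbridge] with ω h1 h2 h3
    rw [h1, h2, Pi.mul_apply, Pi.mul_apply, h3]
  have towY : P[P[fY | mG] | mA] =ᵐ[P] P[fY | mA] := condExp_condExp_of_le hAG hmG_le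
  have towH : P[P[f10 | mG] | mA] =ᵐ[P] P[f10 | mA] := condExp_condExp_of_le hAG hmG_le
  have F3 : P[fY | mA] =ᵐ[P] P[f10 | mA] :=
    towY.symm.trans ((condExp_congr_ae hGeq).trans towH)
  have F4 : P[(fun ω' => phiHat (A ω', X ω', Z ω') * (Y ω' - hHat (A ω', X ω', W ω'))) | mA]
      =ᵐ[P] P[fY | mA] - P[f11 | mA] := by
    have hfe : (fun ω' => phiHat (A ω', X ω', Z ω') * (Y ω' - hHat (A ω', X ω', W ω')))
        = fY - f11 := by
      funext ω'; simp only [hfY, hf11, Pi.sub_apply]; ring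
    rw [hfe]; exact condExp_sub iY i11 mA
  have F5 : P[(fun ω => (phi0 (A ω, X ω, Z ω) - phiHat (A ω, X ω, Z ω))
        * (h0 (A ω, X ω, W ω) - hHat (A ω, X ω, W ω))) | mA]
      =ᵐ[P] fun ω => (P[f00|mA]) ω - (P[f01|mA]) ω - (P[f10|mA]) ω + (P[f11|mA]) ω := by
    have hfe : (fun ω => (phi0 (A ω, X ω, Z ω) - phiHat (A ω, X ω, Z ω))
        * (h0 (A ω, X ω, W ω) - hHat (A ω, X ω, W ω))) = (f00 - f01) - (f10 - f11) := by
      funext ω; simp only [hf00, hf01, hf10, hf11, Pi.sub_apply]; ring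
    rw [hfe]
    have e1 := condExp_sub (μ := P) (m := mA) (i00.sub i01) (i10.sub i11)
    have e2 := condExp_sub (μ := P) (m := mA) i00 i01
    have e3 := condExp_sub (μ := P) (m := mA) i10 i11
    filter_upwards [e1, e2, e3] with ω h1 h2 h3
    simp only [Pi.sub_apply] at h1 h2 h3 ⊢
    rw [h1, h2, h3]; ring
  filter_upwards [F1, F2, F3, F4, F5] with ω h1 h2 h3 h4 h5
  simp only [Pi.sub_apply] at h4
  rw [h5, h4, ← h1, ← h2, h3]
  ring
end

section
/- Population doubly robust remainder bound (Lemma, consistency appendix): In addition to the hypotheses and notation of the ATE doubly robust identity [h₀ satisfying the outcome bridge condition, φ₀ satisfying the ν-reweighting condition, measurable candidates ĥ, φ̂ with all displayed composites square-integrable, and M₀, M̂, K̂ as defined there], suppose φ₀ also has projected target r₀ : 𝒜×𝒳×𝒲 → ℝ, and suppose there are constants B_{e,φ}, B_{e,h} ≥ 0 such that, P-almost surely, E[(φ̂(A,X,Z) − φ₀(A,X,Z))² | σ(A)] ≤ B_{e,φ}² and E[(h₀(A,X,W) − ĥ(A,X,W))² | σ(A)] ≤ B_{e,h}². Then E[(M₀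 − M̂ − K̂)²] ≤ min{ B_{e,φ}² · E[(E[Y − ĥ(A,X,W) | σ(A,X,Z)])²], B_{e,h}² · E[(r₀(A,X,W) − E[φ̂(A,X,Z) | σ(A,X,W)])²] }. -/
open MeasureTheory Filter Topology

section AuxDR
variable {α : Type*} {m m0 : MeasurableSpace α} {μ : Measure α}

variable {α : Type*} {m m0 : MeasurableSpace α} {μ : Measure α}

lemma integrable_mul_of_memL2 {f g : α → ℝ} (hf : MemLp f 2 μ) (hg : MemLp g 2 μ) :
    Integrable (fun ω => f ω * g ω) μ := by
  refine Integrable.mono' (hf.integrable_sq.add hg.integrable_sq) (hf.1.mul hg.1) ?_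
  filter_upwards with ω
  simp only [Pi.add_apply, Real.norm_eq_abs, abs_mul]
  nlinarith [sq_nonneg (|f ω| - |g ω|), sq_abs (f ω), sq_abs (g ω), abs_nonneg (f ω),
    abs_nonneg (g ω)]

lemma sq_integral_condexp_mul_le (hm : m ≤ m0) [IsProbabilityMeasure μ]
    {u v : α → ℝ} {B : ℝ} (hB : 0 ≤ B)
    (hu : MemLp u 2 μ) (hv : MemLp v 2 μ)
    (hub : ∀ᵐ ω ∂μ, (μ[fun ω' => u ω' ^ 2|m]) ω ≤ B ^ 2) :
    ∫ ω, (μ[fun ω' => u ω' * v ω'|m]) ω ^ 2 ∂μ ≤ B ^ 2 * ∫ ω, v ω ^ 2 ∂μ := by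
  have hv2_nonneg : (0:ℝ) ≤ ∫ ω, v ω ^ 2 ∂μ := integral_nonneg fun ω => sq_nonneg _
  have hrhs : 0 ≤ B ^ 2 * ∫ ω, v ω ^ 2 ∂μ := mul_nonneg (sq_nonneg B) hv2_nonneg
  set g : α → ℝ := μ[fun ω' => u ω' * v ω'|m] with hg_def
  by_cases hgint : Integrable (fun ω => g ω ^ 2) μ
  swap
  · rw [integral_undef hgint]; exact hrhs
  have hg_sm : StronglyMeasurable[m] g := stronglyMeasurable_condExp
  have hg_int : Integrable g μ := integrable_condExp
  have huv_int : Integrable (fun ω => u ω * v ω) μ := integrable_mul_of_memL2 hu hv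
  have hu2_int : Integrable (fun ω => u ω ^ 2) μ := hu.integrable_sq
  have hv2_int : Integrable (fun ω => v ω ^ 2) μ := hv.integrable_sq
  set G : ℕ → α → ℝ := fun n ω => max (min (g ω) n) (-(n:ℝ)) with hG_def
  have hG_sm : ∀ n, StronglyMeasurable[m] (G n) := by
    intro n
    have hc : Continuous (fun x : ℝ => max (min x n) (-(n:ℝ))) :=
      (continuous_id.min continuous_const).max continuous_const
    exact hc.comp_stronglyMeasurable hg_sm
  have hG_meas : ∀ n, AEStronglyMeasurable (G n) μ :=
    fun n => ((hG_sm n).mono hm).aestronglyMeasurable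
  have hG_bdd : ∀ n ω, |G n ω| ≤ n := by
    intro n ω
    rw [abs_le]
    refine ⟨le_max_right _ _, max_le ((min_le_right _ _)) ?_⟩
    exact (neg_nonpos.2 (Nat.cast_nonneg n)).trans (Nat.cast_nonneg n)
  have hG_le : ∀ n ω, G n ω ^ 2 ≤ g ω * G n ω := by
    intro n ω
    simp only [hG_def]
    rcases le_or_gt (g ω) 0 with h | h
    · rw [min_eq_left (h.trans (Nat.cast_nonneg n))]
      have h2 : g ω ≤ max (g ω) (-(n:ℝ)) := le_max_left _ _
      have h3 : max (g ω) (-(n:ℝ)) ≤ 0 := max_le h (neg_nonpos.2 (Nat.cast_nonneg n))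
      nlinarith
    · have hmin : (0:ℝ) ≤ min (g ω) n := le_min h.le (Nat.cast_nonneg n)
      rw [max_eq_left ((neg_nonpos.2 (Nat.cast_nonneg n)).trans hmin)]
      have h2 : min (g ω) n ≤ g ω := min_le_left _ _
      nlinarith
  have hG_sq_le : ∀ n ω, G n ω ^ 2 ≤ g ω ^ 2 := by
    intro n ω
    nlinarith [hG_le n ω, sq_nonneg (g ω - G n ω)]
  have hGn2_int : ∀ n, Integrable (fun ω => G n ω ^ 2) μ := by
    intro n
    have hsm : AEStronglyMeasurable (fun ω => G n ω ^ 2) μ :=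
      ((continuous_pow 2).comp_stronglyMeasurable ((hG_sm n).mono hm)).aestronglyMeasurable
    refine Integrable.mono' (integrable_const ((n:ℝ) ^ 2)) hsm ?_
    filter_upwards with ω
    rw [Real.norm_eq_abs, abs_of_nonneg (sq_nonneg _), ← sq_abs]
    exact pow_le_pow_left₀ (abs_nonneg _) (hG_bdd n ω) 2
  have hGu2_int : ∀ n, Integrable (fun ω => G n ω ^ 2 * u ω ^ 2) μ := by
    intro n
    refine hu2_int.bdd_mul
      ((continuous_pow 2).comp_stronglyMeasurable ((hG_sm n).mono hm)).aestronglyMeasurable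
      (c := (n:ℝ) ^ 2) (Eventually.of_forall fun ω => ?_)
    rw [Real.norm_eq_abs, abs_of_nonneg (sq_nonneg _), ← sq_abs]
    exact pow_le_pow_left₀ (abs_nonneg _) (hG_bdd n ω) 2
  have hGuv_int : ∀ n, Integrable (fun ω => G n ω * (u ω * v ω)) μ :=
    fun n => huv_int.bdd_mul (hG_meas n)
      (c := n) (Eventually.of_forall fun ω => by rw [Real.norm_eq_abs]; exact hG_bdd n ω)
  have hgG_int : ∀ n, Integrable (fun ω => G n ω * g ω) μ :=
    fun n => hg_int.bdd_mul (hG_meas n)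
      (c := n) (Eventually.of_forall fun ω => by rw [Real.norm_eq_abs]; exact hG_bdd n ω)
  have huG_memL2 : ∀ n, MemLp (fun ω => u ω * G n ω) 2 μ := by
    intro n
    have hsm : AEStronglyMeasurable (fun ω => u ω * G n ω) μ := hu.1.mul (hG_meas n)
    rw [memLp_two_iff_integrable_sq hsm]
    have heq : (fun ω => (u ω * G n ω) ^ 2) = fun ω => G n ω ^ 2 * u ω ^ 2 := by
      funext ω; ring
    rw [heq]
    exact hGu2_int n
  have step1 : ∀ n, ∫ ω, G n ω ^ 2 ∂μ ≤ ∫ ω, G n ω * g ω ∂μ := by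
    intro n
    refine integral_mono (hGn2_int n) (hgG_int n) fun ω => ?_
    rw [mul_comm]
    exact hG_le n ω
  have step2 : ∀ n, ∫ ω, G n ω * g ω ∂μ = ∫ ω, G n ω * (u ω * v ω) ∂μ := by
    intro n
    have pull := condExp_mul_of_stronglyMeasurable_left (μ := μ) (hG_sm n)
      (show Integrable ((G n) * fun ω => u ω * v ω) μ from hGuv_int n) huv_int
    calc ∫ ω, G n ω * g ω ∂μ
        = ∫ ω, (μ[(G n) * (fun ω' => u ω' * v ω')|m]) ω ∂μ := by
          refine (integral_congr_ae ?_).symm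
          filter_upwards [pull] with ω hω
          exact hω
      _ = ∫ ω, G n ω * (u ω * v ω) ∂μ := integral_condExp hm
  have step3 : ∀ n, ∫ ω, G n ω * (u ω * v ω) ∂μ ≤
      Real.sqrt (∫ ω, (u ω * G n ω) ^ 2 ∂μ) * Real.sqrt (∫ ω, v ω ^ 2 ∂μ) := by
    intro n
    have hconj : Real.HolderConjugate 2 2 := Real.HolderConjugate.two_two
    have h2 : ENNReal.ofReal (2:ℝ) = 2 := by
      rw [ENNReal.ofReal_ofNat]
    have hCS := integral_mul_norm_le_Lp_mul_Lq (μ := μ) hconj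
      (h2.symm ▸ huG_memL2 n) (h2.symm ▸ hv)
    have habs_int : Integrable (fun ω => ‖u ω * G n ω‖ * ‖v ω‖) μ := by
      have := (hGuv_int n).abs
      refine this.congr ?_
      filter_upwards with ω
      simp only [Real.norm_eq_abs, abs_mul]
      ring
    have hle1 : ∫ ω, G n ω * (u ω * v ω) ∂μ ≤ ∫ ω, ‖u ω * G n ω‖ * ‖v ω‖ ∂μ := by
      refine integral_mono (hGuv_int n) habs_int fun ω => ?_
      simp only [Real.norm_eq_abs, abs_mul]
      calc G n ω * (u ω * v ω) ≤ |G n ω * (u ω * v ω)| := le_abs_self _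
        _ = |u ω| * |G n ω| * |v ω| := by rw [abs_mul, abs_mul]; ring
    have heqf : ∫ ω, ‖u ω * G n ω‖ ^ (2:ℝ) ∂μ = ∫ ω, (u ω * G n ω) ^ 2 ∂μ := by
      refine integral_congr_ae (Eventually.of_forall fun ω => ?_)
      show ‖u ω * G n ω‖ ^ (2:ℝ) = (u ω * G n ω) ^ 2
      rw [show ((2:ℝ)) = ((2:ℕ):ℝ) by norm_num, Real.rpow_natCast, Real.norm_eq_abs, sq_abs]
    have heqg : ∫ ω, ‖v ω‖ ^ (2:ℝ) ∂μ = ∫ ω, v ω ^ 2 ∂μ := by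
      refine integral_congr_ae (Eventually.of_forall fun ω => ?_)
      show ‖v ω‖ ^ (2:ℝ) = v ω ^ 2
      rw [show ((2:ℝ)) = ((2:ℕ):ℝ) by norm_num, Real.rpow_natCast, Real.norm_eq_abs, sq_abs]
    rw [heqf, heqg] at hCS
    rw [Real.sqrt_eq_rpow, Real.sqrt_eq_rpow]
    exact hle1.trans hCS
  have step4 : ∀ n, ∫ ω, (u ω * G n ω) ^ 2 ∂μ ≤ B ^ 2 * ∫ ω, G n ω ^ 2 ∂μ := by
    intro n
    have hsm2 : StronglyMeasurable[m] (fun ω => G n ω ^ 2) :=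
      (continuous_pow 2).comp_stronglyMeasurable (hG_sm n)
    have pull2 := condExp_mul_of_stronglyMeasurable_left (μ := μ) hsm2
      (show Integrable ((fun ω => G n ω ^ 2) * fun ω => u ω ^ 2) μ from hGu2_int n) hu2_int
    have int1 : Integrable (fun ω => G n ω ^ 2 * (μ[fun ω' => u ω' ^ 2|m]) ω) μ := by
      refine integrable_condExp.bdd_mul ((hsm2.mono hm).aestronglyMeasurable)
        (c := (n:ℝ) ^ 2) (Eventually.of_forall fun ω => ?_)
      rw [Real.norm_eq_abs, abs_of_nonneg (sq_nonneg _), ← sq_abs]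
      exact pow_le_pow_left₀ (abs_nonneg _) (hG_bdd n ω) 2
    have int2 : Integrable (fun ω => G n ω ^ 2 * B ^ 2) μ := (hGn2_int n).mul_const _
    calc ∫ ω, (u ω * G n ω) ^ 2 ∂μ
        = ∫ ω, G n ω ^ 2 * u ω ^ 2 ∂μ := by
          refine integral_congr_ae (Eventually.of_forall fun ω => ?_); ring
      _ = ∫ ω, (μ[(fun ω' => G n ω' ^ 2) * (fun ω' => u ω' ^ 2)|m]) ω ∂μ :=
          (integral_condExp hm).symm
      _ = ∫ ω, G n ω ^ 2 * (μ[fun ω' => u ω' ^ 2|m]) ω ∂μ := by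
          refine integral_congr_ae ?_
          filter_upwards [pull2] with ω hω
          exact hω
      _ ≤ ∫ ω, G n ω ^ 2 * B ^ 2 ∂μ := by
          refine integral_mono_ae int1 int2 ?_
          filter_upwards [hub] with ω hω
          exact mul_le_mul_of_nonneg_left hω (sq_nonneg _)
      _ = B ^ 2 * ∫ ω, G n ω ^ 2 ∂μ := by
          rw [integral_mul_const, mul_comm]
  have key : ∀ n, ∫ ω, G n ω ^ 2 ∂μ ≤ B ^ 2 * ∫ ω, v ω ^ 2 ∂μ := by
    intro n
    have hx0 : (0:ℝ) ≤ ∫ ω, G n ω ^ 2 ∂μ := integral_nonneg fun ω => sq_nonneg _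
    have huG0 : (0:ℝ) ≤ ∫ ω, (u ω * G n ω) ^ 2 ∂μ := integral_nonneg fun ω => sq_nonneg _
    have h1 : ∫ ω, G n ω ^ 2 ∂μ ≤
        Real.sqrt (∫ ω, (u ω * G n ω) ^ 2 ∂μ) * Real.sqrt (∫ ω, v ω ^ 2 ∂μ) :=
      (step1 n).trans ((step2 n).le.trans (step3 n))
    have h2 : Real.sqrt (∫ ω, (u ω * G n ω) ^ 2 ∂μ) ≤
        Real.sqrt (B ^ 2 * ∫ ω, G n ω ^ 2 ∂μ) := Real.sqrt_le_sqrt (step4 n)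
    have h3 : Real.sqrt (B ^ 2 * ∫ ω, G n ω ^ 2 ∂μ)
        = B * Real.sqrt (∫ ω, G n ω ^ 2 ∂μ) := by
      rw [Real.sqrt_mul (sq_nonneg B), Real.sqrt_sq hB]
    have hs : Real.sqrt (∫ ω, G n ω ^ 2 ∂μ) ^ 2 = ∫ ω, G n ω ^ 2 ∂μ := Real.sq_sqrt hx0
    have hc : Real.sqrt (∫ ω, v ω ^ 2 ∂μ) ^ 2 = ∫ ω, v ω ^ 2 ∂μ := Real.sq_sqrt hv2_nonneg
    have hs0 : (0:ℝ) ≤ Real.sqrt (∫ ω, G n ω ^ 2 ∂μ) := Real.sqrt_nonneg _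
    have hc0 : (0:ℝ) ≤ Real.sqrt (∫ ω, v ω ^ 2 ∂μ) := Real.sqrt_nonneg _
    have h4 : ∫ ω, G n ω ^ 2 ∂μ ≤
        B * Real.sqrt (∫ ω, G n ω ^ 2 ∂μ) * Real.sqrt (∫ ω, v ω ^ 2 ∂μ) := by
      refine h1.trans ?_
      exact mul_le_mul_of_nonneg_right (h2.trans_eq h3) hc0
    nlinarith [sq_nonneg (B * Real.sqrt (∫ ω, v ω ^ 2 ∂μ) - Real.sqrt (∫ ω, G n ω ^ 2 ∂μ))]
  have hlim : Tendsto (fun n => ∫ ω, G n ω ^ 2 ∂μ) atTop (𝓝 (∫ ω, g ω ^ 2 ∂μ)) := by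
    refine tendsto_integral_of_dominated_convergence (fun ω => g ω ^ 2)
      (fun n => (hGn2_int n).1) hgint ?_ ?_
    · intro n
      filter_upwards with ω
      rw [Real.norm_eq_abs, abs_of_nonneg (sq_nonneg _)]
      exact hG_sq_le n ω
    · filter_upwards with ω
      refine tendsto_atTop_of_eventually_const (i₀ := ⌈|g ω|⌉₊) fun n hn => ?_
      have hn' : |g ω| ≤ (n:ℝ) := (Nat.le_ceil _).trans (Nat.cast_le.2 hn)
      have h1 : min (g ω) n = g ω := min_eq_left ((le_abs_self _).trans hn')
      have h2 : max (g ω) (-(n:ℝ)) = g ω := max_eq_left (by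
        have := neg_abs_le (g ω); linarith)
      simp only [hG_def, h1, h2]
  exact le_of_tendsto hlim (Eventually.of_forall key)


lemma memLp_two_condexp (hm : m ≤ m0) [IsFiniteMeasure μ] {f : α → ℝ} (hf : MemLp f 2 μ) :
    MemLp (μ[f|m]) 2 μ := by
  have hfi : Integrable f μ := hf.integrable one_le_two
  have h_eq : ((condExpL2 ℝ ℝ hm (hf.toLp f) : Lp ℝ 2 μ) : α → ℝ) =ᵐ[μ] μ[f|m] := by
    refine ae_eq_condExp_of_forall_setIntegral_eq hm hfi ?_ ?_ ?_
    · intro s _ hμs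
      exact integrableOn_condExpL2_of_measure_ne_top hm hμs.ne _
    · intro s hs hμs
      rw [integral_condExpL2_eq hm (hf.toLp f) hs hμs.ne]
      exact setIntegral_congr_ae (hm s hs) ((hf.coeFn_toLp).mono fun x hx _ => hx)
    · exact aestronglyMeasurable_condExpL2 hm _
  exact (Lp.memLp _).ae_eq h_eq


end AuxDR



open MeasureTheory

/-- Population doubly robust remainder bound. -/
theorem population_doubly_robust_remainder_bound
    {Ω 𝓐 𝓧 𝓩 𝓦 : Type*}
    [MeasurableSpace Ω] [MeasurableSpace 𝓐] [MeasurableSpace 𝓧]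
    [MeasurableSpace 𝓩] [MeasurableSpace 𝓦]
    (P : Measure Ω) [IsProbabilityMeasure P]
    (A : Ω → 𝓐) (X : Ω → 𝓧) (Z : Ω → 𝓩) (W : Ω → 𝓦) (Y : Ω → ℝ)
    (hA : Measurable A) (hX : Measurable X) (hZ : Measurable Z)
    (hW : Measurable W) (hY : Measurable Y)
    (h0 hHat : 𝓐 × 𝓧 × 𝓦 → ℝ) (phi0 phiHat : 𝓐 × 𝓧 × 𝓩 → ℝ)
    (r0 : 𝓐 × 𝓧 × 𝓦 → ℝ)
    (hh0 : Measurable h0) (hhHat : Measurable hHat)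
    (hphi0 : Measurable phi0) (hphiHat : Measurable phiHat)
    (hr0 : Measurable r0)
    (hY2 : MemLp Y 2 P)
    (hh02 : MemLp (fun ω => h0 (A ω, X ω, W ω)) 2 P)
    (hhHat2 : MemLp (fun ω => hHat (A ω, X ω, W ω)) 2 P)
    (hphi02 : MemLp (fun ω => phi0 (A ω, X ω, Z ω)) 2 P)
    (hphiHat2 : MemLp (fun ω => phiHat (A ω, X ω, Z ω)) 2 P)
    -- outcome bridge condition
    (hbridge :
      P[Y | MeasurableSpace.comap (fun ω => (A ω, X ω, Z ω)) inferInstance]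
        =ᵐ[P]
      P[(fun ω => h0 (A ω, X ω, W ω)) |
        MeasurableSpace.comap (fun ω => (A ω, X ω, Z ω)) inferInstance])
    -- ν-reweighting condition, ν the law of (X, W)
    (hreweight : ∀ q : 𝓐 × 𝓧 × 𝓦 → ℝ, Measurable q →
      Integrable (fun ω => q (A ω, X ω, W ω)) P →
      Integrable (fun ω => phi0 (A ω, X ω, Z ω) * q (A ω, X ω, W ω)) P →
      P[(fun ω => phi0 (A ω, X ω, Z ω) * q (A ω, X ω, W ω)) |
        MeasurableSpace.comap A inferInstance]
        =ᵐ[P]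
      fun ω => ∫ p, q (A ω, p) ∂(Measure.map (fun ω' => (X ω', W ω')) P))
    -- projected target condition
    (hproj :
      P[(fun ω => phi0 (A ω, X ω, Z ω)) |
        MeasurableSpace.comap (fun ω => (A ω, X ω, W ω)) inferInstance]
        =ᵐ[P]
      fun ω => r0 (A ω, X ω, W ω))
    -- conditional second-moment bounds
    (Bephi Beh : ℝ) (hBephi : 0 ≤ Bephi) (hBeh : 0 ≤ Beh)
    (hcondphi : ∀ᵐ ω ∂P,
      (P[(fun ω' => (phiHat (A ω', X ω', Z ω') - phi0 (A ω', X ω', Z ω')) ^ 2) |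
        MeasurableSpace.comap A inferInstance]) ω ≤ Bephi ^ 2)
    (hcondh : ∀ᵐ ω ∂P,
      (P[(fun ω' => (h0 (A ω', X ω', W ω') - hHat (A ω', X ω', W ω')) ^ 2) |
        MeasurableSpace.comap A inferInstance]) ω ≤ Beh ^ 2) :
    (∫ ω,
      ((∫ p, h0 (A ω, p) ∂(Measure.map (fun ω' => (X ω', W ω')) P))
        - (∫ p, hHat (A ω, p) ∂(Measure.map (fun ω' => (X ω', W ω')) P))
        - (P[(fun ω' => phiHat (A ω', X ω', Z ω') * (Y ω' - hHat (A ω', X ω', W ω'))) |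
            MeasurableSpace.comap A inferInstance]) ω) ^ 2 ∂P)
      ≤
    min
      (Bephi ^ 2 *
        ∫ ω, ((P[(fun ω' => Y ω' - hHat (A ω', X ω', W ω')) |
          MeasurableSpace.comap (fun ω' => (A ω', X ω', Z ω')) inferInstance]) ω) ^ 2 ∂P)
      (Beh ^ 2 *
        ∫ ω, (r0 (A ω, X ω, W ω) -
          (P[(fun ω' => phiHat (A ω', X ω', Z ω')) |
            MeasurableSpace.comap (fun ω' => (A ω', X ω', W ω')) inferInstance]) ω) ^ 2 ∂P) := by
  
  classical
  have hT : Measurable (fun ω => (A ω, X ω, Z ω)) := hA.prodMk (hX.prodMk hZ)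
  have hU : Measurable (fun ω => (A ω, X ω, W ω)) := hA.prodMk (hX.prodMk hW)
  have hmA_le : MeasurableSpace.comap A inferInstance ≤ ‹MeasurableSpace Ω› := hA.comap_le
  have hmXZ_le : MeasurableSpace.comap (fun ω => (A ω, X ω, Z ω)) inferInstance ≤ ‹MeasurableSpace Ω› := hT.comap_le
  have hmXW_le : MeasurableSpace.comap (fun ω => (A ω, X ω, W ω)) inferInstance ≤ ‹MeasurableSpace Ω› := hU.comap_le
  have hA_XZ : MeasurableSpace.comap A inferInstance ≤ MeasurableSpace.comap (fun ω => (A ω, X ω, Z ω)) inferInstance := by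
    have hAeq : A = (fun p : 𝓐 × 𝓧 × 𝓩 => p.1) ∘ (fun ω => (A ω, X ω, Z ω)) := rfl
    conv_lhs => rw [hAeq]
    rw [← MeasurableSpace.comap_comp]
    exact MeasurableSpace.comap_mono measurable_fst.comap_le
  have hA_XW : MeasurableSpace.comap A inferInstance ≤ MeasurableSpace.comap (fun ω => (A ω, X ω, W ω)) inferInstance := by
    have hAeq : A = (fun p : 𝓐 × 𝓧 × 𝓦 => p.1) ∘ (fun ω => (A ω, X ω, W ω)) := rfl
    conv_lhs => rw [hAeq]
    rw [← MeasurableSpace.comap_comp]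
    exact MeasurableSpace.comap_mono measurable_fst.comap_le
  have hTm : Measurable[MeasurableSpace.comap (fun ω => (A ω, X ω, Z ω)) inferInstance] (fun ω => (A ω, X ω, Z ω)) := Measurable.of_comap_le le_rfl
  have hUm : Measurable[MeasurableSpace.comap (fun ω => (A ω, X ω, W ω)) inferInstance] (fun ω => (A ω, X ω, W ω)) := Measurable.of_comap_le le_rfl
  have hphi0_sm : StronglyMeasurable[MeasurableSpace.comap (fun ω => (A ω, X ω, Z ω)) inferInstance] (fun ω => phi0 (A ω, X ω, Z ω)) :=
    (hphi0.comp hTm).stronglyMeasurable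
  have hUF_sm : StronglyMeasurable[MeasurableSpace.comap (fun ω => (A ω, X ω, Z ω)) inferInstance] (fun ω => phi0 (A ω, X ω, Z ω) - phiHat (A ω, X ω, Z ω)) :=
    ((hphi0.comp hTm).sub (hphiHat.comp hTm)).stronglyMeasurable
  have hS_sm : StronglyMeasurable[MeasurableSpace.comap (fun ω => (A ω, X ω, W ω)) inferInstance] (fun ω => h0 (A ω, X ω, W ω) - hHat (A ω, X ω, W ω)) :=
    ((hh0.comp hUm).sub (hhHat.comp hUm)).stronglyMeasurable
  have hT12 : MemLp (fun ω => Y ω - hHat (A ω, X ω, W ω)) 2 P := hY2.sub hhHat2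
  have hS2m : MemLp (fun ω => h0 (A ω, X ω, W ω) - hHat (A ω, X ω, W ω)) 2 P := hh02.sub hhHat2
  have hUF2 : MemLp (fun ω => phi0 (A ω, X ω, Z ω) - phiHat (A ω, X ω, Z ω)) 2 P := hphi02.sub hphiHat2
  have int_Y : Integrable Y P := hY2.integrable one_le_two
  have int_h0c : Integrable (fun ω => h0 (A ω, X ω, W ω)) P := hh02.integrable one_le_two
  have int_hHatc : Integrable (fun ω => hHat (A ω, X ω, W ω)) P := hhHat2.integrable one_le_two
  have int_phi0c : Integrable (fun ω => phi0 (A ω, X ω, Z ω)) P := hphi02.integrable one_le_two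
  have int_phiHatc : Integrable (fun ω => phiHat (A ω, X ω, Z ω)) P := hphiHat2.integrable one_le_two
  have int_T1 : Integrable (fun ω => Y ω - hHat (A ω, X ω, W ω)) P := hT12.integrable one_le_two
  have int_S : Integrable (fun ω => h0 (A ω, X ω, W ω) - hHat (A ω, X ω, W ω)) P := hS2m.integrable one_le_two
  have int_UF : Integrable (fun ω => phi0 (A ω, X ω, Z ω) - phiHat (A ω, X ω, Z ω)) P := hUF2.integrable one_le_two
  have int_p0h0 : Integrable (fun ω => phi0 (A ω, X ω, Z ω) * h0 (A ω, X ω, W ω)) P :=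
    integrable_mul_of_memL2 hphi02 hh02
  have int_p0hH : Integrable (fun ω => phi0 (A ω, X ω, Z ω) * hHat (A ω, X ω, W ω)) P :=
    integrable_mul_of_memL2 hphi02 hhHat2
  have hrw1 := hreweight h0 hh0 int_h0c int_p0h0
  have hrw2 := hreweight hHat hhHat int_hHatc int_p0hH
  have hS_XZ : P[(fun ω => h0 (A ω, X ω, W ω) - hHat (A ω, X ω, W ω))|MeasurableSpace.comap (fun ω => (A ω, X ω, Z ω)) inferInstance] =ᵐ[P] P[(fun ω => Y ω - hHat (A ω, X ω, W ω))|MeasurableSpace.comap (fun ω => (A ω, X ω, Z ω)) inferInstance] := by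
    calc P[(fun ω => h0 (A ω, X ω, W ω) - hHat (A ω, X ω, W ω))|MeasurableSpace.comap (fun ω => (A ω, X ω, Z ω)) inferInstance]
        =ᵐ[P] P[(fun ω => h0 (A ω, X ω, W ω))|MeasurableSpace.comap (fun ω => (A ω, X ω, Z ω)) inferInstance] - P[(fun ω => hHat (A ω, X ω, W ω))|MeasurableSpace.comap (fun ω => (A ω, X ω, Z ω)) inferInstance] := condExp_sub int_h0c int_hHatc _
      _ =ᵐ[P] P[Y|MeasurableSpace.comap (fun ω => (A ω, X ω, Z ω)) inferInstance] - P[(fun ω => hHat (A ω, X ω, W ω))|MeasurableSpace.comap (fun ω => (A ω, X ω, Z ω)) inferInstance] := hbridge.symm.sub (Filter.EventuallyEq.refl _ _)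
      _ =ᵐ[P] P[(fun ω => Y ω - hHat (A ω, X ω, W ω))|MeasurableSpace.comap (fun ω => (A ω, X ω, Z ω)) inferInstance] := (condExp_sub int_Y int_hHatc _).symm
  have bridge_switch : ∀ f : Ω → ℝ, StronglyMeasurable[MeasurableSpace.comap (fun ω => (A ω, X ω, Z ω)) inferInstance] f → MemLp f 2 P →
      P[(fun ω => f ω * (h0 (A ω, X ω, W ω) - hHat (A ω, X ω, W ω)))|MeasurableSpace.comap A inferInstance] =ᵐ[P]
      P[(fun ω => f ω * (Y ω - hHat (A ω, X ω, W ω)))|MeasurableSpace.comap A inferInstance] := by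
    intro f hfsm hf2
    have hfS : Integrable (fun ω => f ω * (h0 (A ω, X ω, W ω) - hHat (A ω, X ω, W ω))) P :=
      integrable_mul_of_memL2 hf2 hS2m
    have hfT : Integrable (fun ω => f ω * (Y ω - hHat (A ω, X ω, W ω))) P :=
      integrable_mul_of_memL2 hf2 hT12
    have pull1 : P[(fun ω => f ω * (h0 (A ω, X ω, W ω) - hHat (A ω, X ω, W ω)))|MeasurableSpace.comap (fun ω => (A ω, X ω, Z ω)) inferInstance]
        =ᵐ[P] fun ω => f ω * (P[(fun ω => h0 (A ω, X ω, W ω) - hHat (A ω, X ω, W ω))|MeasurableSpace.comap (fun ω => (A ω, X ω, Z ω)) inferInstance]) ω :=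
      condExp_mul_of_stronglyMeasurable_left hfsm hfS int_S
    have pull2 : P[(fun ω => f ω * (Y ω - hHat (A ω, X ω, W ω)))|MeasurableSpace.comap (fun ω => (A ω, X ω, Z ω)) inferInstance]
        =ᵐ[P] fun ω => f ω * (P[(fun ω => Y ω - hHat (A ω, X ω, W ω))|MeasurableSpace.comap (fun ω => (A ω, X ω, Z ω)) inferInstance]) ω :=
      condExp_mul_of_stronglyMeasurable_left hfsm hfT int_T1
    calc P[(fun ω => f ω * (h0 (A ω, X ω, W ω) - hHat (A ω, X ω, W ω)))|MeasurableSpace.comap A inferInstance]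
        =ᵐ[P] P[P[(fun ω => f ω * (h0 (A ω, X ω, W ω) - hHat (A ω, X ω, W ω)))|MeasurableSpace.comap (fun ω => (A ω, X ω, Z ω)) inferInstance]|MeasurableSpace.comap A inferInstance] :=
          (condExp_condExp_of_le hA_XZ hmXZ_le).symm
      _ =ᵐ[P] P[P[(fun ω => f ω * (Y ω - hHat (A ω, X ω, W ω)))|MeasurableSpace.comap (fun ω => (A ω, X ω, Z ω)) inferInstance]|MeasurableSpace.comap A inferInstance] := by
          refine condExp_congr_ae ?_
          calc P[(fun ω => f ω * (h0 (A ω, X ω, W ω) - hHat (A ω, X ω, W ω)))|MeasurableSpace.comap (fun ω => (A ω, X ω, Z ω)) inferInstance]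
              =ᵐ[P] fun ω => f ω * (P[(fun ω => h0 (A ω, X ω, W ω) - hHat (A ω, X ω, W ω))|MeasurableSpace.comap (fun ω => (A ω, X ω, Z ω)) inferInstance]) ω := pull1
            _ =ᵐ[P] fun ω => f ω * (P[(fun ω => Y ω - hHat (A ω, X ω, W ω))|MeasurableSpace.comap (fun ω => (A ω, X ω, Z ω)) inferInstance]) ω := by
                filter_upwards [hS_XZ] with ω h
                rw [h]
            _ =ᵐ[P] P[(fun ω => f ω * (Y ω - hHat (A ω, X ω, W ω)))|MeasurableSpace.comap (fun ω => (A ω, X ω, Z ω)) inferInstance] := pull2.symm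
      _ =ᵐ[P] P[(fun ω => f ω * (Y ω - hHat (A ω, X ω, W ω)))|MeasurableSpace.comap A inferInstance] :=
          condExp_condExp_of_le hA_XZ hmXZ_le
  set K : Ω → ℝ :=
    P[(fun ω' => phiHat (A ω', X ω', Z ω') * (Y ω' - hHat (A ω', X ω', W ω')))|MeasurableSpace.comap A inferInstance] with hK_def
  have hR : ((fun ω => ∫ p, h0 (A ω, p) ∂(Measure.map (fun ω' => (X ω', W ω')) P))
        - (fun ω => ∫ p, hHat (A ω, p) ∂(Measure.map (fun ω' => (X ω', W ω')) P)) - K)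
      =ᵐ[P] P[(fun ω => (phi0 (A ω, X ω, Z ω) - phiHat (A ω, X ω, Z ω)) * (Y ω - hHat (A ω, X ω, W ω)))|MeasurableSpace.comap A inferInstance] := by
    calc ((fun ω => ∫ p, h0 (A ω, p) ∂(Measure.map (fun ω' => (X ω', W ω')) P))
          - (fun ω => ∫ p, hHat (A ω, p) ∂(Measure.map (fun ω' => (X ω', W ω')) P)) - K)
        =ᵐ[P] (P[(fun ω => phi0 (A ω, X ω, Z ω) * h0 (A ω, X ω, W ω))|MeasurableSpace.comap A inferInstance]
            - P[(fun ω => phi0 (A ω, X ω, Z ω) * hHat (A ω, X ω, W ω))|MeasurableSpace.comap A inferInstance]) - K :=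
          (hrw1.symm.sub hrw2.symm).sub (Filter.EventuallyEq.refl _ _)
      _ =ᵐ[P] P[(fun ω => phi0 (A ω, X ω, Z ω) * (h0 (A ω, X ω, W ω) - hHat (A ω, X ω, W ω)))|MeasurableSpace.comap A inferInstance] - K := by
          refine Filter.EventuallyEq.sub ?_ (Filter.EventuallyEq.refl _ _)
          refine (condExp_sub int_p0h0 int_p0hH _).symm.trans (condExp_congr_ae ?_)
          filter_upwards with ω
          simp only [Pi.sub_apply]
          ring
      _ =ᵐ[P] P[(fun ω => phi0 (A ω, X ω, Z ω) * (Y ω - hHat (A ω, X ω, W ω)))|MeasurableSpace.comap A inferInstance] - K :=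
          (bridge_switch (fun ω => phi0 (A ω, X ω, Z ω)) hphi0_sm hphi02).sub (Filter.EventuallyEq.refl _ _)
      _ =ᵐ[P] P[(fun ω => (phi0 (A ω, X ω, Z ω) - phiHat (A ω, X ω, Z ω)) * (Y ω - hHat (A ω, X ω, W ω)))|MeasurableSpace.comap A inferInstance] := by
          rw [hK_def]
          refine Filter.EventuallyEq.trans
            ((condExp_sub (integrable_mul_of_memL2 hphi02 hT12)
              (integrable_mul_of_memL2 hphiHat2 hT12) _).symm) (condExp_congr_ae ?_)
          filter_upwards with ω
          simp only [Pi.sub_apply]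
          ring
  have hR1 : ((fun ω => ∫ p, h0 (A ω, p) ∂(Measure.map (fun ω' => (X ω', W ω')) P))
        - (fun ω => ∫ p, hHat (A ω, p) ∂(Measure.map (fun ω' => (X ω', W ω')) P)) - K)
      =ᵐ[P] P[(fun ω => (phi0 (A ω, X ω, Z ω) - phiHat (A ω, X ω, Z ω)) * (P[(fun ω => Y ω - hHat (A ω, X ω, W ω))|MeasurableSpace.comap (fun ω => (A ω, X ω, Z ω)) inferInstance]) ω)|MeasurableSpace.comap A inferInstance] := by
    refine hR.trans ?_
    calc P[(fun ω => (phi0 (A ω, X ω, Z ω) - phiHat (A ω, X ω, Z ω)) * (Y ω - hHat (A ω, X ω, W ω)))|MeasurableSpace.comap A inferInstance]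
        =ᵐ[P] P[P[(fun ω => (phi0 (A ω, X ω, Z ω) - phiHat (A ω, X ω, Z ω)) * (Y ω - hHat (A ω, X ω, W ω)))|MeasurableSpace.comap (fun ω => (A ω, X ω, Z ω)) inferInstance]|MeasurableSpace.comap A inferInstance] :=
          (condExp_condExp_of_le hA_XZ hmXZ_le).symm
      _ =ᵐ[P] P[(fun ω => (phi0 (A ω, X ω, Z ω) - phiHat (A ω, X ω, Z ω)) * (P[(fun ω => Y ω - hHat (A ω, X ω, W ω))|MeasurableSpace.comap (fun ω => (A ω, X ω, Z ω)) inferInstance]) ω)|MeasurableSpace.comap A inferInstance] := by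
          exact condExp_congr_ae (condExp_mul_of_stronglyMeasurable_left hUF_sm
            (integrable_mul_of_memL2 hUF2 hT12) int_T1)
  have hUF_XW : P[(fun ω => phi0 (A ω, X ω, Z ω) - phiHat (A ω, X ω, Z ω))|MeasurableSpace.comap (fun ω => (A ω, X ω, W ω)) inferInstance]
      =ᵐ[P] fun ω => r0 (A ω, X ω, W ω) - (P[(fun ω => phiHat (A ω, X ω, Z ω))|MeasurableSpace.comap (fun ω => (A ω, X ω, W ω)) inferInstance]) ω := by
    calc P[(fun ω => phi0 (A ω, X ω, Z ω) - phiHat (A ω, X ω, Z ω))|MeasurableSpace.comap (fun ω => (A ω, X ω, W ω)) inferInstance]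
        =ᵐ[P] P[(fun ω => phi0 (A ω, X ω, Z ω))|MeasurableSpace.comap (fun ω => (A ω, X ω, W ω)) inferInstance] - P[(fun ω => phiHat (A ω, X ω, Z ω))|MeasurableSpace.comap (fun ω => (A ω, X ω, W ω)) inferInstance] := condExp_sub int_phi0c int_phiHatc _
      _ =ᵐ[P] fun ω => r0 (A ω, X ω, W ω) - (P[(fun ω => phiHat (A ω, X ω, Z ω))|MeasurableSpace.comap (fun ω => (A ω, X ω, W ω)) inferInstance]) ω :=
          hproj.sub (Filter.EventuallyEq.refl _ _)
  have hVF2 : MemLp (fun ω => r0 (A ω, X ω, W ω) - (P[(fun ω => phiHat (A ω, X ω, Z ω))|MeasurableSpace.comap (fun ω => (A ω, X ω, W ω)) inferInstance]) ω) 2 P :=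
    MemLp.ae_eq (hproj.sub (Filter.EventuallyEq.refl _ _))
      ((memLp_two_condexp hmXW_le hphi02).sub (memLp_two_condexp hmXW_le hphiHat2))
  have int_VF : Integrable (fun ω => r0 (A ω, X ω, W ω) - (P[(fun ω => phiHat (A ω, X ω, Z ω))|MeasurableSpace.comap (fun ω => (A ω, X ω, W ω)) inferInstance]) ω) P := integrable_condExp.congr hUF_XW
  have hVF_sm : StronglyMeasurable[MeasurableSpace.comap (fun ω => (A ω, X ω, W ω)) inferInstance] (fun ω => r0 (A ω, X ω, W ω) - (P[(fun ω => phiHat (A ω, X ω, Z ω))|MeasurableSpace.comap (fun ω => (A ω, X ω, W ω)) inferInstance]) ω) :=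
    (hr0.comp hUm).stronglyMeasurable.sub stronglyMeasurable_condExp
  have hR2 : ((fun ω => ∫ p, h0 (A ω, p) ∂(Measure.map (fun ω' => (X ω', W ω')) P))
        - (fun ω => ∫ p, hHat (A ω, p) ∂(Measure.map (fun ω' => (X ω', W ω')) P)) - K)
      =ᵐ[P] P[(fun ω => (h0 (A ω, X ω, W ω) - hHat (A ω, X ω, W ω)) * (r0 (A ω, X ω, W ω) - (P[(fun ω => phiHat (A ω, X ω, Z ω))|MeasurableSpace.comap (fun ω => (A ω, X ω, W ω)) inferInstance]) ω))|MeasurableSpace.comap A inferInstance] := by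
    refine hR.trans ?_
    refine (bridge_switch (fun ω => phi0 (A ω, X ω, Z ω) - phiHat (A ω, X ω, Z ω)) hUF_sm hUF2).symm.trans ?_
    calc P[(fun ω => (phi0 (A ω, X ω, Z ω) - phiHat (A ω, X ω, Z ω)) * (h0 (A ω, X ω, W ω) - hHat (A ω, X ω, W ω)))|MeasurableSpace.comap A inferInstance]
        =ᵐ[P] P[P[(fun ω => (phi0 (A ω, X ω, Z ω) - phiHat (A ω, X ω, Z ω)) * (h0 (A ω, X ω, W ω) - hHat (A ω, X ω, W ω)))|MeasurableSpace.comap (fun ω => (A ω, X ω, W ω)) inferInstance]|MeasurableSpace.comap A inferInstance] :=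
          (condExp_condExp_of_le hA_XW hmXW_le).symm
      _ =ᵐ[P] P[(fun ω => (h0 (A ω, X ω, W ω) - hHat (A ω, X ω, W ω)) * (r0 (A ω, X ω, W ω) - (P[(fun ω => phiHat (A ω, X ω, Z ω))|MeasurableSpace.comap (fun ω => (A ω, X ω, W ω)) inferInstance]) ω))|MeasurableSpace.comap A inferInstance] := by
          refine (condExp_congr_ae ?_).trans (condExp_condExp_of_le hA_XW hmXW_le)
          calc P[(fun ω => (phi0 (A ω, X ω, Z ω) - phiHat (A ω, X ω, Z ω)) * (h0 (A ω, X ω, W ω) - hHat (A ω, X ω, W ω)))|MeasurableSpace.comap (fun ω => (A ω, X ω, W ω)) inferInstance]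
              =ᵐ[P] P[(fun ω => (h0 (A ω, X ω, W ω) - hHat (A ω, X ω, W ω)) * (phi0 (A ω, X ω, Z ω) - phiHat (A ω, X ω, Z ω)))|MeasurableSpace.comap (fun ω => (A ω, X ω, W ω)) inferInstance] := by
                refine condExp_congr_ae (Filter.Eventually.of_forall fun ω => ?_)
                ring
            _ =ᵐ[P] fun ω => (h0 (A ω, X ω, W ω) - hHat (A ω, X ω, W ω)) * (P[(fun ω => phi0 (A ω, X ω, Z ω) - phiHat (A ω, X ω, Z ω))|MeasurableSpace.comap (fun ω => (A ω, X ω, W ω)) inferInstance]) ω :=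
                condExp_mul_of_stronglyMeasurable_left hS_sm
                  (integrable_mul_of_memL2 hS2m hUF2) int_UF
            _ =ᵐ[P] fun ω => (h0 (A ω, X ω, W ω) - hHat (A ω, X ω, W ω)) * (r0 (A ω, X ω, W ω) - (P[(fun ω => phiHat (A ω, X ω, Z ω))|MeasurableSpace.comap (fun ω => (A ω, X ω, W ω)) inferInstance]) ω) := by
                filter_upwards [hUF_XW] with ω h
                rw [h]
            _ =ᵐ[P] P[(fun ω => (h0 (A ω, X ω, W ω) - hHat (A ω, X ω, W ω)) * (r0 (A ω, X ω, W ω) - (P[(fun ω => phiHat (A ω, X ω, Z ω))|MeasurableSpace.comap (fun ω => (A ω, X ω, W ω)) inferInstance]) ω))|MeasurableSpace.comap (fun ω => (A ω, X ω, W ω)) inferInstance] := by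
                refine Filter.EventuallyEq.of_eq ?_
                refine (condExp_of_stronglyMeasurable hmXW_le ?_ ?_).symm
                · exact hS_sm.mul hVF_sm
                · exact integrable_mul_of_memL2 hS2m hVF2
  have hub1 : ∀ᵐ ω ∂P, (P[(fun ω' => (phi0 (A ω', X ω', Z ω')
      - phiHat (A ω', X ω', Z ω')) ^ 2)|MeasurableSpace.comap A inferInstance]) ω ≤ Bephi ^ 2 := by
    have heq : (fun ω' => (phi0 (A ω', X ω', Z ω') - phiHat (A ω', X ω', Z ω')) ^ 2)
        = (fun ω' => (phiHat (A ω', X ω', Z ω') - phi0 (A ω', X ω', Z ω')) ^ 2) := by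
      funext ω'
      ring
    rw [heq]
    exact hcondphi
  have hD2 : MemLp (P[(fun ω => Y ω - hHat (A ω, X ω, W ω))|MeasurableSpace.comap (fun ω => (A ω, X ω, Z ω)) inferInstance]) 2 P := memLp_two_condexp hmXZ_le hT12
  have bound1 := sq_integral_condexp_mul_le hmA_le hBephi hUF2 hD2 hub1
  have bound2 := sq_integral_condexp_mul_le hmA_le hBeh hS2m hVF2 hcondh
  refine le_min ?_ ?_
  · calc ∫ ω, ((∫ p, h0 (A ω, p) ∂(Measure.map (fun ω' => (X ω', W ω')) P)) - (∫ p, hHat (A ω, p) ∂(Measure.map (fun ω' => (X ω', W ω')) P)) - K ω) ^ 2 ∂P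
        = ∫ ω, (P[(fun ω' => (phi0 (A ω', X ω', Z ω') - phiHat (A ω', X ω', Z ω'))
            * (P[(fun ω => Y ω - hHat (A ω, X ω, W ω))|MeasurableSpace.comap (fun ω => (A ω, X ω, Z ω)) inferInstance]) ω')|MeasurableSpace.comap A inferInstance]) ω ^ 2 ∂P := by
          refine integral_congr_ae (hR1.mono fun ω h => ?_)
          simp only [Pi.sub_apply] at h
          exact congrArg (fun x => x ^ 2) h
      _ ≤ Bephi ^ 2 * ∫ ω, ((P[(fun ω => Y ω - hHat (A ω, X ω, W ω))|MeasurableSpace.comap (fun ω => (A ω, X ω, Z ω)) inferInstance]) ω) ^ 2 ∂P := bound1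
  · calc ∫ ω, ((∫ p, h0 (A ω, p) ∂(Measure.map (fun ω' => (X ω', W ω')) P)) - (∫ p, hHat (A ω, p) ∂(Measure.map (fun ω' => (X ω', W ω')) P)) - K ω) ^ 2 ∂P
        = ∫ ω, (P[(fun ω' => (h0 (A ω', X ω', W ω') - hHat (A ω', X ω', W ω'))
            * (r0 (A ω', X ω', W ω') - (P[(fun ω => phiHat (A ω, X ω, Z ω))|MeasurableSpace.comap (fun ω => (A ω, X ω, W ω)) inferInstance]) ω'))|MeasurableSpace.comap A inferInstance]) ω ^ 2 ∂P := by
          refine integral_congr_ae (hR2.mono fun ω h => ?_)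
          simp only [Pi.sub_apply] at h
          exact congrArg (fun x => x ^ 2) h
      _ ≤ Beh ^ 2 * ∫ ω, (r0 (A ω, X ω, W ω) - (P[(fun ω => phiHat (A ω, X ω, Z ω))|MeasurableSpace.comap (fun ω => (A ω, X ω, W ω)) inferInstance]) ω) ^ 2 ∂P := bound2
end

section
/- Weak residual controls the dose-response error (Lemma, consistency appendix): Suppose φ₀ : 𝒜×𝒳×𝒵 → ℝ satisfies the ν-reweighting condition and let h : 𝒜×𝒳×𝒲 → ℝ be measurable, with Y, φ₀(A,X,Z), and h(A,X,W) square-integrable under P (so that the products Y·φ₀(A,X,Z) and φ₀(A,X,Z)·h(A,X,W) are integrable). Define F := E[Y·φ₀(A,X,Z) | σ(A)], M_h(ω) := ∫ h(A(ω),x,w) dν(x,w), D := E[Y − h(A,X,W) | σ(A,X,Z)], and C_φ := (E[φ₀(A,X,Z)² | σ(A)])^{1/2}. Then, P-almost surely, |F − M_h| ≤ C_φ · (E[D² | σ(A)])^{1/2}. -/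
open MeasureTheory

private lemma integrable_mul_memL2 {α : Type*} [MeasurableSpace α] {μ : Measure α}
    {f g : α → ℝ} (hf : MemLp f 2 μ) (hg : MemLp g 2 μ) :
    Integrable (fun x => f x * g x) μ := by
  have hb : Integrable (fun x => (f x ^ 2 + g x ^ 2) / 2) μ :=
    (hf.integrable_sq.add hg.integrable_sq).div_const 2
  refine hb.mono' (hf.aestronglyMeasurable.mul hg.aestronglyMeasurable)
    (Filter.Eventually.of_forall fun x => ?_)
  rw [Real.norm_eq_abs, abs_mul]
  nlinarith [sq_nonneg (|f x| - |g x|), sq_abs (f x), sq_abs (g x),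
    abs_nonneg (f x), abs_nonneg (g x)]

private lemma memℒp_two_condexp {α : Type*} {m m0 : MeasurableSpace α} {μ : Measure α}
    [IsFiniteMeasure μ] (hm : m ≤ m0) {u : α → ℝ} (hu : MemLp u 2 μ) :
    MemLp (μ[u|m]) 2 μ := by
  have hui : Integrable u μ := hu.integrable one_le_two
  have hg : (condExpL2 ℝ ℝ hm (hu.toLp u) : α → ℝ) =ᵐ[μ] μ[u|m] := by
    refine ae_eq_condExp_of_forall_setIntegral_eq hm hui
      (fun s hs hμs => integrableOn_condExpL2_of_measure_ne_top hm hμs.ne _)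
      (fun s hs hμs => ?_) (aestronglyMeasurable_condExpL2 hm _)
    rw [integral_condExpL2_eq hm _ hs hμs.ne]
    exact setIntegral_congr_ae (hm s hs) (hu.coeFn_toLp.mono fun x hx _ => hx)
  exact (Lp.memLp (condExpL2 ℝ ℝ hm (hu.toLp u) : Lp ℝ 2 μ)).ae_eq hg

private lemma condexp_cauchySchwarz {α : Type*} {m m0 : MeasurableSpace α} (hm : m ≤ m0)
    {μ : Measure α} [IsProbabilityMeasure μ] {f g : α → ℝ}
    (hf : MemLp f 2 μ) (hg : MemLp g 2 μ) :
    ∀ᵐ ω ∂μ, |(μ[(fun x => f x * g x)|m]) ω| ≤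
      Real.sqrt ((μ[(fun x => f x ^ 2)|m]) ω) * Real.sqrt ((μ[(fun x => g x ^ 2)|m]) ω) := by
  have ifg : Integrable (fun x => f x * g x) μ := integrable_mul_memL2 hf hg
  have key : ∀ t : ℚ, ∀ᵐ ω ∂μ,
      0 ≤ (μ[(fun x => f x ^ 2)|m]) ω + (2 * (t:ℝ)) * (μ[(fun x => f x * g x)|m]) ω
        + (t:ℝ)^2 * (μ[(fun x => g x ^ 2)|m]) ω := by
    intro t
    have hnn : 0 ≤ᵐ[μ] μ[(fun x => (f x + (t:ℝ) * g x) ^ 2)|m] :=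
      condExp_nonneg (Filter.Eventually.of_forall fun x => sq_nonneg _)
    have heq : (fun x => (f x + (t:ℝ) * g x) ^ 2)
        = ((fun x => f x ^ 2) + (2 * (t:ℝ)) • (fun x => f x * g x))
          + ((t:ℝ)^2) • (fun x => g x ^ 2) := by
      funext x
      simp only [Pi.add_apply, Pi.smul_apply, smul_eq_mul]
      ring
    rw [heq] at hnn
    have h1 := condExp_add (μ := μ) (m := m)
      (hf.integrable_sq.add ((ifg).smul (2 * (t:ℝ)))) (hg.integrable_sq.smul ((t:ℝ)^2))
    have h2 := condExp_add (μ := μ) (m := m) hf.integrable_sq ((ifg).smul (2 * (t:ℝ)))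
    have h3 := condExp_smul (μ := μ) (m := m) (2 * (t:ℝ)) (fun x => f x * g x)
    have h4 := condExp_smul (μ := μ) (m := m) ((t:ℝ)^2) (fun x => g x ^ 2)
    filter_upwards [hnn, h1, h2, h3, h4] with ω h0 e1 e2 e3 e4
    rw [e1] at h0
    simp only [Pi.zero_apply, Pi.add_apply, Pi.smul_apply, smul_eq_mul] at h0 e2 e3 e4
    rw [e2, e3, e4] at h0
    linarith
  have ha : 0 ≤ᵐ[μ] μ[(fun x => f x ^ 2)|m] :=
    condExp_nonneg (Filter.Eventually.of_forall fun x => sq_nonneg _)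
  have hc : 0 ≤ᵐ[μ] μ[(fun x => g x ^ 2)|m] :=
    condExp_nonneg (Filter.Eventually.of_forall fun x => sq_nonneg _)
  filter_upwards [ae_all_iff.mpr key, ha, hc] with ω hω haω hcω
  set a := (μ[(fun x => f x ^ 2)|m]) ω
  set b := (μ[(fun x => f x * g x)|m]) ω
  set c := (μ[(fun x => g x ^ 2)|m]) ω
  have hreal : ∀ x : ℝ, 0 ≤ c * (x * x) + (2 * b) * x + a := by
    intro x
    refine DenseRange.induction_on Rat.denseRange_cast x ?_ fun t => ?_
    · exact isClosed_le continuous_const (by continuity)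
    · have := hω t
      nlinarith [this]
  have hd := discrim_le_zero hreal
  rw [discrim] at hd
  have hb2 : b ^ 2 ≤ a * c := by nlinarith [hd]
  calc |b| = Real.sqrt (b ^ 2) := (Real.sqrt_sq_eq_abs b).symm
    _ ≤ Real.sqrt (a * c) := Real.sqrt_le_sqrt hb2
    _ = Real.sqrt a * Real.sqrt c := Real.sqrt_mul haω c

/-- Weak residual controls the dose-response error (pointwise a.s. form). -/
theorem weak_residual_controls_dose_response
    {Ω 𝓐 𝓧 𝓩 𝓦 : Type*}
    [MeasurableSpace Ω] [MeasurableSpace 𝓐] [MeasurableSpace 𝓧]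
    [MeasurableSpace 𝓩] [MeasurableSpace 𝓦]
    (P : Measure Ω) [IsProbabilityMeasure P]
    (A : Ω → 𝓐) (X : Ω → 𝓧) (Z : Ω → 𝓩) (W : Ω → 𝓦) (Y : Ω → ℝ)
    (hA : Measurable A) (hX : Measurable X) (hZ : Measurable Z)
    (hW : Measurable W) (hY : Measurable Y)
    (phi0 : 𝓐 × 𝓧 × 𝓩 → ℝ) (h : 𝓐 × 𝓧 × 𝓦 → ℝ)
    (hphi0 : Measurable phi0) (hh : Measurable h)
    (hY2 : MemLp Y 2 P)
    (hphi02 : MemLp (fun ω => phi0 (A ω, X ω, Z ω)) 2 P)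
    (hh2 : MemLp (fun ω => h (A ω, X ω, W ω)) 2 P)
    -- ν-reweighting condition, ν the law of (X, W)
    (hreweight : ∀ q : 𝓐 × 𝓧 × 𝓦 → ℝ, Measurable q →
      Integrable (fun ω => q (A ω, X ω, W ω)) P →
      Integrable (fun ω => phi0 (A ω, X ω, Z ω) * q (A ω, X ω, W ω)) P →
      P[(fun ω => phi0 (A ω, X ω, Z ω) * q (A ω, X ω, W ω)) |
        MeasurableSpace.comap A inferInstance]
        =ᵐ[P]
      fun ω => ∫ p, q (A ω, p) ∂(Measure.map (fun ω' => (X ω', W ω')) P)) :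
    ∀ᵐ ω ∂P,
      |(P[(fun ω' => Y ω' * phi0 (A ω', X ω', Z ω')) |
          MeasurableSpace.comap A inferInstance]) ω
        - ∫ p, h (A ω, p) ∂(Measure.map (fun ω' => (X ω', W ω')) P)|
      ≤
      Real.sqrt ((P[(fun ω' => (phi0 (A ω', X ω', Z ω')) ^ 2) |
          MeasurableSpace.comap A inferInstance]) ω)
      * Real.sqrt ((P[(fun ω' =>
            ((P[(fun ω'' => Y ω'' - h (A ω'', X ω'', W ω'')) |
              MeasurableSpace.comap (fun ω'' => (A ω'', X ω'', Z ω'')) inferInstance]) ω') ^ 2) |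
          MeasurableSpace.comap A inferInstance]) ω) := by
  have hm1 : MeasurableSpace.comap A inferInstance ≤ (inferInstance : MeasurableSpace Ω) :=
    hA.comap_le
  have hT : Measurable (fun ω'' => (A ω'', X ω'', Z ω'')) := hA.prodMk (hX.prodMk hZ)
  have hm2 : MeasurableSpace.comap (fun ω'' => (A ω'', X ω'', Z ω'')) inferInstance
      ≤ (inferInstance : MeasurableSpace Ω) := hT.comap_le
  have hm12 : MeasurableSpace.comap A inferInstance
      ≤ MeasurableSpace.comap (fun ω'' => (A ω'', X ω'', Z ω'')) inferInstance := by
    rw [show A = (fun p : 𝓐 × 𝓧 × 𝓩 => p.1) ∘ (fun ω'' => (A ω'', X ω'', Z ω'')) from rfl,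
      ← MeasurableSpace.comap_comp]
    exact MeasurableSpace.comap_mono measurable_fst.comap_le
  -- integrabilities
  have hYH2 : MemLp (fun ω => Y ω - h (A ω, X ω, W ω)) 2 P := hY2.sub hh2
  have iH : Integrable (fun ω => h (A ω, X ω, W ω)) P := hh2.integrable one_le_two
  have iYH : Integrable (fun ω => Y ω - h (A ω, X ω, W ω)) P := hYH2.integrable one_le_two
  have iφH : Integrable (fun ω => phi0 (A ω, X ω, Z ω) * h (A ω, X ω, W ω)) P :=
    integrable_mul_memL2 hphi02 hh2
  have iYφ : Integrable (fun ω => Y ω * phi0 (A ω, X ω, Z ω)) P :=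
    integrable_mul_memL2 hY2 hphi02
  have iφYH : Integrable (fun ω => phi0 (A ω, X ω, Z ω) * (Y ω - h (A ω, X ω, W ω))) P :=
    integrable_mul_memL2 hphi02 hYH2
  have hD2 : MemLp (P[(fun ω'' => Y ω'' - h (A ω'', X ω'', W ω'')) |
      MeasurableSpace.comap (fun ω'' => (A ω'', X ω'', Z ω'')) inferInstance]) 2 P :=
    memℒp_two_condexp hm2 hYH2
  -- step 1: reweighting
  have e1 : P[(fun ω => phi0 (A ω, X ω, Z ω) * h (A ω, X ω, W ω)) |
        MeasurableSpace.comap A inferInstance] =ᵐ[P]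
      fun ω => ∫ p, h (A ω, p) ∂(Measure.map (fun ω' => (X ω', W ω')) P) :=
    hreweight h hh iH iφH
  -- step 2: subtraction
  have e2 : P[(fun ω => phi0 (A ω, X ω, Z ω) * (Y ω - h (A ω, X ω, W ω))) |
        MeasurableSpace.comap A inferInstance] =ᵐ[P]
      P[(fun ω' => Y ω' * phi0 (A ω', X ω', Z ω')) | MeasurableSpace.comap A inferInstance]
        - P[(fun ω => phi0 (A ω, X ω, Z ω) * h (A ω, X ω, W ω)) |
            MeasurableSpace.comap A inferInstance] := by
    have hfg : (fun ω => phi0 (A ω, X ω, Z ω) * (Y ω - h (A ω, X ω, W ω)))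
        = (fun ω' => Y ω' * phi0 (A ω', X ω', Z ω'))
          - (fun ω => phi0 (A ω, X ω, Z ω) * h (A ω, X ω, W ω)) := by
      funext ω; simp only [Pi.sub_apply]; ring
    rw [hfg]
    exact condExp_sub iYφ iφH _
  -- step 3: tower + pulling out the m2-measurable factor
  have hφsm : StronglyMeasurable[MeasurableSpace.comap
      (fun ω'' => (A ω'', X ω'', Z ω'')) inferInstance] (fun ω => phi0 (A ω, X ω, Z ω)) := by
    have hTm : Measurable[MeasurableSpace.comap (fun ω'' => (A ω'', X ω'', Z ω'')) inferInstance]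
        (fun ω'' => (A ω'', X ω'', Z ω'')) := Measurable.of_comap_le le_rfl
    exact (hphi0.comp hTm).stronglyMeasurable
  have e3 : P[(fun ω => phi0 (A ω, X ω, Z ω) * (Y ω - h (A ω, X ω, W ω))) |
        MeasurableSpace.comap (fun ω'' => (A ω'', X ω'', Z ω'')) inferInstance] =ᵐ[P]
      fun ω => phi0 (A ω, X ω, Z ω) * (P[(fun ω'' => Y ω'' - h (A ω'', X ω'', W ω'')) |
        MeasurableSpace.comap (fun ω'' => (A ω'', X ω'', Z ω'')) inferInstance]) ω :=
    condExp_mul_of_stronglyMeasurable_left (μ := P) hφsm iφYH iYH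
  have e4 : P[(fun ω => phi0 (A ω, X ω, Z ω) * (Y ω - h (A ω, X ω, W ω))) |
        MeasurableSpace.comap A inferInstance] =ᵐ[P]
      P[(fun ω => phi0 (A ω, X ω, Z ω) * (P[(fun ω'' => Y ω'' - h (A ω'', X ω'', W ω'')) |
        MeasurableSpace.comap (fun ω'' => (A ω'', X ω'', Z ω'')) inferInstance]) ω) |
        MeasurableSpace.comap A inferInstance] :=
    (condExp_condExp_of_le hm12 hm2).symm.trans (condExp_congr_ae e3)
  -- step 4: conditional Cauchy–Schwarz
  have e5 := condexp_cauchySchwarz hm1 hphi02 hD2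
  filter_upwards [e1, e2, e4, e5] with ω h1 h2 h4 h5
  have hkey : (P[(fun ω' => Y ω' * phi0 (A ω', X ω', Z ω')) |
        MeasurableSpace.comap A inferInstance]) ω
      - ∫ p, h (A ω, p) ∂(Measure.map (fun ω' => (X ω', W ω')) P)
      = (P[(fun ω => phi0 (A ω, X ω, Z ω) * (P[(fun ω'' => Y ω'' - h (A ω'', X ω'', W ω'')) |
          MeasurableSpace.comap (fun ω'' => (A ω'', X ω'', Z ω'')) inferInstance]) ω) |
          MeasurableSpace.comap A inferInstance]) ω := by
    rw [← h1, ← h4, h2, Pi.sub_apply]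
  rw [hkey]
  exact h5
end

section
/- Projected treatment residual controls the population dose-response curve (Lemma, consistency appendix): Suppose h₀ : 𝒜×𝒳×𝒲 → ℝ satisfies the outcome bridge condition and φ₀ : 𝒜×𝒳×𝒵 → ℝ has projected target r₀ : 𝒜×𝒳×𝒲 → ℝ, and let φ : 𝒜×𝒳×𝒵 → ℝ be measurable; assume Y, h₀(A,X,W), φ₀(A,X,Z), φ(A,X,Z), and r₀(A,X,W) are square-integrable under P. Define F := E[Y·φ₀(A,X,Z) | σ(A)], G_φ := E[Y·φ(A,X,Z) | σ(A)], R := E[φ(A,X,Z) | σ(A,X,W)] − r₀(A,X,W), and C_h := (E[h₀(A,X,W)² | σ(A)])^{1/2}. Then, P-almost surely, |G_φ − F| ≤ C_h · (E[R² | σ(A)])^{1/2}. Consequently, if there is a constant C ≥ 0 with E[h₀(A,X,W)² | σ(A)] ≤ C² P-almost surely, then E[(G_φ − F)²] ≤ C² · E[R²]. -/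
open MeasureTheory

private lemma mul_int_aux {Ω : Type*} [MeasurableSpace Ω] {P : Measure Ω} {f g : Ω → ℝ}
    (hf : MemLp f 2 P) (hg : MemLp g 2 P) : Integrable (fun ω => f ω * g ω) P := by
  have h : MemLp (f • g) 1 P := MemLp.smul hg hf
  exact memLp_one_iff_integrable.mp h

private lemma memℒp_two_condexp_aux {Ω : Type*} {m : MeasurableSpace Ω} {m0 : MeasurableSpace Ω} (hm : m ≤ m0) {P : Measure Ω} [IsFiniteMeasure P]
    {f : Ω → ℝ} (hf : MemLp f 2 P) : MemLp (P[f|m]) 2 P := by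
  set Gl : lpMeas ℝ ℝ m 2 P := condExpL2 (α := Ω) (m0 := m0) (μ := P) ℝ ℝ hm (hf.toLp f) with hGl
  set G : Ω → ℝ := fun ω => (Gl : Lp ℝ 2 P) ω with hG
  have hmemG : MemLp G 2 P := Lp.memLp _
  have h : G =ᵐ[P] P[f|m] := by
    refine ae_eq_condExp_of_forall_setIntegral_eq hm (hf.integrable one_le_two)
      (fun s _ hμs => ?_) (fun s hs hμs => ?_) ?_
    · exact (hmemG.integrable one_le_two).integrableOn
    · rw [show ∫ x in s, G x ∂P = ∫ x in s, (Gl : Ω → ℝ) x ∂P from rfl,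
        integral_condExpL2_eq hm (hf.toLp f) hs hμs.ne]
      exact setIntegral_congr_ae (hm s hs) ((hf.coeFn_toLp).mono fun x hx _ => hx)
    · exact aestronglyMeasurable_condExpL2 hm (hf.toLp f)
  exact hmemG.ae_eq h

private lemma quad_abs_le_aux {a b c : ℝ} (ha : 0 ≤ a) (hc : 0 ≤ c)
    (h : ∀ q : ℚ, 0 ≤ a + 2 * q * b + (q : ℝ) ^ 2 * c) :
    |b| ≤ Real.sqrt a * Real.sqrt c := by
  have hall : ∀ x : ℝ, 0 ≤ c * (x * x) + (2 * b) * x + a := by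
    have hcont : Continuous fun x : ℝ => c * (x * x) + (2 * b) * x + a := by continuity
    have hclosed : IsClosed {x : ℝ | 0 ≤ c * (x * x) + (2 * b) * x + a} :=
      isClosed_le continuous_const hcont
    intro x
    have hx : x ∈ closure (Set.range ((↑) : ℚ → ℝ)) := Rat.denseRange_cast x
    have hsub : Set.range ((↑) : ℚ → ℝ) ⊆ {x : ℝ | 0 ≤ c * (x * x) + (2 * b) * x + a} := by
      rintro _ ⟨q, rfl⟩
      have hq := h q
      simp only [Set.mem_setOf_eq]
      nlinarith [hq]
    exact closure_minimal hsub hclosed hx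
  have hd := discrim_le_zero hall
  rw [discrim] at hd
  have hb2 : b ^ 2 ≤ a * c := by nlinarith
  calc |b| = Real.sqrt (b ^ 2) := (Real.sqrt_sq_eq_abs b).symm
    _ ≤ Real.sqrt (a * c) := Real.sqrt_le_sqrt hb2
    _ = Real.sqrt a * Real.sqrt c := Real.sqrt_mul ha c

private lemma condexp_cauchy_schwarz_aux {Ω : Type*} {m : MeasurableSpace Ω}
    {m0 : MeasurableSpace Ω} (hm : m ≤ m0) (P : Measure Ω) [IsProbabilityMeasure P]
    {f g : Ω → ℝ} (hf : MemLp f 2 P) (hg : MemLp g 2 P) :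
    ∀ᵐ ω ∂P, |(P[fun ω => f ω * g ω|m]) ω| ≤
      Real.sqrt ((P[fun ω => f ω ^ 2|m]) ω) * Real.sqrt ((P[fun ω => g ω ^ 2|m]) ω) := by
  have hf2 : Integrable (fun ω => f ω ^ 2) P := hf.integrable_sq
  have hg2 : Integrable (fun ω => g ω ^ 2) P := hg.integrable_sq
  have hfg : Integrable (fun ω => f ω * g ω) P := mul_int_aux hf hg
  have key : ∀ q : ℚ, ∀ᵐ ω ∂P,
      0 ≤ (P[fun ω => f ω ^ 2|m]) ω + 2 * q * ((P[fun ω => f ω * g ω|m]) ω)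
        + (q : ℝ) ^ 2 * ((P[fun ω => g ω ^ 2|m]) ω) := by
    intro q
    have hsum : (fun ω => (f ω + (q : ℝ) * g ω) ^ 2)
        = (fun ω => f ω ^ 2) + ((2 * (q : ℝ)) • fun ω => f ω * g ω)
          + (((q : ℝ) ^ 2) • fun ω => g ω ^ 2) := by
      funext ω
      simp only [Pi.add_apply, Pi.smul_apply, smul_eq_mul]
      ring
    have hnn : 0 ≤ᵐ[P] P[fun ω => (f ω + (q : ℝ) * g ω) ^ 2|m] :=
      condExp_nonneg (Filter.Eventually.of_forall fun ω => sq_nonneg _)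
    rw [hsum] at hnn
    have e1 := condExp_add (μ := P) (m := m) (hf2.add (hfg.smul (2 * (q : ℝ))))
      (hg2.smul ((q : ℝ) ^ 2))
    have e2 := condExp_add (μ := P) (m := m) hf2 (hfg.smul (2 * (q : ℝ)))
    have e3 := condExp_smul (μ := P) (m := m) (2 * (q : ℝ)) (fun ω => f ω * g ω)
    have e4 := condExp_smul (μ := P) (m := m) ((q : ℝ) ^ 2) (fun ω => g ω ^ 2)
    filter_upwards [hnn, e1, e2, e3, e4] with ω h0 h1 h2 h3 h4
    simp only [Pi.zero_apply] at h0
    rw [h1] at h0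
    simp only [Pi.add_apply] at h0 h2
    rw [h2] at h0
    simp only [Pi.smul_apply, smul_eq_mul] at h0 h3 h4
    rw [h3, h4] at h0
    linarith
  have nn1 : 0 ≤ᵐ[P] P[fun ω => f ω ^ 2|m] :=
    condExp_nonneg (Filter.Eventually.of_forall fun ω => sq_nonneg _)
  have nn2 : 0 ≤ᵐ[P] P[fun ω => g ω ^ 2|m] :=
    condExp_nonneg (Filter.Eventually.of_forall fun ω => sq_nonneg _)
  have hall := (ae_all_iff).mpr key
  filter_upwards [hall, nn1, nn2] with ω hq h1 h2
  exact quad_abs_le_aux h1 h2 hq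

private def comapMS {Ω β : Type*} [MeasurableSpace β] (f : Ω → β) : MeasurableSpace Ω :=
  MeasurableSpace.comap f inferInstance

/-- Projected treatment residual controls the population dose-response curve. -/
theorem projected_treatment_residual_controls_dose_response
    {Ω 𝓐 𝓧 𝓩 𝓦 : Type*}
    [MeasurableSpace Ω] [MeasurableSpace 𝓐] [MeasurableSpace 𝓧]
    [MeasurableSpace 𝓩] [MeasurableSpace 𝓦]
    (P : Measure Ω) [IsProbabilityMeasure P]
    (A : Ω → 𝓐) (X : Ω → 𝓧) (Z : Ω → 𝓩) (W : Ω → 𝓦) (Y : Ω → ℝ)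
    (hA : Measurable A) (hX : Measurable X) (hZ : Measurable Z)
    (hW : Measurable W) (hY : Measurable Y)
    (h0 : 𝓐 × 𝓧 × 𝓦 → ℝ) (phi0 phi : 𝓐 × 𝓧 × 𝓩 → ℝ) (r0 : 𝓐 × 𝓧 × 𝓦 → ℝ)
    (hh0 : Measurable h0) (hphi0 : Measurable phi0) (hphi : Measurable phi)
    (hr0 : Measurable r0)
    (hY2 : MemLp Y 2 P)
    (hh02 : MemLp (fun ω => h0 (A ω, X ω, W ω)) 2 P)
    (hphi02 : MemLp (fun ω => phi0 (A ω, X ω, Z ω)) 2 P)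
    (hphi2 : MemLp (fun ω => phi (A ω, X ω, Z ω)) 2 P)
    (hr02 : MemLp (fun ω => r0 (A ω, X ω, W ω)) 2 P)
    -- outcome bridge condition
    (hbridge :
      P[Y | MeasurableSpace.comap (fun ω => (A ω, X ω, Z ω)) inferInstance]
        =ᵐ[P]
      P[(fun ω => h0 (A ω, X ω, W ω)) |
        MeasurableSpace.comap (fun ω => (A ω, X ω, Z ω)) inferInstance])
    -- projected target condition
    (hproj :
      P[(fun ω => phi0 (A ω, X ω, Z ω)) |
        MeasurableSpace.comap (fun ω => (A ω, X ω, W ω)) inferInstance]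
        =ᵐ[P]
      fun ω => r0 (A ω, X ω, W ω)) :
    (∀ᵐ ω ∂P,
      |(P[(fun ω' => Y ω' * phi (A ω', X ω', Z ω')) |
          MeasurableSpace.comap A inferInstance]) ω
        - (P[(fun ω' => Y ω' * phi0 (A ω', X ω', Z ω')) |
            MeasurableSpace.comap A inferInstance]) ω|
      ≤
      Real.sqrt ((P[(fun ω' => (h0 (A ω', X ω', W ω')) ^ 2) |
          MeasurableSpace.comap A inferInstance]) ω)
      * Real.sqrt ((P[(fun ω' =>
            ((P[(fun ω'' => phi (A ω'', X ω'', Z ω'')) |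
                MeasurableSpace.comap (fun ω'' => (A ω'', X ω'', W ω'')) inferInstance]) ω'
              - r0 (A ω', X ω', W ω')) ^ 2) |
          MeasurableSpace.comap A inferInstance]) ω))
    ∧
    (∀ C : ℝ, 0 ≤ C →
      (∀ᵐ ω ∂P,
        (P[(fun ω' => (h0 (A ω', X ω', W ω')) ^ 2) |
          MeasurableSpace.comap A inferInstance]) ω ≤ C ^ 2) →
      (∫ ω,
        ((P[(fun ω' => Y ω' * phi (A ω', X ω', Z ω')) |
            MeasurableSpace.comap A inferInstance]) ω
          - (P[(fun ω' => Y ω' * phi0 (A ω', X ω', Z ω')) |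
              MeasurableSpace.comap A inferInstance]) ω) ^ 2 ∂P)
        ≤
      C ^ 2 *
        ∫ ω, ((P[(fun ω' => phi (A ω', X ω', Z ω')) |
            MeasurableSpace.comap (fun ω' => (A ω', X ω', W ω')) inferInstance]) ω
          - r0 (A ω, X ω, W ω)) ^ 2 ∂P) := by
  have hm1 : (comapMS (fun ω => (A ω, X ω, Z ω))) ≤ ‹MeasurableSpace Ω› :=
    measurable_iff_comap_le.mp (hA.prodMk (hX.prodMk hZ))
  have hm2 : (comapMS (fun ω => (A ω, X ω, W ω))) ≤ ‹MeasurableSpace Ω› :=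
    measurable_iff_comap_le.mp (hA.prodMk (hX.prodMk hW))
  have hmA : (comapMS A) ≤ ‹MeasurableSpace Ω› := measurable_iff_comap_le.mp hA
  have hc1 : Measurable[(comapMS (fun ω => (A ω, X ω, Z ω)))] (fun ω => (A ω, X ω, Z ω)) := measurable_iff_comap_le.mpr le_rfl
  have hc2 : Measurable[(comapMS (fun ω => (A ω, X ω, W ω)))] (fun ω => (A ω, X ω, W ω)) := measurable_iff_comap_le.mpr le_rfl
  have hA1 : (comapMS A) ≤ (comapMS (fun ω => (A ω, X ω, Z ω))) := measurable_iff_comap_le.mp (measurable_fst.comp hc1)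
  have hA2 : (comapMS A) ≤ (comapMS (fun ω => (A ω, X ω, W ω))) := measurable_iff_comap_le.mp (measurable_fst.comp hc2)
  have hbridge' : P[Y|(comapMS (fun ω => (A ω, X ω, Z ω)))] =ᵐ[P]
      P[(fun ω => h0 (A ω, X ω, W ω))|(comapMS (fun ω => (A ω, X ω, Z ω)))] := hbridge
  have hproj' : P[(fun ω => phi0 (A ω, X ω, Z ω))|(comapMS (fun ω => (A ω, X ω, W ω)))] =ᵐ[P]
      (fun ω => r0 (A ω, X ω, W ω)) := hproj
  set gh : Ω → ℝ := fun ω => h0 (A ω, X ω, W ω) with hghdef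
  set fr : Ω → ℝ := fun ω => r0 (A ω, X ω, W ω) with hfrdef
  set fphi : Ω → ℝ := fun ω => phi (A ω, X ω, Z ω) with hfphidef
  set fphi0 : Ω → ℝ := fun ω => phi0 (A ω, X ω, Z ω) with hfphi0def
  have hghmW : StronglyMeasurable[(comapMS (fun ω => (A ω, X ω, W ω)))] gh := (hh0.comp hc2).stronglyMeasurable
  have hfphimZ : StronglyMeasurable[(comapMS (fun ω => (A ω, X ω, Z ω)))] fphi := (hphi.comp hc1).stronglyMeasurable
  have hfphi0mZ : StronglyMeasurable[(comapMS (fun ω => (A ω, X ω, Z ω)))] fphi0 := (hphi0.comp hc1).stronglyMeasurable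
  have hcond2 : MemLp (P[fphi|(comapMS (fun ω => (A ω, X ω, W ω)))]) 2 P := memℒp_two_condexp_aux hm2 hphi2
  set R : Ω → ℝ := fun ω => (P[fphi|(comapMS (fun ω => (A ω, X ω, W ω)))]) ω - fr ω with hRdef
  have hR2 : MemLp R 2 P := hcond2.sub hr02
  have step : ∀ ψ : Ω → ℝ, StronglyMeasurable[(comapMS (fun ω => (A ω, X ω, Z ω)))] ψ → MemLp ψ 2 P →
      P[fun ω => Y ω * ψ ω|(comapMS A)] =ᵐ[P] P[fun ω => gh ω * (P[ψ|(comapMS (fun ω => (A ω, X ω, W ω)))]) ω|(comapMS A)] := by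
    intro ψ hψm hψ2
    have hψcond2 : MemLp (P[ψ|(comapMS (fun ω => (A ω, X ω, W ω)))]) 2 P := memℒp_two_condexp_aux hm2 hψ2
    have hψY : Integrable (ψ * Y) P := mul_int_aux hψ2 hY2
    have hψg : Integrable (ψ * gh) P := mul_int_aux hψ2 hh02
    have hghint : Integrable gh P := hh02.integrable one_le_two
    have hψint : Integrable ψ P := hψ2.integrable one_le_two
    have t1 : P[fun ω => Y ω * ψ ω|(comapMS (fun ω => (A ω, X ω, Z ω)))] =ᵐ[P] ψ * P[Y|(comapMS (fun ω => (A ω, X ω, Z ω)))] := by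
      have h : (fun ω => Y ω * ψ ω) = ψ * Y := funext fun ω => mul_comm _ _
      rw [h]
      exact condExp_mul_of_stronglyMeasurable_left hψm hψY (hY2.integrable one_le_two)
    have t2 : ψ * P[Y|(comapMS (fun ω => (A ω, X ω, Z ω)))] =ᵐ[P] ψ * P[gh|(comapMS (fun ω => (A ω, X ω, Z ω)))] :=
      hbridge'.mono fun ω h => by simp only [Pi.mul_apply]; rw [h]
    have t3 : P[ψ * gh|(comapMS (fun ω => (A ω, X ω, Z ω)))] =ᵐ[P] ψ * P[gh|(comapMS (fun ω => (A ω, X ω, Z ω)))] :=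
      condExp_mul_of_stronglyMeasurable_left hψm hψg hghint
    have tmZ : P[fun ω => Y ω * ψ ω|(comapMS (fun ω => (A ω, X ω, Z ω)))] =ᵐ[P] P[ψ * gh|(comapMS (fun ω => (A ω, X ω, Z ω)))] := t1.trans (t2.trans t3.symm)
    have s1 : P[ψ * gh|(comapMS (fun ω => (A ω, X ω, W ω)))] =ᵐ[P] gh * P[ψ|(comapMS (fun ω => (A ω, X ω, W ω)))] := by
      have h : ψ * gh = gh * ψ := funext fun ω => mul_comm _ _
      rw [h]
      exact condExp_mul_of_stronglyMeasurable_left hghmW (by rwa [← h]) hψint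
    calc P[fun ω => Y ω * ψ ω|(comapMS A)]
        =ᵐ[P] P[P[fun ω => Y ω * ψ ω|(comapMS (fun ω => (A ω, X ω, Z ω)))]|(comapMS A)] := (condExp_condExp_of_le hA1 hm1).symm
      _ =ᵐ[P] P[P[ψ * gh|(comapMS (fun ω => (A ω, X ω, Z ω)))]|(comapMS A)] := condExp_congr_ae tmZ
      _ =ᵐ[P] P[ψ * gh|(comapMS A)] := condExp_condExp_of_le hA1 hm1
      _ =ᵐ[P] P[P[ψ * gh|(comapMS (fun ω => (A ω, X ω, W ω)))]|(comapMS A)] := (condExp_condExp_of_le hA2 hm2).symm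
      _ =ᵐ[P] P[gh * P[ψ|(comapMS (fun ω => (A ω, X ω, W ω)))]|(comapMS A)] := condExp_congr_ae s1
      _ =ᵐ[P] P[fun ω => gh ω * (P[ψ|(comapMS (fun ω => (A ω, X ω, W ω)))]) ω|(comapMS A)] := by rfl
  have hG := step fphi hfphimZ hphi2
  have hF := step fphi0 hfphi0mZ hphi02
  have hF' : P[fun ω => gh ω * (P[fphi0|(comapMS (fun ω => (A ω, X ω, W ω)))]) ω|(comapMS A)] =ᵐ[P] P[fun ω => gh ω * fr ω|(comapMS A)] :=
    condExp_congr_ae (hproj'.mono fun ω h => by dsimp only; rw [h])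
  have hgR : Integrable (fun ω => gh ω * R ω) P := mul_int_aux hh02 hR2
  have hgc : Integrable (fun ω => gh ω * (P[fphi|(comapMS (fun ω => (A ω, X ω, W ω)))]) ω) P := mul_int_aux hh02 hcond2
  have hgr : Integrable (fun ω => gh ω * fr ω) P := mul_int_aux hh02 hr02
  have hsubeq : (fun ω => gh ω * (P[fphi|(comapMS (fun ω => (A ω, X ω, W ω)))]) ω) - (fun ω => gh ω * fr ω)
      = fun ω => gh ω * R ω := by
    funext ω; simp only [Pi.sub_apply, hRdef]; ring
  have hdiff : (fun ω => (P[fun ω' => Y ω' * fphi ω'|(comapMS A)]) ω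
      - (P[fun ω' => Y ω' * fphi0 ω'|(comapMS A)]) ω) =ᵐ[P] P[fun ω => gh ω * R ω|(comapMS A)] := by
    have hsub := condExp_sub (m := (comapMS A)) (μ := P) hgc hgr
    rw [hsubeq] at hsub
    filter_upwards [hG, hF.trans hF', hsub] with ω h1 h2 h3
    simp only [Pi.sub_apply] at h3 ⊢
    rw [h1, h2, ← h3]
  have hCS := condexp_cauchy_schwarz_aux hmA P hh02 hR2
  have part1 : ∀ᵐ ω ∂P,
      |(P[fun ω' => Y ω' * fphi ω'|(comapMS A)]) ω - (P[fun ω' => Y ω' * fphi0 ω'|(comapMS A)]) ω|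
      ≤ Real.sqrt ((P[fun ω' => gh ω' ^ 2|(comapMS A)]) ω)
        * Real.sqrt ((P[fun ω' => R ω' ^ 2|(comapMS A)]) ω) := by
    filter_upwards [hdiff, hCS] with ω h1 h2
    rw [h1]
    exact h2
  refine ⟨part1, ?_⟩
  intro C hC hbound
  have hR2int : Integrable (fun ω => R ω ^ 2) P := hR2.integrable_sq
  have hnnR2 : 0 ≤ᵐ[P] P[fun ω => R ω ^ 2|(comapMS A)] :=
    condExp_nonneg (Filter.Eventually.of_forall fun ω => sq_nonneg _)
  set G : Ω → ℝ := P[fun ω' => Y ω' * fphi ω'|(comapMS A)] with hGdef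
  set F : Ω → ℝ := P[fun ω' => Y ω' * fphi0 ω'|(comapMS A)] with hFdef
  have hpt : ∀ᵐ ω ∂P, (G ω - F ω) ^ 2 ≤ C ^ 2 * (P[fun ω' => R ω' ^ 2|(comapMS A)]) ω := by
    filter_upwards [part1, hbound, hnnR2] with ω h1 h2 h3
    have hs1 : Real.sqrt ((P[fun ω' => gh ω' ^ 2|(comapMS A)]) ω) ≤ C := by
      calc Real.sqrt ((P[fun ω' => gh ω' ^ 2|(comapMS A)]) ω) ≤ Real.sqrt (C ^ 2) :=
            Real.sqrt_le_sqrt h2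
        _ = C := Real.sqrt_sq hC
    have hle : |G ω - F ω| ≤ C * Real.sqrt ((P[fun ω' => R ω' ^ 2|(comapMS A)]) ω) :=
      le_trans h1 (mul_le_mul_of_nonneg_right hs1 (Real.sqrt_nonneg _))
    have hsq := mul_self_le_mul_self (abs_nonneg _) hle
    have hspec : Real.sqrt ((P[fun ω' => R ω' ^ 2|(comapMS A)]) ω)
        * Real.sqrt ((P[fun ω' => R ω' ^ 2|(comapMS A)]) ω) = (P[fun ω' => R ω' ^ 2|(comapMS A)]) ω :=
      Real.mul_self_sqrt h3
    nlinarith [abs_mul_abs_self (G ω - F ω)]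
  have hsmG : StronglyMeasurable (fun ω => (G ω - F ω) ^ 2) := by
    have h1 : StronglyMeasurable G := stronglyMeasurable_condExp.mono hmA
    have h2 : StronglyMeasurable F := stronglyMeasurable_condExp.mono hmA
    have h3 := (h1.sub h2).mul (h1.sub h2)
    simp only [pow_two]
    exact h3
  have hintC : Integrable (fun ω => C ^ 2 * (P[fun ω' => R ω' ^ 2|(comapMS A)]) ω) P :=
    integrable_condExp.const_mul _
  have hintG : Integrable (fun ω => (G ω - F ω) ^ 2) P := by
    refine Integrable.mono' hintC hsmG.aestronglyMeasurable ?_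
    filter_upwards [hpt] with ω h
    rw [Real.norm_eq_abs, abs_of_nonneg (sq_nonneg _)]
    exact h
  calc ∫ ω, (G ω - F ω) ^ 2 ∂P
      ≤ ∫ ω, C ^ 2 * (P[fun ω' => R ω' ^ 2|(comapMS A)]) ω ∂P := integral_mono_ae hintG hintC hpt
    _ = C ^ 2 * ∫ ω, (P[fun ω' => R ω' ^ 2|(comapMS A)]) ω ∂P := integral_const_mul _ _
    _ = C ^ 2 * ∫ ω, R ω ^ 2 ∂P := by rw [integral_condExp hmA]
end

section
/- Plug-in treatment-bridge population dose-response bound (Theorem, consistency appendix): Suppose h₀ : 𝒜×𝒳×𝒲 → ℝ satisfies the outcome bridge condition, φ₀ : 𝒜×𝒳×𝒵 → ℝ has projected target r₀ : 𝒜×𝒳×𝒲 → ℝ, φ : 𝒜×𝒳×𝒵 → ℝ is measurable, and there is C ≥ 0 with E[h₀(A,X,W)² | σ(A)] ≤ C² P-almost surely; assume Y, h₀(A,X,W), φ₀(A,X,Z), φ(A,X,Z), r₀(A,X,W) are square-integrable under P. Let r̂ : 𝒜×𝒳×𝒲 → ℝ be measurable with r̂(A,X,W) square-integrable, and set F :=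 E[Y·φ₀(A,X,Z) | σ(A)] and G_φ := E[Y·φ(A,X,Z) | σ(A)]. Then E[(G_φ − F)²] ≤ 2C² · ( E[(E[φ(A,X,Z) | σ(A,X,W)] − r̂(A,X,W))²] + E[(r̂(A,X,W) − r₀(A,X,W))²] ). -/
open MeasureTheory Filter

private lemma l2_mul_int {Ω : Type*} {mΩ : MeasurableSpace Ω} {P : Measure Ω}
    {f g : Ω → ℝ} (hf : MemLp f 2 P) (hg : MemLp g 2 P) :
    Integrable (fun ω => f ω * g ω) P := by
  have h : MemLp (f • g) 1 P := hg.smul hf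
    (hpqr := inferInstance)
  exact memLp_one_iff_integrable.mp h

private lemma condexp_mul_sq_le {Ω : Type*} (m : MeasurableSpace Ω) {m0 : MeasurableSpace Ω}
    {P : Measure Ω} [IsProbabilityMeasure P]
    {f g : Ω → ℝ} (hf : MemLp f 2 P) (hg : MemLp g 2 P) :
    ∀ᵐ ω ∂P, ((P[fun ω' => f ω' * g ω'|m]) ω) ^ 2
      ≤ (P[fun ω' => f ω' ^ 2|m]) ω * (P[fun ω' => g ω' ^ 2|m]) ω := by
  have hf2 : Integrable (fun ω => f ω ^ 2) P := hf.integrable_sq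
  have hg2 : Integrable (fun ω => g ω ^ 2) P := hg.integrable_sq
  have hfg : Integrable (fun ω => f ω * g ω) P := l2_mul_int hf hg
  have key : ∀ q : ℚ, ∀ᵐ ω ∂P,
      0 ≤ (q : ℝ)^2 * (P[fun ω' => f ω' ^ 2|m]) ω
        + (2 * q) * (P[fun ω' => f ω' * g ω'|m]) ω + (P[fun ω' => g ω' ^ 2|m]) ω := by
    intro q
    have h0 : (0 : Ω → ℝ) ≤ᵐ[P] P[fun ω' => ((q : ℝ) * f ω' + g ω') ^ 2|m] :=
      condExp_nonneg (Eventually.of_forall fun ω => sq_nonneg _)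
    have hrw : (fun ω' => ((q : ℝ) * f ω' + g ω') ^ 2)
        = (((q : ℝ)^2 • fun ω' => f ω' ^ 2) + ((2 * (q : ℝ)) • fun ω' => f ω' * g ω'))
          + fun ω' => g ω' ^ 2 := by
      funext ω'; simp [Pi.add_apply, Pi.smul_apply, smul_eq_mul]; ring
    rw [hrw] at h0
    have e1 := condExp_add (μ := P) (m := m)
      ((hf2.smul ((q : ℝ)^2)).add (hfg.smul (2 * (q : ℝ)))) hg2
    have e2 := condExp_add (μ := P) (m := m) (hf2.smul ((q : ℝ)^2)) (hfg.smul (2 * (q : ℝ)))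
    have e3 := condExp_smul (μ := P) (m := m) ((q : ℝ)^2) (fun ω' => f ω' ^ 2)
    have e4 := condExp_smul (μ := P) (m := m) (2 * (q : ℝ)) (fun ω' => f ω' * g ω')
    filter_upwards [h0, e1, e2, e3, e4] with ω h0 h1 h2 h3 h4
    simp only [Pi.add_apply, Pi.smul_apply, Pi.zero_apply, smul_eq_mul] at h0 h1 h2 h3 h4
    rw [h1, h2, h3, h4] at h0
    linarith
  filter_upwards [ae_all_iff.mpr key] with ω hω
  set a := (P[fun ω' => f ω' ^ 2|m]) ω
  set b := (P[fun ω' => f ω' * g ω'|m]) ω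
  set c := (P[fun ω' => g ω' ^ 2|m]) ω
  have hall : ∀ x : ℝ, 0 ≤ a * (x * x) + (2 * b) * x + c := by
    intro x
    have hS : IsClosed {t : ℝ | 0 ≤ a * (t * t) + (2 * b) * t + c} :=
      isClosed_le continuous_const (by continuity)
    have hsub : Set.range ((↑) : ℚ → ℝ) ⊆ {t : ℝ | 0 ≤ a * (t * t) + (2 * b) * t + c} := by
      rintro _ ⟨q, rfl⟩
      have h := hω q
      have heq : (q : ℝ)^2 * a + (2 * q) * b + c = a * ((q:ℝ) * q) + (2 * b) * q + c := by
        ring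
      simp only [Set.mem_setOf_eq]
      linarith [heq ▸ h]
    have hcl : closure (Set.range ((↑) : ℚ → ℝ))
        ⊆ {t : ℝ | 0 ≤ a * (t * t) + (2 * b) * t + c} :=
      closure_minimal hsub hS
    have huniv := Rat.denseRange_cast (𝕜 := ℝ)
    rw [DenseRange] at huniv
    have : x ∈ closure (Set.range ((↑) : ℚ → ℝ)) := by
      rw [huniv.closure_eq]; trivial
    exact hcl this
  have hd := discrim_le_zero hall
  rw [discrim] at hd
  nlinarith [hd]

private lemma memℒp_two_condexp_s5 {Ω : Type*} {m : MeasurableSpace Ω} {m0 : MeasurableSpace Ω}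
    {P : Measure Ω} [IsProbabilityMeasure P] (hm : m ≤ m0)
    {f : Ω → ℝ} (hf : MemLp f 2 P) : MemLp (P[f|m]) 2 P := by
  have h1 : MemLp (fun _ : Ω => (1 : ℝ)) 2 P := memLp_const 1
  have hcs := condexp_mul_sq_le (P := P) m hf h1
  have hone : (P[fun _ : Ω => (1 : ℝ) ^ 2|m]) = fun _ => (1 : ℝ) := by
    have h := condExp_const (μ := P) hm (1 : ℝ)
    simpa using h
  have hf1 : (fun ω => f ω * 1) = f := by funext ω; ring
  rw [hf1] at hcs
  have hsm : StronglyMeasurable (P[f|m]) := stronglyMeasurable_condExp.mono hm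
  have hbound : ∀ᵐ ω ∂P, ‖(P[f|m]) ω ^ 2‖ ≤ (P[fun ω' => f ω' ^ 2|m]) ω := by
    filter_upwards [hcs] with ω h1
    rw [Real.norm_eq_abs, abs_of_nonneg (sq_nonneg _)]
    calc (P[f|m]) ω ^ 2 ≤ (P[fun ω' => f ω' ^ 2|m]) ω * (P[fun _ : Ω => (1:ℝ) ^ 2|m]) ω := h1
      _ = (P[fun ω' => f ω' ^ 2|m]) ω := by rw [congrFun hone ω]; ring
  have hsq : StronglyMeasurable (fun ω => (P[f|m]) ω ^ 2) := by
    have h := hsm.mul hsm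
    simp only [pow_two]
    exact h
  have hint : Integrable (fun ω => (P[f|m]) ω ^ 2) P :=
    Integrable.mono' integrable_condExp hsq.aestronglyMeasurable hbound
  exact (memLp_two_iff_integrable_sq hsm.aestronglyMeasurable).mpr hint
private lemma key_bound {Ω : Type*} (mA m1 m2 : MeasurableSpace Ω) {m0 : MeasurableSpace Ω}
    {P : Measure Ω} [IsProbabilityMeasure P]
    (hmA : mA ≤ m0) (hm1 : m1 ≤ m0) (hm2 : m2 ≤ m0) (hA1 : mA ≤ m1) (hA2 : mA ≤ m2)
    (Yf H Φ Φ₀ R₀ Rh : Ω → ℝ)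
    (hY2 : MemLp Yf 2 P) (hH2 : MemLp H 2 P) (hΦ2 : MemLp Φ 2 P) (hΦ02 : MemLp Φ₀ 2 P)
    (hR02 : MemLp R₀ 2 P) (hR2 : MemLp Rh 2 P)
    (hdm1 : StronglyMeasurable[m1] (fun ω => Φ ω - Φ₀ ω))
    (hHm2 : StronglyMeasurable[m2] H)
    (hbridge : P[Yf|m1] =ᵐ[P] P[H|m1])
    (hproj : P[Φ₀|m2] =ᵐ[P] R₀)
    (C : ℝ)
    (hcond : ∀ᵐ ω ∂P, (P[fun ω' => H ω' ^ 2|mA]) ω ≤ C ^ 2) :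
    (∫ ω, ((P[fun ω' => Yf ω' * Φ ω'|mA]) ω - (P[fun ω' => Yf ω' * Φ₀ ω'|mA]) ω) ^ 2 ∂P)
      ≤ 2 * C ^ 2 *
        ((∫ ω, ((P[Φ|m2]) ω - Rh ω) ^ 2 ∂P) + ∫ ω, (Rh ω - R₀ ω) ^ 2 ∂P) := by
  -- integrability facts
  have hYint : Integrable Yf P := hY2.integrable (by norm_num)
  have hHint : Integrable H P := hH2.integrable (by norm_num)
  have hΦint : Integrable Φ P := hΦ2.integrable (by norm_num)
  have hΦ0int : Integrable Φ₀ P := hΦ02.integrable (by norm_num)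
  have hd2 : MemLp (fun ω => Φ ω - Φ₀ ω) 2 P := hΦ2.sub hΦ02
  have hdint : Integrable (fun ω => Φ ω - Φ₀ ω) P := hd2.integrable (by norm_num)
  have hYΦ : Integrable (fun ω => Yf ω * Φ ω) P := l2_mul_int hY2 hΦ2
  have hYΦ0 : Integrable (fun ω => Yf ω * Φ₀ ω) P := l2_mul_int hY2 hΦ02
  have hdY : Integrable (fun ω => (Φ ω - Φ₀ ω) * Yf ω) P := l2_mul_int hd2 hY2
  have hdH : Integrable (fun ω => (Φ ω - Φ₀ ω) * H ω) P := l2_mul_int hd2 hH2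
  have hHd : Integrable (fun ω => H ω * (Φ ω - Φ₀ ω)) P := l2_mul_int hH2 hd2
  have hD2 : MemLp (fun ω => (P[Φ|m2]) ω - R₀ ω) 2 P :=
    (memℒp_two_condexp_s5 hm2 hΦ2).sub hR02
  have hHD : Integrable (fun ω => H ω * ((P[Φ|m2]) ω - R₀ ω)) P := l2_mul_int hH2 hD2
  -- Step 1 : difference of conditional expectations
  have c1 : (fun ω => (P[fun ω' => Yf ω' * Φ ω'|mA]) ω - (P[fun ω' => Yf ω' * Φ₀ ω'|mA]) ω)
      =ᵐ[P] P[fun ω => (Φ ω - Φ₀ ω) * Yf ω|mA] := by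
    have hfun1 : (fun ω => (Φ ω - Φ₀ ω) * Yf ω)
        = (fun ω => Yf ω * Φ ω) - fun ω => Yf ω * Φ₀ ω := by
      funext ω; simp only [Pi.sub_apply]; ring
    rw [hfun1]
    exact (condExp_sub hYΦ hYΦ0 mA).symm
  -- Step 2 : replace Yf by H using the bridge condition, through m1
  have pullY : P[fun ω => (Φ ω - Φ₀ ω) * Yf ω|m1]
      =ᵐ[P] fun ω => (Φ ω - Φ₀ ω) * (P[Yf|m1]) ω :=
    condExp_mul_of_stronglyMeasurable_left hdm1 hdY hYint
  have pullH : P[fun ω => (Φ ω - Φ₀ ω) * H ω|m1]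
      =ᵐ[P] fun ω => (Φ ω - Φ₀ ω) * (P[H|m1]) ω :=
    condExp_mul_of_stronglyMeasurable_left hdm1 hdH hHint
  have ae1 : P[fun ω => (Φ ω - Φ₀ ω) * Yf ω|m1]
      =ᵐ[P] P[fun ω => (Φ ω - Φ₀ ω) * H ω|m1] := by
    refine pullY.trans (Filter.EventuallyEq.trans ?_ pullH.symm)
    filter_upwards [hbridge] with ω h
    rw [h]
  have c2 : P[fun ω => (Φ ω - Φ₀ ω) * Yf ω|mA]
      =ᵐ[P] P[fun ω => (Φ ω - Φ₀ ω) * H ω|mA] := by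
    refine ((condExp_condExp_of_le hA1 hm1).symm.trans ?_).trans
      (condExp_condExp_of_le hA1 hm1)
    exact condExp_congr_ae ae1
  -- Step 3 : project onto m2
  have hcd : P[fun ω => Φ ω - Φ₀ ω|m2] =ᵐ[P] fun ω => (P[Φ|m2]) ω - R₀ ω := by
    have h := condExp_sub (μ := P) (m := m2) hΦint hΦ0int
    filter_upwards [h, hproj] with ω h1 h2
    calc (P[fun ω => Φ ω - Φ₀ ω|m2]) ω
        = ((P[Φ|m2]) - (P[Φ₀|m2])) ω := h1
      _ = (P[Φ|m2]) ω - (P[Φ₀|m2]) ω := rfl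
      _ = (P[Φ|m2]) ω - R₀ ω := by rw [h2]
  have pull2 : P[fun ω => H ω * (Φ ω - Φ₀ ω)|m2]
      =ᵐ[P] fun ω => H ω * (P[fun ω' => Φ ω' - Φ₀ ω'|m2]) ω :=
    condExp_mul_of_stronglyMeasurable_left hHm2 hHd hdint
  have ae2 : P[fun ω => H ω * (Φ ω - Φ₀ ω)|m2]
      =ᵐ[P] fun ω => H ω * ((P[Φ|m2]) ω - R₀ ω) := by
    refine pull2.trans ?_
    filter_upwards [hcd] with ω h
    rw [h]
  have hfun2 : (fun ω => (Φ ω - Φ₀ ω) * H ω) = fun ω => H ω * (Φ ω - Φ₀ ω) := by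
    funext ω; ring
  have c3 : P[fun ω => (Φ ω - Φ₀ ω) * H ω|mA]
      =ᵐ[P] P[fun ω => H ω * ((P[Φ|m2]) ω - R₀ ω)|mA] := by
    rw [hfun2]
    refine (condExp_condExp_of_le hA2 hm2).symm.trans ?_
    exact condExp_congr_ae ae2
  have chain : (fun ω => (P[fun ω' => Yf ω' * Φ ω'|mA]) ω
        - (P[fun ω' => Yf ω' * Φ₀ ω'|mA]) ω)
      =ᵐ[P] P[fun ω => H ω * ((P[Φ|m2]) ω - R₀ ω)|mA] :=
    (c1.trans c2).trans c3
  -- Step 4 : conditional Cauchy–Schwarz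
  have hcs : ∀ᵐ ω ∂P, ((P[fun ω' => H ω' * ((P[Φ|m2]) ω' - R₀ ω')|mA]) ω) ^ 2
      ≤ (P[fun ω' => H ω' ^ 2|mA]) ω
        * (P[fun ω' => ((P[Φ|m2]) ω' - R₀ ω') ^ 2|mA]) ω :=
    condexp_mul_sq_le (P := P) mA hH2 hD2
  have hDsqnn : (0 : Ω → ℝ) ≤ᵐ[P] P[fun ω' => ((P[Φ|m2]) ω' - R₀ ω') ^ 2|mA] :=
    condExp_nonneg (Filter.Eventually.of_forall fun ω => sq_nonneg _)
  have hb : ∀ᵐ ω ∂P, ((P[fun ω' => H ω' * ((P[Φ|m2]) ω' - R₀ ω')|mA]) ω) ^ 2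
      ≤ C ^ 2 * (P[fun ω' => ((P[Φ|m2]) ω' - R₀ ω') ^ 2|mA]) ω := by
    filter_upwards [hcs, hcond, hDsqnn] with ω h1 h2 h3
    simp only [Pi.zero_apply] at h3
    exact h1.trans (mul_le_mul_of_nonneg_right h2 h3)
  -- integrability of both sides
  have hRHS1int : Integrable (fun ω => C ^ 2
      * (P[fun ω' => ((P[Φ|m2]) ω' - R₀ ω') ^ 2|mA]) ω) P :=
    integrable_condExp.const_mul _
  have hLHSint : Integrable
      (fun ω => ((P[fun ω' => H ω' * ((P[Φ|m2]) ω' - R₀ ω')|mA]) ω) ^ 2) P := by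
    refine Integrable.mono' hRHS1int ?_ ?_
    · have hsm : StronglyMeasurable (P[fun ω' => H ω' * ((P[Φ|m2]) ω' - R₀ ω')|mA]) :=
        stronglyMeasurable_condExp.mono hmA
      have h := hsm.mul hsm
      have h2 : StronglyMeasurable
          (fun ω => ((P[fun ω' => H ω' * ((P[Φ|m2]) ω' - R₀ ω')|mA]) ω) ^ 2) := by
        simp only [pow_two]; exact h
      exact h2.aestronglyMeasurable
    · filter_upwards [hb] with ω h
      rwa [Real.norm_eq_abs, abs_of_nonneg (sq_nonneg _)]
  -- putting the integrals together
  have hI1 : (∫ ω, ((P[fun ω' => Yf ω' * Φ ω'|mA]) ω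
        - (P[fun ω' => Yf ω' * Φ₀ ω'|mA]) ω) ^ 2 ∂P)
      = ∫ ω, ((P[fun ω' => H ω' * ((P[Φ|m2]) ω' - R₀ ω')|mA]) ω) ^ 2 ∂P := by
    refine integral_congr_ae ?_
    filter_upwards [chain] with ω h
    rw [h]
  have hI2 : (∫ ω, ((P[fun ω' => H ω' * ((P[Φ|m2]) ω' - R₀ ω')|mA]) ω) ^ 2 ∂P)
      ≤ ∫ ω, C ^ 2 * (P[fun ω' => ((P[Φ|m2]) ω' - R₀ ω') ^ 2|mA]) ω ∂P :=
    integral_mono_ae hLHSint hRHS1int hb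
  have hDsq_int : Integrable (fun ω => ((P[Φ|m2]) ω - R₀ ω) ^ 2) P := hD2.integrable_sq
  have hI3 : (∫ ω, C ^ 2 * (P[fun ω' => ((P[Φ|m2]) ω' - R₀ ω') ^ 2|mA]) ω ∂P)
      = C ^ 2 * ∫ ω, ((P[Φ|m2]) ω - R₀ ω) ^ 2 ∂P := by
    rw [integral_const_mul]
    congr 1
    exact integral_condExp hmA
  -- split the target
  have ha2 : MemLp (fun ω => (P[Φ|m2]) ω - Rh ω) 2 P :=
    (memℒp_two_condexp_s5 hm2 hΦ2).sub hR2
  have hb2 : MemLp (fun ω => Rh ω - R₀ ω) 2 P := hR2.sub hR02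
  have ha2i : Integrable (fun ω => ((P[Φ|m2]) ω - Rh ω) ^ 2) P := ha2.integrable_sq
  have hb2i : Integrable (fun ω => (Rh ω - R₀ ω) ^ 2) P := hb2.integrable_sq
  have hsplit : (∫ ω, ((P[Φ|m2]) ω - R₀ ω) ^ 2 ∂P)
      ≤ 2 * ((∫ ω, ((P[Φ|m2]) ω - Rh ω) ^ 2 ∂P) + ∫ ω, (Rh ω - R₀ ω) ^ 2 ∂P) := by
    have hmono : ∀ ω, ((P[Φ|m2]) ω - R₀ ω) ^ 2
        ≤ 2 * ((P[Φ|m2]) ω - Rh ω) ^ 2 + 2 * (Rh ω - R₀ ω) ^ 2 := by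
      intro ω
      nlinarith [sq_nonneg ((P[Φ|m2]) ω - 2 * Rh ω + R₀ ω)]
    calc (∫ ω, ((P[Φ|m2]) ω - R₀ ω) ^ 2 ∂P)
        ≤ ∫ ω, (2 * ((P[Φ|m2]) ω - Rh ω) ^ 2 + 2 * (Rh ω - R₀ ω) ^ 2) ∂P :=
        integral_mono hDsq_int ((ha2i.const_mul 2).add (hb2i.const_mul 2)) hmono
      _ = 2 * (∫ ω, ((P[Φ|m2]) ω - Rh ω) ^ 2 ∂P)
          + 2 * ∫ ω, (Rh ω - R₀ ω) ^ 2 ∂P := by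
        rw [integral_add (ha2i.const_mul 2) (hb2i.const_mul 2),
          integral_const_mul, integral_const_mul]
      _ = 2 * ((∫ ω, ((P[Φ|m2]) ω - Rh ω) ^ 2 ∂P) + ∫ ω, (Rh ω - R₀ ω) ^ 2 ∂P) := by ring
  calc (∫ ω, ((P[fun ω' => Yf ω' * Φ ω'|mA]) ω
        - (P[fun ω' => Yf ω' * Φ₀ ω'|mA]) ω) ^ 2 ∂P)
      ≤ C ^ 2 * ∫ ω, ((P[Φ|m2]) ω - R₀ ω) ^ 2 ∂P := by
        rw [hI1, ← hI3]; exact hI2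
    _ ≤ C ^ 2 * (2 * ((∫ ω, ((P[Φ|m2]) ω - Rh ω) ^ 2 ∂P)
        + ∫ ω, (Rh ω - R₀ ω) ^ 2 ∂P)) :=
      mul_le_mul_of_nonneg_left hsplit (sq_nonneg C)
    _ = 2 * C ^ 2 * ((∫ ω, ((P[Φ|m2]) ω - Rh ω) ^ 2 ∂P)
        + ∫ ω, (Rh ω - R₀ ω) ^ 2 ∂P) := by ring
/-- Plug-in treatment-bridge population dose-response bound. -/
theorem plugin_treatment_bridge_dose_response_bound
    {Ω 𝓐 𝓧 𝓩 𝓦 : Type*}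
    [MeasurableSpace Ω] [MeasurableSpace 𝓐] [MeasurableSpace 𝓧]
    [MeasurableSpace 𝓩] [MeasurableSpace 𝓦]
    (P : Measure Ω) [IsProbabilityMeasure P]
    (A : Ω → 𝓐) (X : Ω → 𝓧) (Z : Ω → 𝓩) (W : Ω → 𝓦) (Y : Ω → ℝ)
    (hA : Measurable A) (hX : Measurable X) (hZ : Measurable Z)
    (hW : Measurable W) (hY : Measurable Y)
    (h0 : 𝓐 × 𝓧 × 𝓦 → ℝ) (phi0 phi : 𝓐 × 𝓧 × 𝓩 → ℝ) (r0 rHat : 𝓐 × 𝓧 × 𝓦 → ℝ)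
    (hh0 : Measurable h0) (hphi0 : Measurable phi0) (hphi : Measurable phi)
    (hr0 : Measurable r0) (hrHat : Measurable rHat)
    (hY2 : MemLp Y 2 P)
    (hh02 : MemLp (fun ω => h0 (A ω, X ω, W ω)) 2 P)
    (hphi02 : MemLp (fun ω => phi0 (A ω, X ω, Z ω)) 2 P)
    (hphi2 : MemLp (fun ω => phi (A ω, X ω, Z ω)) 2 P)
    (hr02 : MemLp (fun ω => r0 (A ω, X ω, W ω)) 2 P)
    (hrHat2 : MemLp (fun ω => rHat (A ω, X ω, W ω)) 2 P)
    -- outcome bridge condition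
    (hbridge :
      P[Y | MeasurableSpace.comap (fun ω => (A ω, X ω, Z ω)) inferInstance]
        =ᵐ[P]
      P[(fun ω => h0 (A ω, X ω, W ω)) |
        MeasurableSpace.comap (fun ω => (A ω, X ω, Z ω)) inferInstance])
    -- projected target condition
    (hproj :
      P[(fun ω => phi0 (A ω, X ω, Z ω)) |
        MeasurableSpace.comap (fun ω => (A ω, X ω, W ω)) inferInstance]
        =ᵐ[P]
      fun ω => r0 (A ω, X ω, W ω))
    (C : ℝ) (hC : 0 ≤ C)
    (hcond : ∀ᵐ ω ∂P,
      (P[(fun ω' => (h0 (A ω', X ω', W ω')) ^ 2) |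
        MeasurableSpace.comap A inferInstance]) ω ≤ C ^ 2) :
    (∫ ω,
      ((P[(fun ω' => Y ω' * phi (A ω', X ω', Z ω')) |
          MeasurableSpace.comap A inferInstance]) ω
        - (P[(fun ω' => Y ω' * phi0 (A ω', X ω', Z ω')) |
            MeasurableSpace.comap A inferInstance]) ω) ^ 2 ∂P)
      ≤
    2 * C ^ 2 *
      ((∫ ω, ((P[(fun ω' => phi (A ω', X ω', Z ω')) |
          MeasurableSpace.comap (fun ω' => (A ω', X ω', W ω')) inferInstance]) ω
        - rHat (A ω, X ω, W ω)) ^ 2 ∂P)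
      + ∫ ω, (rHat (A ω, X ω, W ω) - r0 (A ω, X ω, W ω)) ^ 2 ∂P) := by
  have hmA := hA.comap_le
  have hm1 := (hA.prodMk (hX.prodMk hZ)).comap_le
  have hm2 := (hA.prodMk (hX.prodMk hW)).comap_le
  have hA1 : MeasurableSpace.comap A inferInstance
      ≤ MeasurableSpace.comap (fun ω => (A ω, X ω, Z ω)) inferInstance := by
    have h0 := MeasurableSpace.comap_comp (f := (Prod.fst : 𝓐 × 𝓧 × 𝓩 → 𝓐))
      (g := fun ω : Ω => (A ω, X ω, Z ω)) (m := (inferInstance : MeasurableSpace 𝓐))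
    have h : MeasurableSpace.comap A (inferInstance : MeasurableSpace 𝓐)
        = MeasurableSpace.comap (fun ω => (A ω, X ω, Z ω))
          (MeasurableSpace.comap Prod.fst inferInstance) := h0.symm
    rw [h]
    exact MeasurableSpace.comap_mono measurable_fst.comap_le
  have hA2 : MeasurableSpace.comap A inferInstance
      ≤ MeasurableSpace.comap (fun ω => (A ω, X ω, W ω)) inferInstance := by
    have h0 := MeasurableSpace.comap_comp (f := (Prod.fst : 𝓐 × 𝓧 × 𝓦 → 𝓐))
      (g := fun ω : Ω => (A ω, X ω, W ω)) (m := (inferInstance : MeasurableSpace 𝓐))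
    have h : MeasurableSpace.comap A (inferInstance : MeasurableSpace 𝓐)
        = MeasurableSpace.comap (fun ω => (A ω, X ω, W ω))
          (MeasurableSpace.comap Prod.fst inferInstance) := h0.symm
    rw [h]
    exact MeasurableSpace.comap_mono measurable_fst.comap_le
  have hT1 : Measurable[MeasurableSpace.comap (fun ω => (A ω, X ω, Z ω)) inferInstance]
      (fun ω => (A ω, X ω, Z ω)) := measurable_iff_comap_le.mpr le_rfl
  have hT2 : Measurable[MeasurableSpace.comap (fun ω => (A ω, X ω, W ω)) inferInstance]
      (fun ω => (A ω, X ω, W ω)) := measurable_iff_comap_le.mpr le_rfl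
  have hdm1 : StronglyMeasurable[MeasurableSpace.comap
        (fun ω => (A ω, X ω, Z ω)) inferInstance]
      (fun ω => phi (A ω, X ω, Z ω) - phi0 (A ω, X ω, Z ω)) :=
    ((hphi.comp hT1).sub (hphi0.comp hT1)).stronglyMeasurable
  have hHm2 : StronglyMeasurable[MeasurableSpace.comap
        (fun ω => (A ω, X ω, W ω)) inferInstance]
      (fun ω => h0 (A ω, X ω, W ω)) := (hh0.comp hT2).stronglyMeasurable
  exact key_bound (MeasurableSpace.comap A inferInstance)
    (MeasurableSpace.comap (fun ω => (A ω, X ω, Z ω)) inferInstance)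
    (MeasurableSpace.comap (fun ω => (A ω, X ω, W ω)) inferInstance)
    hmA hm1 hm2 hA1 hA2
    Y (fun ω => h0 (A ω, X ω, W ω)) (fun ω => phi (A ω, X ω, Z ω))
    (fun ω => phi0 (A ω, X ω, Z ω)) (fun ω => r0 (A ω, X ω, W ω))
    (fun ω => rHat (A ω, X ω, W ω))
    hY2 hh02 hphi2 hphi02 hr02 hrHat2 hdm1 hHm2 hbridge hproj C hcond
end

section
/- CATE reweighting identity (proved within the efficient-influence-function theorem for discrete treatments and groups): Let 𝒜 and 𝒱 be measurable spaces with measurable singletons, let A : Ω → 𝒜, V : Ω → 𝒱, S : Ω → 𝒮, W : Ω → 𝒲, Z : Ω → 𝒵 be measurable, and fix a ∈ 𝒜 and v ∈ 𝒱 with P({A=a} ∩ {V=v}) > 0 and P(V=v) > 0. Set π_{a|v} := P({A=a} ∩ {V=v}) / P(V=v), and let α be a version of E[1{A=a} | σ(S,V,W)] with α > 0 P-almost surely. Let φ : 𝒮×𝒵 → ℝ be measurable with φ(S,Z) integrable under the conditional measure P(· | {A=a} ∩ {V=v}), and suppose that under this conditional measure E[φ(S,Z) | σ(S,W)] = π_{a|v}/α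 almost surely. Then, for every bounded measurable g : 𝒮×𝒲 → ℝ, ∫_Ω 1{A=a}·1{V=v}·φ(S,Z)·g(S,W) dP = π_{a|v} · ∫_Ω 1{V=v}·g(S,W) dP. -/
open MeasureTheory ProbabilityTheory

/-!
Under `P(· | A = a, V = v)` the factor `g(S, W)` is `σ(S, W)`-measurable, so it can be pulled out
of the conditional expectation of `φ(S, Z)`: the left-hand side becomes `π_{a|v}` times the
integral of `g(S, W) / α` over `{A = a} ∩ {V = v}`. Writing that integral as
`∫ 1{V = v} g(S, W) / α · 1{A = a} dP` and conditioning on `σ(S, V, W)` replaces `1{A = a}` by its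
propensity `α`, which cancels. The integrability this needs comes from `π_{a|v} / α` being a
conditional expectation once `π_{a|v} ≠ 0`; when `π_{a|v} = 0` both sides vanish.
-/

namespace MeasureTheory

variable {Ω : Type*} {m mΩ : MeasurableSpace Ω} {μ : Measure Ω}

lemma integral_mul_condExp_of_aestronglyMeasurable_left (hm : m ≤ mΩ)
    [SigmaFinite (μ.trim hm)] {f g : Ω → ℝ} (hf : AEStronglyMeasurable[m] f μ)
    (hfg : Integrable (f * g) μ) (hg : Integrable g μ) :
    ∫ ω, f ω * g ω ∂μ = ∫ ω, f ω * μ[g | m] ω ∂μ := by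
  rw [← integral_condExp hm]
  exact integral_congr_ae (condExp_mul_of_aestronglyMeasurable_left hf hfg hg)

variable [IsFiniteMeasure μ] {B : Set Ω} {f : Ω → ℝ}

lemma setIntegral_div_condExp_indicator (hm : m ≤ mΩ) (hB : MeasurableSet B)
    (hf : AEStronglyMeasurable[m] f μ)
    (hne : ∀ᵐ ω ∂μ, μ[B.indicator (fun _ => (1 : ℝ)) | m] ω ≠ 0)
    (hint : IntegrableOn (fun ω => f ω / μ[B.indicator (fun _ => (1 : ℝ)) | m] ω) B μ) :
    ∫ ω in B, f ω / μ[B.indicator (fun _ => (1 : ℝ)) | m] ω ∂μ = ∫ ω, f ω ∂μ := by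
  set p := μ[B.indicator (fun _ => (1 : ℝ)) | m]
  have hfp : AEStronglyMeasurable[m] (fun ω => f ω / p ω) μ :=
    hf.div₀ stronglyMeasurable_condExp.aestronglyMeasurable
  have hind : (fun ω => f ω / p ω) * B.indicator (fun _ => (1 : ℝ)) = B.indicator (f / p) := by
    ext ω; by_cases hω : ω ∈ B <;> simp [hω]
  calc ∫ ω in B, f ω / p ω ∂μ = ∫ ω, f ω / p ω * B.indicator (fun _ => (1 : ℝ)) ω ∂μ := by
        rw [← integral_indicator hB]; exact congrArg (fun F => ∫ ω, F ω ∂μ) hind.symm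
    _ = ∫ ω, f ω / p ω * p ω ∂μ := by
        refine integral_mul_condExp_of_aestronglyMeasurable_left hm hfp ?_ ?_
        · rw [hind]; exact (integrable_indicator_iff hB).2 hint
        · exact (integrable_const 1).indicator hB
    _ = ∫ ω, f ω ∂μ := integral_congr_ae (hne.mono fun ω hω => div_mul_cancel₀ _ hω)

lemma setIntegral_inter_div_of_ae_eq_condExp_indicator (hm : m ≤ mΩ) (hB : MeasurableSet B)
    {C : Set Ω} (hC : MeasurableSet[m] C) (hf : StronglyMeasurable[m] f) {p : Ω → ℝ}
    (hp : p =ᵐ[μ] μ[B.indicator (fun _ => (1 : ℝ)) | m]) (hp_ne : ∀ᵐ ω ∂μ, p ω ≠ 0)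
    (hint : IntegrableOn (fun ω => f ω / p ω) (B ∩ C) μ) :
    ∫ ω in B ∩ C, f ω / p ω ∂μ = ∫ ω in C, f ω ∂μ := by
  set p' := μ[B.indicator (fun _ => (1 : ℝ)) | m]
  have hpp' : ∀ᵐ ω ∂μ.restrict (B ∩ C), f ω / p ω = f ω / p' ω :=
    ae_restrict_of_ae (hp.mono fun ω hω => by rw [hω])
  have hind : C.indicator (fun ω => f ω / p' ω) = fun ω => C.indicator f ω / p' ω := by
    ext ω; by_cases hω : ω ∈ C <;> simp [hω]
  have hint' : IntegrableOn (fun ω => C.indicator f ω / p' ω) B μ := by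
    rw [← hind, integrableOn_indicator_iff (hm C hC), Set.inter_comm]
    exact hint.congr hpp'
  have hp'_ne : ∀ᵐ ω ∂μ, p' ω ≠ 0 := by
    filter_upwards [hp, hp_ne] with ω hω hω_ne
    exact hω ▸ hω_ne
  calc ∫ ω in B ∩ C, f ω / p ω ∂μ = ∫ ω in B, C.indicator (fun ω => f ω / p' ω) ω ∂μ := by
        rw [setIntegral_indicator (hm C hC)]; exact integral_congr_ae hpp'
    _ = ∫ ω, C.indicator f ω ∂μ := by
        rw [hind]
        exact setIntegral_div_condExp_indicator hm hB (hf.indicator hC).aestronglyMeasurable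
          hp'_ne hint'
    _ = ∫ ω in C, f ω ∂μ := integral_indicator (hm C hC)

end MeasureTheory

namespace ProbabilityTheory

variable {Ω : Type*} {m mΩ : MeasurableSpace Ω} {μ : Measure Ω} [IsFiniteMeasure μ] {s : Set Ω}

variable (μ s) in
lemma measure_smul_cond : μ s • μ[|s] = μ.restrict s := by
  rcases eq_or_ne (μ s) 0 with hs | hs
  · simp [hs, Measure.restrict_eq_zero.2 hs]
  · rw [cond, smul_smul, ENNReal.mul_inv_cancel hs (measure_ne_top μ s), one_smul]

lemma setIntegral_eq_toReal_mul_integral_cond (f : Ω → ℝ) :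
    ∫ ω in s, f ω ∂μ = (μ s).toReal * ∫ ω, f ω ∂μ[|s] := by
  rw [← measure_smul_cond, integral_smul_measure, smul_eq_mul]

lemma integrableOn_of_integrable_cond {f : Ω → ℝ} (hf : Integrable f μ[|s]) :
    IntegrableOn f s μ := by
  rw [IntegrableOn, ← measure_smul_cond]
  exact hf.smul_measure (measure_ne_top μ s)

lemma setIntegral_mul_eq_of_condExp_cond_ae_eq (hm : m ≤ mΩ) {f g ψ : Ω → ℝ}
    (hf : AEStronglyMeasurable[m] f μ[|s]) (hfg : Integrable (f * g) μ[|s])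
    (hg : Integrable g μ[|s]) (hψ : μ[|s][g | m] =ᵐ[μ[|s]] ψ) :
    ∫ ω in s, f ω * g ω ∂μ = ∫ ω in s, f ω * ψ ω ∂μ := by
  rw [setIntegral_eq_toReal_mul_integral_cond, setIntegral_eq_toReal_mul_integral_cond,
    integral_mul_condExp_of_aestronglyMeasurable_left hm hf hfg hg]
  exact congrArg _ (integral_congr_ae (hψ.mono fun ω hω => congrArg (f ω * ·) hω))

end ProbabilityTheory

theorem cate_reweighting_identity_general
    {Ω 𝓐 𝓥 𝓢 𝓦 𝓩 : Type*}
    [MeasurableSpace Ω]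
    [MeasurableSpace 𝓐] [MeasurableSingletonClass 𝓐]
    [MeasurableSpace 𝓥] [MeasurableSingletonClass 𝓥]
    [MeasurableSpace 𝓢] [MeasurableSpace 𝓦] [MeasurableSpace 𝓩]
    (P : Measure Ω) [IsProbabilityMeasure P]
    (A : Ω → 𝓐) (V : Ω → 𝓥) (S : Ω → 𝓢) (W : Ω → 𝓦) (Z : Ω → 𝓩)
    (hA : Measurable A) (hV : Measurable V) (hS : Measurable S)
    (hW : Measurable W)
    (a : 𝓐) (v : 𝓥)
    (α : Ω → ℝ)
    -- α is a version of E[1{A = a} | σ(S, V, W)]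
    (hα : α =ᵐ[P]
      P[((A ⁻¹' {a}).indicator (fun _ => (1 : ℝ))) |
        MeasurableSpace.comap (fun ω => (S ω, V ω, W ω)) inferInstance])
    (hαpos : ∀ᵐ ω ∂P, 0 < α ω)
    (φ : 𝓢 × 𝓩 → ℝ)
    (hφint : Integrable (fun ω => φ (S ω, Z ω))
      (ProbabilityTheory.cond P (A ⁻¹' {a} ∩ V ⁻¹' {v})))
    -- E[φ(S,Z) | σ(S,W)] = π_{a|v} / α  a.s. under P(· | {A=a} ∩ {V=v})
    (hcond :
      (ProbabilityTheory.cond P (A ⁻¹' {a} ∩ V ⁻¹' {v}))[(fun ω => φ (S ω, Z ω)) |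
        MeasurableSpace.comap (fun ω => (S ω, W ω)) inferInstance]
        =ᵐ[ProbabilityTheory.cond P (A ⁻¹' {a} ∩ V ⁻¹' {v})]
      fun ω => (P (A ⁻¹' {a} ∩ V ⁻¹' {v})).toReal / (P (V ⁻¹' {v})).toReal / α ω) :
    ∀ g : 𝓢 × 𝓦 → ℝ, Measurable g → (∃ C : ℝ, ∀ p, |g p| ≤ C) →
      (∫ ω in A ⁻¹' {a} ∩ V ⁻¹' {v}, φ (S ω, Z ω) * g (S ω, W ω) ∂P)
        = ((P (A ⁻¹' {a} ∩ V ⁻¹' {v})).toReal / (P (V ⁻¹' {v})).toReal) *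
            ∫ ω in V ⁻¹' {v}, g (S ω, W ω) ∂P := by
  rintro g hg ⟨C, hC⟩
  set E := A ⁻¹' {a} ∩ V ⁻¹' {v}
  set π := (P E).toReal / (P (V ⁻¹' {v})).toReal
  have hg_bdd : ∀ᵐ ω ∂P[|E], ‖g (S ω, W ω)‖ ≤ C := ae_of_all _ fun ω => hC (S ω, W ω)
  have hgSW : AEStronglyMeasurable (fun ω => g (S ω, W ω)) P[|E] :=
    (hg.comp (hS.prodMk hW)).aestronglyMeasurable
  have hpull : ∫ ω in E, φ (S ω, Z ω) * g (S ω, W ω) ∂P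
      = π * ∫ ω in E, g (S ω, W ω) / α ω ∂P :=
    calc ∫ ω in E, φ (S ω, Z ω) * g (S ω, W ω) ∂P
        = ∫ ω in E, g (S ω, W ω) * φ (S ω, Z ω) ∂P := by simp only [mul_comm]
      _ = ∫ ω in E, g (S ω, W ω) * (π / α ω) ∂P :=
        setIntegral_mul_eq_of_condExp_cond_ae_eq (hS.prodMk hW).comap_le
          (hg.comp (comap_measurable _)).aestronglyMeasurable (hφint.bdd_mul hgSW hg_bdd)
          hφint hcond
      _ = π * ∫ ω in E, g (S ω, W ω) / α ω ∂P := by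
        rw [← integral_const_mul]; simp only [mul_div_left_comm]
  rcases eq_or_ne π 0 with hπ | hπ
  · rw [hpull, hπ, zero_mul, zero_mul]
  have hint : IntegrableOn (fun ω => g (S ω, W ω) / α ω) E P := by
    refine (integrableOn_of_integrable_cond
      (((integrable_condExp.congr hcond).bdd_mul hgSW hg_bdd).const_mul π⁻¹)).congr
        (ae_of_all _ fun ω => ?_)
    field_simp
  have hSVW : Measurable[MeasurableSpace.comap (fun ω => (S ω, V ω, W ω)) inferInstance]
      fun ω => (S ω, V ω, W ω) := comap_measurable _
  have hVv := (measurable_fst.comp measurable_snd).comp hSVW (measurableSet_singleton v)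
  have hgSVW := ((hg.comp (measurable_fst.prodMk (measurable_snd.comp measurable_snd))).comp
    hSVW).stronglyMeasurable
  rw [hpull]
  exact congrArg (π * ·) (setIntegral_inter_div_of_ae_eq_condExp_indicator
    (hS.prodMk (hV.prodMk hW)).comap_le (hA (measurableSet_singleton a)) hVv hgSVW hα
    (hαpos.mono fun _ h => h.ne') hint)

/-- CATE reweighting identity. -/
theorem cate_reweighting_identity
    {Ω 𝓐 𝓥 𝓢 𝓦 𝓩 : Type*}
    [MeasurableSpace Ω]
    [MeasurableSpace 𝓐] [MeasurableSingletonClass 𝓐]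
    [MeasurableSpace 𝓥] [MeasurableSingletonClass 𝓥]
    [MeasurableSpace 𝓢] [MeasurableSpace 𝓦] [MeasurableSpace 𝓩]
    (P : Measure Ω) [IsProbabilityMeasure P]
    (A : Ω → 𝓐) (V : Ω → 𝓥) (S : Ω → 𝓢) (W : Ω → 𝓦) (Z : Ω → 𝓩)
    (hA : Measurable A) (hV : Measurable V) (hS : Measurable S)
    (hW : Measurable W) (hZ : Measurable Z)
    (a : 𝓐) (v : 𝓥)
    (hav : 0 < P (A ⁻¹' {a} ∩ V ⁻¹' {v})) (hv : 0 < P (V ⁻¹' {v}))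
    (α : Ω → ℝ)
    -- α is a version of E[1{A = a} | σ(S, V, W)]
    (hα : α =ᵐ[P]
      P[((A ⁻¹' {a}).indicator (fun _ => (1 : ℝ))) |
        MeasurableSpace.comap (fun ω => (S ω, V ω, W ω)) inferInstance])
    (hαpos : ∀ᵐ ω ∂P, 0 < α ω)
    (φ : 𝓢 × 𝓩 → ℝ) (hφ : Measurable φ)
    (hφint : Integrable (fun ω => φ (S ω, Z ω))
      (ProbabilityTheory.cond P (A ⁻¹' {a} ∩ V ⁻¹' {v})))
    -- E[φ(S,Z) | σ(S,W)] = π_{a|v} / α  a.s. under P(· | {A=a} ∩ {V=v})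
    (hcond :
      (ProbabilityTheory.cond P (A ⁻¹' {a} ∩ V ⁻¹' {v}))[(fun ω => φ (S ω, Z ω)) |
        MeasurableSpace.comap (fun ω => (S ω, W ω)) inferInstance]
        =ᵐ[ProbabilityTheory.cond P (A ⁻¹' {a} ∩ V ⁻¹' {v})]
      fun ω => (P (A ⁻¹' {a} ∩ V ⁻¹' {v})).toReal / (P (V ⁻¹' {v})).toReal / α ω) :
    ∀ g : 𝓢 × 𝓦 → ℝ, Measurable g → (∃ C : ℝ, ∀ p, |g p| ≤ C) →
      (∫ ω in A ⁻¹' {a} ∩ V ⁻¹' {v}, φ (S ω, Z ω) * g (S ω, W ω) ∂P)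
        = ((P (A ⁻¹' {a} ∩ V ⁻¹' {v})).toReal / (P (V ⁻¹' {v})).toReal) *
            ∫ ω in V ⁻¹' {v}, g (S ω, W ω) ∂P :=
  cate_reweighting_identity_general P A V S W Z hA hV hS hW a v α hα hαpos φ hφint hcond
end

section
/- Doubly robust identification of the heterogeneous (CATE) response for discrete treatment and group values (Theorem 3.3, CATE case, discrete form): Let 𝒜 and 𝒱 be measurable spaces with measurable singletons, let A : Ω → 𝒜, V : Ω → 𝒱, S : Ω → 𝒮, W : Ω → 𝒲, Z : Ω → 𝒵, Y : Ω → ℝ be measurable, and fix a ∈ 𝒜, v ∈ 𝒱 with P({A=a} ∩ {V=v}) > 0 and P(V=v) > 0. Set π_{a|v} := P({A=a} ∩ {V=v}) / P(V=v), and let α be a version of E[1{A=a} | σ(S,V,W)] with α > 0 P-almost surely. Let h : 𝒮×𝒲 → ℝ and φ : 𝒮×𝒵 → ℝ be bounded measurable, with Y integrable under P(· | {A=a} ∩ {V=v}), and define f^{DR}(h,φ) := E_{P(·|{A=a}∩{V=v})}[φ(S,Z)·(Y − h(S,W))] + E_{P(·|{V=v})}[h(S,W)]. Then: (i) if E_{P(·|{A=a}∩{V=v})}[Y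 − h(S,W) | σ(S,Z)] = 0 almost surely under that conditional measure, then f^{DR}(h,φ) = E_{P(·|{V=v})}[h(S,W)]; (ii) if E_{P(·|{A=a}∩{V=v})}[φ(S,Z) | σ(S,W)] = π_{a|v}/α almost surely under that conditional measure, then f^{DR}(h,φ) = E_{P(·|{A=a}∩{V=v})}[Y·φ(S,Z)]. -/
open MeasureTheory ProbabilityTheory

/-- Doubly robust identification of the heterogeneous (CATE) response,
discrete treatment and group values. -/
theorem cate_doubly_robust_identification_discrete
    {Ω 𝓐 𝓥 𝓢 𝓦 𝓩 : Type*}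
    [MeasurableSpace Ω]
    [MeasurableSpace 𝓐] [MeasurableSingletonClass 𝓐]
    [MeasurableSpace 𝓥] [MeasurableSingletonClass 𝓥]
    [MeasurableSpace 𝓢] [MeasurableSpace 𝓦] [MeasurableSpace 𝓩]
    (P : Measure Ω) [IsProbabilityMeasure P]
    (A : Ω → 𝓐) (V : Ω → 𝓥) (S : Ω → 𝓢) (W : Ω → 𝓦) (Z : Ω → 𝓩) (Y : Ω → ℝ)
    (hA : Measurable A) (hV : Measurable V) (hS : Measurable S)
    (hW : Measurable W) (hZ : Measurable Z) (hY : Measurable Y)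
    (a : 𝓐) (v : 𝓥)
    (hav : 0 < P (A ⁻¹' {a} ∩ V ⁻¹' {v})) (hv : 0 < P (V ⁻¹' {v}))
    (α : Ω → ℝ)
    -- α is a version of E[1{A = a} | σ(S, V, W)]
    (hα : α =ᵐ[P]
      P[((A ⁻¹' {a}).indicator (fun _ => (1 : ℝ))) |
        MeasurableSpace.comap (fun ω => (S ω, V ω, W ω)) inferInstance])
    (hαpos : ∀ᵐ ω ∂P, 0 < α ω)
    (h : 𝓢 × 𝓦 → ℝ) (φ : 𝓢 × 𝓩 → ℝ)
    (hh : Measurable h) (hφ : Measurable φ)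
    (hhbd : ∃ C : ℝ, ∀ p, |h p| ≤ C) (hφbd : ∃ C : ℝ, ∀ p, |φ p| ≤ C)
    (hYint : Integrable Y (ProbabilityTheory.cond P (A ⁻¹' {a} ∩ V ⁻¹' {v}))) :
    -- (i) if h is a valid outcome bridge under P(· | {A=a} ∩ {V=v})
    (((ProbabilityTheory.cond P (A ⁻¹' {a} ∩ V ⁻¹' {v}))[(fun ω => Y ω - h (S ω, W ω)) |
        MeasurableSpace.comap (fun ω => (S ω, Z ω)) inferInstance]
        =ᵐ[ProbabilityTheory.cond P (A ⁻¹' {a} ∩ V ⁻¹' {v})]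
      (fun _ => (0 : ℝ))) →
      ((∫ ω, φ (S ω, Z ω) * (Y ω - h (S ω, W ω))
          ∂(ProbabilityTheory.cond P (A ⁻¹' {a} ∩ V ⁻¹' {v})))
        + (∫ ω, h (S ω, W ω) ∂(ProbabilityTheory.cond P (V ⁻¹' {v}))))
        = ∫ ω, h (S ω, W ω) ∂(ProbabilityTheory.cond P (V ⁻¹' {v})))
    ∧
    -- (ii) if φ is a valid treatment bridge under P(· | {A=a} ∩ {V=v})
    (((ProbabilityTheory.cond P (A ⁻¹' {a} ∩ V ⁻¹' {v}))[(fun ω => φ (S ω, Z ω)) |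
        MeasurableSpace.comap (fun ω => (S ω, W ω)) inferInstance]
        =ᵐ[ProbabilityTheory.cond P (A ⁻¹' {a} ∩ V ⁻¹' {v})]
      (fun ω => (P (A ⁻¹' {a} ∩ V ⁻¹' {v})).toReal / (P (V ⁻¹' {v})).toReal / α ω)) →
      ((∫ ω, φ (S ω, Z ω) * (Y ω - h (S ω, W ω))
          ∂(ProbabilityTheory.cond P (A ⁻¹' {a} ∩ V ⁻¹' {v})))
        + (∫ ω, h (S ω, W ω) ∂(ProbabilityTheory.cond P (V ⁻¹' {v}))))
        = ∫ ω, Y ω * φ (S ω, Z ω)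
            ∂(ProbabilityTheory.cond P (A ⁻¹' {a} ∩ V ⁻¹' {v}))) := by
  obtain ⟨Ch₀, hCh₀⟩ := hhbd
  obtain ⟨Cφ₀, hCφ₀⟩ := hφbd
  set Ch : ℝ := |Ch₀| + 1 with hCh_def
  set Cφ : ℝ := |Cφ₀| + 1 with hCφ_def
  have hCh_pos : 0 < Ch := by positivity
  have hCφ_pos : 0 < Cφ := by positivity
  have hCh : ∀ p, |h p| ≤ Ch := fun p => (hCh₀ p).trans ((le_abs_self _).trans (by linarith))
  have hCφ : ∀ p, |φ p| ≤ Cφ := fun p => (hCφ₀ p).trans ((le_abs_self _).trans (by linarith))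
  set E : Set Ω := A ⁻¹' {a} ∩ V ⁻¹' {v} with hE_def
  set Vs : Set Ω := V ⁻¹' {v} with hVs_def
  have hAs : MeasurableSet (A ⁻¹' {a}) := hA (measurableSet_singleton a)
  have hVsm : MeasurableSet Vs := hV (measurableSet_singleton v)
  have hEm : MeasurableSet E := hAs.inter hVsm
  set Q : Measure Ω := P[|E] with hQ_def
  set R : Measure Ω := P[|Vs] with hR_def
  haveI : IsProbabilityMeasure Q := cond_isProbabilityMeasure hav.ne'
  haveI : IsProbabilityMeasure R := cond_isProbabilityMeasure hv.ne'
  have hQP : Q ≪ P := cond_absolutelyContinuous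
  -- integrabilities under any finite measure
  have hhMeas : Measurable fun ω => h (S ω, W ω) := hh.comp (hS.prodMk hW)
  have hφMeas : Measurable fun ω => φ (S ω, Z ω) := hφ.comp (hS.prodMk hZ)
  have hhQ : Integrable (fun ω => h (S ω, W ω)) Q :=
    (integrable_const Ch).mono' hhMeas.aestronglyMeasurable
      (Filter.Eventually.of_forall fun ω => by
        simpa [Real.norm_eq_abs] using hCh (S ω, W ω))
  have hsubQ : Integrable (fun ω => Y ω - h (S ω, W ω)) Q := hYint.sub hhQ
  have hφsubQ : Integrable (fun ω => φ (S ω, Z ω) * (Y ω - h (S ω, W ω))) Q :=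
    hsubQ.bdd_mul hφMeas.aestronglyMeasurable
      (Filter.Eventually.of_forall fun ω => by simpa [Real.norm_eq_abs] using hCφ (S ω, Z ω))
  constructor
  · -- Part (i)
    intro hyp
    have hmSZ : MeasurableSpace.comap (fun ω => (S ω, Z ω)) inferInstance ≤ _ :=
      (hS.prodMk hZ).comap_le
    have hφsm : StronglyMeasurable[MeasurableSpace.comap (fun ω => (S ω, Z ω)) inferInstance]
        (fun ω => φ (S ω, Z ω)) :=
      (hφ.comp (Measurable.of_comap_le le_rfl)).stronglyMeasurable
    have key : (∫ ω, φ (S ω, Z ω) * (Y ω - h (S ω, W ω)) ∂Q) = 0 := by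
      have h1 : (∫ ω, φ (S ω, Z ω) * (Y ω - h (S ω, W ω)) ∂Q)
          = ∫ ω, (Q[(fun ω => φ (S ω, Z ω)) * (fun ω => Y ω - h (S ω, W ω)) |
              MeasurableSpace.comap (fun ω => (S ω, Z ω)) inferInstance]) ω ∂Q :=
        (integral_condExp hmSZ).symm
      rw [h1]
      have h2 := condExp_mul_of_stronglyMeasurable_left hφsm hφsubQ hsubQ
      calc ∫ ω, (Q[(fun ω => φ (S ω, Z ω)) * (fun ω => Y ω - h (S ω, W ω)) |
              MeasurableSpace.comap (fun ω => (S ω, Z ω)) inferInstance]) ω ∂Q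
          = ∫ ω, ((fun ω => φ (S ω, Z ω)) * (Q[(fun ω => Y ω - h (S ω, W ω)) |
              MeasurableSpace.comap (fun ω => (S ω, Z ω)) inferInstance])) ω ∂Q :=
            integral_congr_ae h2
        _ = 0 := by
            rw [← integral_zero Ω ℝ (μ := Q)]
            refine integral_congr_ae ?_
            filter_upwards [hyp] with ω hω
            simp [hω]
    rw [key, zero_add]
  · -- Part (ii)
    intro hyp
    set cE : ℝ := (P E).toReal with hcE_def
    set cV : ℝ := (P Vs).toReal with hcV_def
    have hcE_pos : 0 < cE := ENNReal.toReal_pos hav.ne' (measure_ne_top P E)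
    have hcV_pos : 0 < cV := ENNReal.toReal_pos hv.ne' (measure_ne_top P Vs)
    set c : ℝ := cE / cV with hc_def
    have hc_pos : 0 < c := div_pos hcE_pos hcV_pos
    -- integrabilities
    have hφQ : Integrable (fun ω => φ (S ω, Z ω)) Q :=
      (integrable_const Cφ).mono' hφMeas.aestronglyMeasurable
        (Filter.Eventually.of_forall fun ω => by
          simpa [Real.norm_eq_abs] using hCφ (S ω, Z ω))
    have hhφQ : Integrable (fun ω => h (S ω, W ω) * φ (S ω, Z ω)) Q :=
      hφQ.bdd_mul hhMeas.aestronglyMeasurable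
        (Filter.Eventually.of_forall fun ω => by simpa [Real.norm_eq_abs] using hCh (S ω, W ω))
    have hYφQ : Integrable (fun ω => Y ω * φ (S ω, Z ω)) Q :=
      (hYint.bdd_mul hφMeas.aestronglyMeasurable
        (Filter.Eventually.of_forall fun ω => by simpa [Real.norm_eq_abs] using hCφ (S ω, Z ω))).congr
        (Filter.Eventually.of_forall fun ω => mul_comm _ _)
    -- the conditional-expectation machinery under Q on σ(S, W)
    have hm2 : MeasurableSpace.comap (fun ω => (S ω, W ω)) inferInstance ≤ _ :=
      (hS.prodMk hW).comap_le
    have hhsm : StronglyMeasurable[MeasurableSpace.comap (fun ω => (S ω, W ω)) inferInstance]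
        (fun ω => h (S ω, W ω)) :=
      (hh.comp (Measurable.of_comap_le le_rfl)).stronglyMeasurable
    -- σ(S, V, W) and the conditional expectation β
    have hm : MeasurableSpace.comap (fun ω => (S ω, V ω, W ω)) inferInstance ≤ _ :=
      (hS.prodMk (hV.prodMk hW)).comap_le
    have hSVWm : Measurable[MeasurableSpace.comap (fun ω => (S ω, V ω, W ω)) inferInstance]
        (fun ω => (S ω, V ω, W ω)) := Measurable.of_comap_le le_rfl
    set β : Ω → ℝ := P[((A ⁻¹' {a}).indicator (fun _ => (1 : ℝ))) |
        MeasurableSpace.comap (fun ω => (S ω, V ω, W ω)) inferInstance] with hβ_def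
    have hβsm : StronglyMeasurable[MeasurableSpace.comap
        (fun ω => (S ω, V ω, W ω)) inferInstance] β := stronglyMeasurable_condExp
    have hβpos : ∀ᵐ ω ∂P, 0 < β ω := by
      filter_upwards [hαpos, hα] with ω h1 h2
      rw [← h2]; exact h1
    -- lower bound on α (hence β) on E
    have hbdd : ∀ᵐ ω ∂Q, |(Q[(fun ω => φ (S ω, Z ω)) |
        MeasurableSpace.comap (fun ω => (S ω, W ω)) inferInstance]) ω| ≤
        ((⟨Cφ, hCφ_pos.le⟩ : NNReal) : ℝ) :=
      ae_bdd_condExp_of_ae_bdd (Filter.Eventually.of_forall fun ω => hCφ (S ω, Z ω))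
    have hαQpos : ∀ᵐ ω ∂Q, 0 < α ω := hαpos.filter_mono hQP.ae_le
    have hlb : ∀ᵐ ω ∂Q, c / Cφ ≤ α ω := by
      filter_upwards [hbdd, hyp, hαQpos] with ω h1 h2 h3
      rw [h2] at h1
      have h4 : c / α ω ≤ Cφ := (le_abs_self _).trans h1
      rw [div_le_iff₀ h3] at h4
      rw [div_le_iff₀ hCφ_pos]
      linarith [h4, mul_comm Cφ (α ω)]
    have hlb' : ∀ᵐ ω ∂P, ω ∈ E → c / Cφ ≤ α ω := by
      have h1 : ∀ᵐ ω ∂(P.restrict E), c / Cφ ≤ α ω := by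
        have h2 := hlb
        rw [hQ_def, ProbabilityTheory.cond] at h2
        exact (Measure.ae_ennreal_smul_measure_iff (ENNReal.inv_ne_zero.mpr (measure_ne_top P E))).mp h2
      exact (ae_restrict_iff' hEm).mp h1
    have hβlb : ∀ᵐ ω ∂P, ω ∈ E → c / Cφ ≤ β ω := by
      filter_upwards [hlb', hα] with ω h1 h2 hωE
      rw [← h2]; exact h1 hωE
    -- the key functions for the pull-out under P
    set f : Ω → ℝ := fun ω => Vs.indicator (fun _ => (1 : ℝ)) ω * h (S ω, W ω) / β ω
      with hf_def
    set g : Ω → ℝ := (A ⁻¹' {a}).indicator (fun _ => (1 : ℝ)) with hg_def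
    have hVsm' : MeasurableSet[MeasurableSpace.comap
        (fun ω => (S ω, V ω, W ω)) inferInstance] Vs :=
      ((measurable_fst.comp measurable_snd).comp hSVWm) (measurableSet_singleton v)
    have hSWm : Measurable[MeasurableSpace.comap
        (fun ω => (S ω, V ω, W ω)) inferInstance] (fun ω => (S ω, W ω)) :=
      (measurable_fst.comp hSVWm).prodMk
        ((measurable_snd.comp measurable_snd).comp hSVWm)
    have hfsm : StronglyMeasurable[MeasurableSpace.comap
        (fun ω => (S ω, V ω, W ω)) inferInstance] f :=
      (((measurable_const.indicator hVsm').mul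
        (hh.comp hSWm)).div hβsm.measurable).stronglyMeasurable
    have hgint : Integrable g P := (integrable_const (1 : ℝ)).indicator hAs
    set B : ℝ := Ch / (c / Cφ) with hB_def
    have hB_nonneg : 0 ≤ B := by positivity
    have hfg_bound : ∀ᵐ ω ∂P, ‖f ω * g ω‖ ≤ B := by
      filter_upwards [hβlb, hβpos] with ω h1 h2
      by_cases hωE : ω ∈ E
      · have hβω : c / Cφ ≤ β ω := h1 hωE
        obtain ⟨hωA, hωV⟩ := hωE
        have heq : f ω * g ω = h (S ω, W ω) / β ω := by
          simp [hf_def, hg_def, Set.indicator_of_mem hωA, Set.indicator_of_mem (show ω ∈ Vs from hωV)]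
        rw [heq, Real.norm_eq_abs, abs_div, abs_of_pos h2]
        exact div_le_div₀ hCh_pos.le (hCh _) (div_pos hc_pos hCφ_pos) hβω
      · have heq : f ω * g ω = 0 := by
          by_cases hωA : ω ∈ A ⁻¹' {a}
          · have hωV : ω ∉ Vs := fun hωV => hωE ⟨hωA, hωV⟩
            simp [hf_def, Set.indicator_of_notMem hωV]
          · simp [hg_def, Set.indicator_of_notMem hωA]
        rw [heq, norm_zero]; exact hB_nonneg
    have hfgint : Integrable (fun ω => f ω * g ω) P :=
      (integrable_const B).mono'
        (((hfsm.mono hm).mul (stronglyMeasurable_const.indicator hAs)).aestronglyMeasurable)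
        hfg_bound
    have hpull : P[f * g | MeasurableSpace.comap (fun ω => (S ω, V ω, W ω)) inferInstance]
        =ᵐ[P] f * β := condExp_mul_of_stronglyMeasurable_left hfsm hfgint hgint
    -- ∫ f·g dP = ∫_{V = v} h dP
    have hPint : ∫ ω, f ω * g ω ∂P = ∫ ω in Vs, h (S ω, W ω) ∂P := by
      calc ∫ ω, f ω * g ω ∂P
          = ∫ ω, (P[f * g | MeasurableSpace.comap
              (fun ω => (S ω, V ω, W ω)) inferInstance]) ω ∂P := (integral_condExp hm).symm
        _ = ∫ ω, (f * β) ω ∂P := integral_congr_ae hpull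
        _ = ∫ ω, Vs.indicator (fun ω => h (S ω, W ω)) ω ∂P := by
            refine integral_congr_ae ?_
            filter_upwards [hβpos] with ω hβω
            by_cases hωV : ω ∈ Vs
            · simp only [Pi.mul_apply, hf_def, Set.indicator_of_mem hωV]
              rw [div_mul_cancel₀ _ hβω.ne']
              simp
            · simp [hf_def, Set.indicator_of_notMem hωV]
        _ = ∫ ω in Vs, h (S ω, W ω) ∂P := integral_indicator hVsm
    -- key identity: ∫ h·φ dQ = ∫ h dR
    have hkey : ∫ ω, h (S ω, W ω) * φ (S ω, Z ω) ∂Q = ∫ ω, h (S ω, W ω) ∂(R) := by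
      have s1 : ∫ ω, h (S ω, W ω) * φ (S ω, Z ω) ∂Q
          = ∫ ω, h (S ω, W ω) * (c / α ω) ∂Q := by
        calc ∫ ω, h (S ω, W ω) * φ (S ω, Z ω) ∂Q
            = ∫ ω, (Q[(fun ω => h (S ω, W ω)) * (fun ω => φ (S ω, Z ω)) |
                MeasurableSpace.comap (fun ω => (S ω, W ω)) inferInstance]) ω ∂Q :=
              (integral_condExp hm2).symm
          _ = ∫ ω, ((fun ω => h (S ω, W ω)) * (Q[(fun ω => φ (S ω, Z ω)) |
                MeasurableSpace.comap (fun ω => (S ω, W ω)) inferInstance])) ω ∂Q :=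
              integral_congr_ae (condExp_mul_of_stronglyMeasurable_left hhsm hhφQ hφQ)
          _ = ∫ ω, h (S ω, W ω) * (c / α ω) ∂Q := by
              refine integral_congr_ae ?_
              filter_upwards [hyp] with ω hω
              simp only [Pi.mul_apply, hω]
      have s2 : ∫ ω in E, h (S ω, W ω) * (c / α ω) ∂P = c * ∫ ω, f ω * g ω ∂P := by
        rw [← integral_const_mul c, ← integral_indicator hEm]
        refine integral_congr_ae ?_
        filter_upwards [hα] with ω hωαβ
        by_cases hωE : ω ∈ E
        · rw [Set.indicator_of_mem hωE]
          obtain ⟨hωA, hωV⟩ := hωE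
          simp only [hf_def, hg_def, Set.indicator_of_mem hωA, Set.indicator_of_mem (show ω ∈ Vs from hωV),
            one_mul, mul_one, hωαβ]
          ring
        · rw [Set.indicator_of_notMem hωE]
          by_cases hωA : ω ∈ A ⁻¹' {a}
          · have hωV : ω ∉ Vs := fun hωV => hωE ⟨hωA, hωV⟩
            simp [hf_def, Set.indicator_of_notMem hωV]
          · simp [hg_def, Set.indicator_of_notMem hωA]
      rw [s1, hQ_def, ProbabilityTheory.cond, integral_smul_measure, s2, hPint,
        hR_def, ProbabilityTheory.cond, integral_smul_measure,
        ENNReal.toReal_inv, ENNReal.toReal_inv, smul_eq_mul, smul_eq_mul,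
        ← hcE_def, ← hcV_def, hc_def]
      field_simp
    -- assemble
    have hexpand : ∫ ω, φ (S ω, Z ω) * (Y ω - h (S ω, W ω)) ∂Q
        = (∫ ω, Y ω * φ (S ω, Z ω) ∂Q) - ∫ ω, h (S ω, W ω) * φ (S ω, Z ω) ∂Q := by
      rw [← integral_sub hYφQ hhφQ]
      exact integral_congr_ae (Filter.Eventually.of_forall fun ω => by ring)
    rw [hexpand, hkey]
    ring
end

section
/- Doubly robust identification of the conditional (ATT) response for a discretely conditioned treatment pair (Theorem 3.3, ATT case, discrete form): Let a, a' ∈ 𝒜 with P(A=a) > 0 and P(A=a') > 0, let X : Ω → 𝒳, Z : Ω → 𝒵, W : Ω → 𝒲, Y : Ω → ℝ be measurable, and let ν_a and ν_{a'} denote the laws of (X,W) under P_a and P_{a'} respectively; suppose ν_{a'} ≪ ν_a with Radon–Nikodym derivative ρ : 𝒳×𝒲 → [0,∞). Let Y be integrable under P_a, and let h : 𝒳×𝒲 → ℝ and φ : 𝒳×𝒵 → ℝ be bounded measurable. Define f^{DR}(h,φ) := E_{P_a}[φ(X,Z)·(Y − h(X,W))] + E_{P_{a'}}[h(X,W)].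 Then: (i) if E_{P_a}[Y − h(X,W) | σ(X,Z)] = 0 P_a-almost surely, then f^{DR}(h,φ) = E_{P_{a'}}[h(X,W)]; (ii) if E_{P_a}[φ(X,Z) | σ(X,W)] = ρ(X,W) P_a-almost surely, then f^{DR}(h,φ) = E_{P_a}[Y·φ(X,Z)]. -/
open MeasureTheory ProbabilityTheory

/-- Doubly robust identification of the conditional (ATT) response,
discretely conditioned treatment pair. -/
theorem att_doubly_robust_identification_discrete
    {Ω 𝓐 𝓧 𝓩 𝓦 : Type*}
    [MeasurableSpace Ω] [MeasurableSpace 𝓐] [MeasurableSingletonClass 𝓐]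
    [MeasurableSpace 𝓧] [MeasurableSpace 𝓩] [MeasurableSpace 𝓦]
    (P : Measure Ω) [IsProbabilityMeasure P]
    (A : Ω → 𝓐) (X : Ω → 𝓧) (Z : Ω → 𝓩) (W : Ω → 𝓦) (Y : Ω → ℝ)
    (hA : Measurable A) (hX : Measurable X) (hZ : Measurable Z)
    (hW : Measurable W) (hY : Measurable Y)
    (a a' : 𝓐) (ha : 0 < P (A ⁻¹' {a})) (ha' : 0 < P (A ⁻¹' {a'}))
    (ρ : 𝓧 × 𝓦 → ℝ) (hρ : Measurable ρ) (hρ0 : ∀ p, 0 ≤ ρ p)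
    -- ν_{a'} ≪ ν_a with Radon–Nikodym derivative ρ
    (hRN : Measure.map (fun ω => (X ω, W ω)) (ProbabilityTheory.cond P (A ⁻¹' {a'}))
      = (Measure.map (fun ω => (X ω, W ω)) (ProbabilityTheory.cond P (A ⁻¹' {a}))).withDensity
          (fun p => ENNReal.ofReal (ρ p)))
    (hYint : Integrable Y (ProbabilityTheory.cond P (A ⁻¹' {a})))
    (h : 𝓧 × 𝓦 → ℝ) (φ : 𝓧 × 𝓩 → ℝ)
    (hh : Measurable h) (hφ : Measurable φ)
    (hhbd : ∃ C : ℝ, ∀ p, |h p| ≤ C) (hφbd : ∃ C : ℝ, ∀ p, |φ p| ≤ C) :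
    -- (i) if h is a valid outcome bridge under P_a
    (((ProbabilityTheory.cond P (A ⁻¹' {a}))[(fun ω => Y ω - h (X ω, W ω)) |
        MeasurableSpace.comap (fun ω => (X ω, Z ω)) inferInstance]
        =ᵐ[ProbabilityTheory.cond P (A ⁻¹' {a})]
      (fun _ => (0 : ℝ))) →
      ((∫ ω, φ (X ω, Z ω) * (Y ω - h (X ω, W ω))
          ∂(ProbabilityTheory.cond P (A ⁻¹' {a})))
        + (∫ ω, h (X ω, W ω) ∂(ProbabilityTheory.cond P (A ⁻¹' {a'}))))
        = ∫ ω, h (X ω, W ω) ∂(ProbabilityTheory.cond P (A ⁻¹' {a'})))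
    ∧
    -- (ii) if φ is a valid treatment bridge under P_a
    (((ProbabilityTheory.cond P (A ⁻¹' {a}))[(fun ω => φ (X ω, Z ω)) |
        MeasurableSpace.comap (fun ω => (X ω, W ω)) inferInstance]
        =ᵐ[ProbabilityTheory.cond P (A ⁻¹' {a})]
      (fun ω => ρ (X ω, W ω))) →
      ((∫ ω, φ (X ω, Z ω) * (Y ω - h (X ω, W ω))
          ∂(ProbabilityTheory.cond P (A ⁻¹' {a})))
        + (∫ ω, h (X ω, W ω) ∂(ProbabilityTheory.cond P (A ⁻¹' {a'}))))
        = ∫ ω, Y ω * φ (X ω, Z ω) ∂(ProbabilityTheory.cond P (A ⁻¹' {a}))) := by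
  classical
  set Pa := ProbabilityTheory.cond P (A ⁻¹' {a}) with hPa
  set Pa' := ProbabilityTheory.cond P (A ⁻¹' {a'}) with hPa'
  haveI : IsProbabilityMeasure Pa :=
    ProbabilityTheory.cond_isProbabilityMeasure (ne_of_gt ha)
  haveI : IsProbabilityMeasure Pa' :=
    ProbabilityTheory.cond_isProbabilityMeasure (ne_of_gt ha')
  have hXZ : Measurable fun ω => (X ω, Z ω) := hX.prodMk hZ
  have hXW : Measurable fun ω => (X ω, W ω) := hX.prodMk hW
  have hm₁ : MeasurableSpace.comap (fun ω => (X ω, Z ω)) inferInstance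
      ≤ ‹MeasurableSpace Ω› := hXZ.comap_le
  have hm₂ : MeasurableSpace.comap (fun ω => (X ω, W ω)) inferInstance
      ≤ ‹MeasurableSpace Ω› := hXW.comap_le
  have hφm : StronglyMeasurable[MeasurableSpace.comap (fun ω => (X ω, Z ω)) inferInstance]
      fun ω => φ (X ω, Z ω) := by
    have : Measurable[MeasurableSpace.comap (fun ω => (X ω, Z ω)) inferInstance]
        fun ω => (X ω, Z ω) := measurable_iff_comap_le.2 le_rfl
    exact (hφ.comp this).stronglyMeasurable
  have hhm : StronglyMeasurable[MeasurableSpace.comap (fun ω => (X ω, W ω)) inferInstance]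
      fun ω => h (X ω, W ω) := by
    have : Measurable[MeasurableSpace.comap (fun ω => (X ω, W ω)) inferInstance]
        fun ω => (X ω, W ω) := measurable_iff_comap_le.2 le_rfl
    exact (hh.comp this).stronglyMeasurable
  obtain ⟨C, hC⟩ := hhbd
  obtain ⟨D, hD⟩ := hφbd
  have hhintPa : Integrable (fun ω => h (X ω, W ω)) Pa :=
    Integrable.mono' (integrable_const C) ((hh.comp hXW).aestronglyMeasurable)
      (Filter.Eventually.of_forall fun ω => by simpa using hC (X ω, W ω))
  have hsubint : Integrable (fun ω => Y ω - h (X ω, W ω)) Pa := hYint.sub hhintPa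
  have hφbd' : ∃ C, ∀ ω, ‖φ (X ω, Z ω)‖ ≤ C := ⟨D, fun ω => by simpa using hD (X ω, Z ω)⟩
  have hprodint : Integrable (fun ω => φ (X ω, Z ω) * (Y ω - h (X ω, W ω))) Pa :=
    hsubint.bdd_mul ((hφ.comp hXZ).aestronglyMeasurable)
      (Filter.Eventually.of_forall fun ω => by simpa using hD (X ω, Z ω))
  constructor
  · -- part (i)
    intro hbridge
    have hpull := condExp_mul_of_stronglyMeasurable_left (μ := Pa) hφm hprodint hsubint
    have key : ∫ ω, φ (X ω, Z ω) * (Y ω - h (X ω, W ω)) ∂Pa = 0 := by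
      have h0 : Pa[(fun ω => φ (X ω, Z ω) * (Y ω - h (X ω, W ω)))|
          MeasurableSpace.comap (fun ω => (X ω, Z ω)) inferInstance]
          =ᵐ[Pa] (fun _ => (0 : ℝ)) := by
        refine hpull.trans ?_
        filter_upwards [hbridge] with ω hω
        simp only [Pi.mul_apply, hω, mul_zero]
      rw [← integral_condExp (μ := Pa)
        (f := fun ω => φ (X ω, Z ω) * (Y ω - h (X ω, W ω))) hm₁,
        integral_congr_ae h0]
      simp
    rw [key, zero_add]
  · -- part (ii)
    intro hbridge
    have hφint : Integrable (fun ω => φ (X ω, Z ω)) Pa :=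
      Integrable.mono' (integrable_const D) ((hφ.comp hXZ).aestronglyMeasurable)
        (Filter.Eventually.of_forall fun ω => by simpa using hD (X ω, Z ω))
    have hhφint : Integrable (fun ω => h (X ω, W ω) * φ (X ω, Z ω)) Pa :=
      hφint.bdd_mul ((hh.comp hXW).aestronglyMeasurable)
        (Filter.Eventually.of_forall fun ω => by simpa using hC (X ω, W ω))
    have step1 : ∫ ω, h (X ω, W ω) * φ (X ω, Z ω) ∂Pa
        = ∫ ω, h (X ω, W ω) * ρ (X ω, W ω) ∂Pa := by
      have hpull := condExp_mul_of_stronglyMeasurable_left (μ := Pa) hhm hhφint hφint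
      calc ∫ ω, h (X ω, W ω) * φ (X ω, Z ω) ∂Pa
          = ∫ ω, (Pa[(fun ω => h (X ω, W ω)) * (fun ω => φ (X ω, Z ω))|
              MeasurableSpace.comap (fun ω => (X ω, W ω)) inferInstance]) ω ∂Pa :=
            (integral_condExp (μ := Pa)
              (f := (fun ω => h (X ω, W ω)) * (fun ω => φ (X ω, Z ω))) hm₂).symm
        _ = ∫ ω, h (X ω, W ω) * ρ (X ω, W ω) ∂Pa := by
            refine integral_congr_ae (hpull.trans ?_)
            filter_upwards [hbridge] with ω hω
            simp only [Pi.mul_apply, hω]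
    have step2 : ∫ ω, h (X ω, W ω) ∂Pa' = ∫ ω, h (X ω, W ω) * ρ (X ω, W ω) ∂Pa := by
      have e1 : ∫ ω, h (X ω, W ω) ∂Pa'
          = ∫ p, h p ∂(Measure.map (fun ω => (X ω, W ω)) Pa') :=
        (integral_map hXW.aemeasurable hh.aestronglyMeasurable).symm
      rw [e1, hRN]
      have e2 : (fun p : 𝓧 × 𝓦 => ENNReal.ofReal (ρ p))
          = fun p => ((Real.toNNReal (ρ p) : NNReal) : ENNReal) := rfl
      rw [e2, integral_withDensity_eq_integral_smul hρ.real_toNNReal h]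
      have e3 : ∀ p : 𝓧 × 𝓦, (Real.toNNReal (ρ p)) • h p = ρ p * h p := by
        intro p
        simp [NNReal.smul_def, Real.coe_toNNReal _ (hρ0 p)]
      simp_rw [e3]
      rw [integral_map (f := fun p => ρ p * h p) hXW.aemeasurable (hρ.mul hh).aestronglyMeasurable]
      simp_rw [mul_comm]
    have hφYint : Integrable (fun ω => φ (X ω, Z ω) * Y ω) Pa :=
      hYint.bdd_mul ((hφ.comp hXZ).aestronglyMeasurable)
      (Filter.Eventually.of_forall fun ω => by simpa using hD (X ω, Z ω))
    have split : ∫ ω, φ (X ω, Z ω) * (Y ω - h (X ω, W ω)) ∂Pa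
        = (∫ ω, φ (X ω, Z ω) * Y ω ∂Pa) - ∫ ω, h (X ω, W ω) * φ (X ω, Z ω) ∂Pa := by
      rw [← integral_sub hφYint hhφint]
      congr 1
      ext ω
      ring
    have comm : ∫ ω, φ (X ω, Z ω) * Y ω ∂Pa = ∫ ω, Y ω * φ (X ω, Z ω) ∂Pa := by
      simp_rw [mul_comm]
    rw [split, step2, step1, comm]
    ring
end

section
/- Projected outcome-bridge consistency (Theorem, consistency appendix, deterministic form): Let (Ω, ℱ, P) be a probability space, Q : Ω → 𝒬 and W : Ω → 𝒲 measurable, π : 𝒬 → ℛ measurable, and Y : Ω → ℝ square-integrable; let m₀ : 𝒬 → ℝ be measurable with m₀(Q) a version of E[Y | σ(Q)]. Let d ∈ ℕ and let Θ, I, J be nonempty index sets carrying families of bounded measurable maps θ : ℛ → ℝ^d (θ ∈ Θ, with ‖θ(r)‖₂ ≤ B_θ for all θ ∈ Θ and r ∈ ℛ), φ_i : 𝒲 → ℝ^d (i ∈ I), and g_j : 𝒬 → ℝ^d (j ∈ J); for each i ∈ I let μ_i : 𝒬 → ℝ^d be measurable with μ_i(Q) a version of the componentwise conditional expectation E[φ_i(W)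 | σ(Q)]. Suppose: (a) a first-stage selection ĝ : I → J and ε₁ ≥ 0 satisfy E‖g_{ĝ(i)}(Q) − μ_i(Q)‖₂² ≤ ε₁ for every i ∈ I; (b) a function R̂ : Θ × J → ℝ and Δ₂ ≥ 0 satisfy |E[(Y − ⟨θ(π(Q)), g_j(Q)⟩)²] − R̂(θ,j)| ≤ Δ₂ for all θ ∈ Θ and j ∈ J; (c) a pair (θ̂, î) ∈ Θ × I satisfies R̂(θ̂, ĝ(î)) ≤ R̂(θ, ĝ(i)) for all θ ∈ Θ and i ∈ I. Then E[(⟨θ̂(π(Q)), μ_{î}(Q)⟩ − m₀(Q))²] ≤ 4κ₂ + 6B_θ²·ε₁ + 4Δ₂, where κ₂ := inf_{θ ∈ Θ, i ∈ I} E[(m₀(Q) − ⟨θ(π(Q)), μ_i(Q)⟩)²]. -/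
open MeasureTheory RealInnerProductSpace

theorem memLp_two_condexp_aux {α F : Type*} {m mΩ : MeasurableSpace α} (hm : m ≤ mΩ)
    {μ : Measure α} [IsFiniteMeasure μ]
    [NormedAddCommGroup F] [InnerProductSpace ℝ F] [CompleteSpace F]
    {f : α → F} (hf : MemLp f 2 μ) : MemLp (μ[f|m]) 2 μ := by
  haveI : SigmaFinite (μ.trim hm) := inferInstance
  have hcoe : ((condExpL2 F ℝ hm (hf.toLp f) : Lp F 2 μ) : α → F) =ᵐ[μ] μ[f|m] := by
    refine ae_eq_condExp_of_forall_setIntegral_eq hm (hf.integrable one_le_two) ?_ ?_ ?_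
    · intro s _ _
      exact integrableOn_Lp_of_measure_ne_top _ fact_one_le_two_ennreal.elim (measure_ne_top μ s)
    · intro s hs hμs
      rw [integral_condExpL2_eq hm (hf.toLp f) hs hμs.ne]
      exact setIntegral_congr_ae (hm s hs) ((hf.coeFn_toLp).mono fun x hx _ => hx)
    · exact lpMeas.aestronglyMeasurable _
  exact (Lp.memLp _).ae_eq hcoe

theorem sq_le_two_sq_add_two_sq {x a b : ℝ} (hx : 0 ≤ x) (h : x ≤ a + b) :
    x ^ 2 ≤ 2 * a ^ 2 + 2 * b ^ 2 := by
  nlinarith [mul_nonneg (by linarith : (0:ℝ) ≤ a + b - x) (by linarith : (0:ℝ) ≤ a + b + x),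
    sq_nonneg (a - b)]

/-- Projected outcome-bridge consistency (deterministic form). -/
theorem projected_outcome_bridge_consistency
    {Ω 𝓠 𝓦 𝓡 : Type*} {Θ I J : Type*}
    [MeasurableSpace Ω] [MeasurableSpace 𝓠] [MeasurableSpace 𝓦]
    [MeasurableSpace 𝓡]
    [Nonempty Θ] [Nonempty I] [Nonempty J]
    (P : Measure Ω) [IsProbabilityMeasure P]
    (Q : Ω → 𝓠) (W : Ω → 𝓦) (hQ : Measurable Q) (hW : Measurable W)
    (π : 𝓠 → 𝓡) (hπ : Measurable π)
    (Y : Ω → ℝ) (hY : Measurable Y) (hY2 : MemLp Y 2 P)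
    (m0 : 𝓠 → ℝ) (hm0 : Measurable m0)
    -- m₀(Q) is a version of E[Y | σ(Q)]
    (hm0ver : (fun ω => m0 (Q ω)) =ᵐ[P]
      P[Y | MeasurableSpace.comap Q inferInstance])
    (d : ℕ)
    (θ : Θ → 𝓡 → EuclideanSpace ℝ (Fin d))
    (φ : I → 𝓦 → EuclideanSpace ℝ (Fin d))
    (g : J → 𝓠 → EuclideanSpace ℝ (Fin d))
    (μ : I → 𝓠 → EuclideanSpace ℝ (Fin d))
    (hθ : ∀ t, Measurable (θ t)) (hφ : ∀ i, Measurable (φ i))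
    (hg : ∀ j, Measurable (g j)) (hμ : ∀ i, Measurable (μ i))
    (Bθ Bφ Bg : ℝ)
    (hθbd : ∀ t r, ‖θ t r‖ ≤ Bθ)
    (hφbd : ∀ i w, ‖φ i w‖ ≤ Bφ) (hgbd : ∀ j q, ‖g j q‖ ≤ Bg)
    -- μ_i(Q) is a version of E[φ_i(W) | σ(Q)]
    (hμver : ∀ i,
      (fun ω => μ i (Q ω)) =ᵐ[P]
        P[(fun ω => φ i (W ω)) | MeasurableSpace.comap Q inferInstance])
    -- (a) first-stage selection with uniform error ε₁
    (ghat : I → J) (ε₁ : ℝ) (hε₁ : 0 ≤ ε₁)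
    (hstage1 : ∀ i, (∫ ω, ‖g (ghat i) (Q ω) - μ i (Q ω)‖ ^ 2 ∂P) ≤ ε₁)
    -- (b) uniform deviation of the second-stage empirical risk
    (Rhat : Θ × J → ℝ) (Δ₂ : ℝ) (hΔ₂ : 0 ≤ Δ₂)
    (hdev : ∀ t j,
      |(∫ ω, (Y ω - ⟪θ t (π (Q ω)), g j (Q ω)⟫) ^ 2 ∂P) - Rhat (t, j)| ≤ Δ₂)
    -- (c) profiled second-stage empirical risk minimizer
    (θhat : Θ) (ihat : I)
    (hmin : ∀ t i, Rhat (θhat, ghat ihat) ≤ Rhat (t, ghat i)) :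
    (∫ ω, (⟪θ θhat (π (Q ω)), μ ihat (Q ω)⟫ - m0 (Q ω)) ^ 2 ∂P)
      ≤ 4 * (⨅ p : Θ × I,
              ∫ ω, (m0 (Q ω) - ⟪θ p.1 (π (Q ω)), μ p.2 (Q ω)⟫) ^ 2 ∂P)
        + 6 * Bθ ^ 2 * ε₁ + 4 * Δ₂ := by
  have hm : MeasurableSpace.comap Q inferInstance ≤ _ := hQ.comap_le
  haveI : SigmaFinite (P.trim hm) := inferInstance
  -- nonemptiness of Ω and nonnegativity of Bθ
  have hΩne : Nonempty Ω := by
    by_contra h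
    rw [not_nonempty_iff] at h
    have h1 : P Set.univ = 1 := measure_univ
    simp [Set.univ_eq_empty_iff.mpr h] at h1
  have hBθ : 0 ≤ Bθ :=
    (norm_nonneg _).trans (hθbd (Classical.arbitrary Θ) (π (Q (Classical.arbitrary Ω))))
  -- abbreviations
  set M : Ω → ℝ := fun ω => m0 (Q ω) with hM
  set F : Θ → I → Ω → ℝ := fun t i ω => ⟪θ t (π (Q ω)), μ i (Q ω)⟫ with hF
  set H : Θ → J → Ω → ℝ := fun t j ω => ⟪θ t (π (Q ω)), g j (Q ω)⟫ with hH
  -- measurability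
  have hMeasM : Measurable M := hm0.comp hQ
  have hMeasF : ∀ t i, Measurable (F t i) := fun t i =>
    ((hθ t).comp (hπ.comp hQ)).inner ((hμ i).comp hQ)
  have hMeasH : ∀ t j, Measurable (H t j) := fun t j =>
    ((hθ t).comp (hπ.comp hQ)).inner ((hg j).comp hQ)
  -- MemLp facts
  have hM2 : MemLp M 2 P := (memLp_two_condexp_aux hm hY2).ae_eq hm0ver.symm
  have hμQ2 : ∀ i, MemLp (fun ω => μ i (Q ω)) 2 P := by
    intro i
    have hφ2 : MemLp (fun ω => φ i (W ω)) 2 P :=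
      MemLp.of_bound ((hφ i).comp hW).aestronglyMeasurable Bφ
        (Filter.Eventually.of_forall fun ω => hφbd i (W ω))
    exact (memLp_two_condexp_aux hm hφ2).ae_eq (hμver i).symm
  have hgQ2 : ∀ j, MemLp (fun ω => g j (Q ω)) 2 P := fun j =>
    MemLp.of_bound ((hg j).comp hQ).aestronglyMeasurable Bg
      (Filter.Eventually.of_forall fun ω => hgbd j (Q ω))
  have hF2 : ∀ t i, MemLp (F t i) 2 P := by
    intro t i
    refine MemLp.of_le ((hμQ2 i).norm.const_mul Bθ) (hMeasF t i).aestronglyMeasurable ?_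
    refine Filter.Eventually.of_forall fun ω => ?_
    calc ‖F t i ω‖ = |⟪θ t (π (Q ω)), μ i (Q ω)⟫| := rfl
      _ ≤ ‖θ t (π (Q ω))‖ * ‖μ i (Q ω)‖ := abs_real_inner_le_norm _ _
      _ ≤ Bθ * ‖μ i (Q ω)‖ :=
          mul_le_mul_of_nonneg_right (hθbd _ _) (norm_nonneg _)
      _ ≤ ‖Bθ * ‖μ i (Q ω)‖‖ := le_abs_self _
  have hH2 : ∀ t j, MemLp (H t j) 2 P := by
    intro t j
    refine MemLp.of_bound (hMeasH t j).aestronglyMeasurable (Bθ * Bg) ?_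
    refine Filter.Eventually.of_forall fun ω => ?_
    calc ‖H t j ω‖ = |⟪θ t (π (Q ω)), g j (Q ω)⟫| := rfl
      _ ≤ ‖θ t (π (Q ω))‖ * ‖g j (Q ω)‖ := abs_real_inner_le_norm _ _
      _ ≤ Bθ * Bg := by
          have := hgbd j (Q ω)
          have := hθbd t (π (Q ω))
          exact mul_le_mul (hθbd _ _) (hgbd _ _) (norm_nonneg _) hBθ
  -- integrability of products of L² functions
  have int_mul : ∀ (u v : Ω → ℝ), MemLp u 2 P → MemLp v 2 P →
      Integrable (fun ω => u ω * v ω) P := by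
    intro u v hu hv
    have h := L2.integrable_inner (𝕜 := ℝ) (hu.toLp u) (hv.toLp v)
    refine h.congr ?_
    filter_upwards [hu.coeFn_toLp, hv.coeFn_toLp] with ω e1 e2
    rw [e1, e2]
    simp [RCLike.inner_apply, mul_comm]
  -- orthogonality: (Y - M) ⟂ anything σ(Q)-measurable in L²
  have orth : ∀ (G : 𝓠 → ℝ), Measurable G → MemLp (fun ω => G (Q ω)) 2 P →
      ∫ ω, (Y ω - M ω) * G (Q ω) ∂P = 0 := by
    intro G hG hG2
    have hsm : StronglyMeasurable[MeasurableSpace.comap Q inferInstance]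
        (fun ω => G (Q ω)) :=
      (hG.comp (measurable_iff_comap_le.mpr le_rfl)).stronglyMeasurable
    have hint_GY : Integrable (fun ω => G (Q ω) * Y ω) P := int_mul _ _ hG2 hY2
    have hint_GM : Integrable (fun ω => G (Q ω) * M ω) P := int_mul _ _ hG2 hM2
    have h1 : P[(fun ω => G (Q ω) * Y ω)|MeasurableSpace.comap Q inferInstance]
        =ᵐ[P] fun ω => G (Q ω) * (P[Y|MeasurableSpace.comap Q inferInstance]) ω :=
      condExp_mul_of_stronglyMeasurable_left hsm hint_GY (hY2.integrable one_le_two)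
    have h2 : ∫ ω, G (Q ω) * Y ω ∂P = ∫ ω, G (Q ω) * M ω ∂P := by
      have e1 : ∫ ω, G (Q ω) * Y ω ∂P
          = ∫ ω, (P[(fun ω => G (Q ω) * Y ω)|MeasurableSpace.comap Q inferInstance]) ω ∂P :=
        (integral_condExp hm).symm
      rw [e1, integral_congr_ae h1]
      refine integral_congr_ae ?_
      filter_upwards [hm0ver] with ω e
      rw [hM, ← e]
    have hsplit : ∫ ω, (Y ω - M ω) * G (Q ω) ∂P
        = (∫ ω, G (Q ω) * Y ω ∂P) - ∫ ω, G (Q ω) * M ω ∂P := by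
      rw [← integral_sub hint_GY hint_GM]
      refine integral_congr_ae (Filter.Eventually.of_forall fun ω => ?_)
      ring
    rw [hsplit, h2, sub_self]
  -- Lp elements
  set YL : Lp ℝ 2 P := hY2.toLp Y with hYL
  set ML : Lp ℝ 2 P := hM2.toLp M with hML
  set FL : Θ → I → Lp ℝ 2 P := fun t i => (hF2 t i).toLp (F t i) with hFL
  set HL : Θ → J → Lp ℝ 2 P := fun t j => (hH2 t j).toLp (H t j) with hHL
  -- integral of squared difference equals squared Lp norm
  have sq_eq : ∀ (u v : Ω → ℝ) (hu : MemLp u 2 P) (hv : MemLp v 2 P),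
      ∫ ω, (u ω - v ω) ^ 2 ∂P = ‖hu.toLp u - hv.toLp v‖ ^ 2 := by
    intro u v hu hv
    have : (∫ ω, (u ω - v ω) ^ 2 ∂P)
        = ⟪hu.toLp u - hv.toLp v, hu.toLp u - hv.toLp v⟫ := by
      rw [L2.inner_def]
      refine (integral_congr_ae ?_).symm
      filter_upwards [hu.coeFn_toLp, hv.coeFn_toLp, Lp.coeFn_sub (hu.toLp u) (hv.toLp v)]
        with ω e1 e2 e3
      simp only [e3, Pi.sub_apply, e1, e2, RCLike.inner_apply, conj_trivial]
      ring
    rw [this, real_inner_self_eq_norm_sq]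
  -- inner products against (YL - ML)
  have inner_eq : ∀ (u : Ω → ℝ) (hu : MemLp u 2 P),
      ⟪YL - ML, hu.toLp u⟫ = ∫ ω, (Y ω - M ω) * u ω ∂P := by
    intro u hu
    rw [L2.inner_def]
    refine integral_congr_ae ?_
    filter_upwards [hY2.coeFn_toLp, hM2.coeFn_toLp, hu.coeFn_toLp, Lp.coeFn_sub YL ML]
      with ω e1 e2 e3 e4
    rw [hYL, hML] at e4
    simp only [e4, Pi.sub_apply, e1, e2, e3, RCLike.inner_apply, conj_trivial]
    rw [hYL, hML, e4, Pi.sub_apply, e1, e2]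
    ring
  -- vanishing inner products
  have inner0M : ⟪YL - ML, ML⟫ = 0 := by
    have h := inner_eq M hM2
    rw [h]
    exact orth m0 hm0 hM2
  have inner0H : ∀ t j, ⟪YL - ML, HL t j⟫ = 0 := by
    intro t j
    have h := inner_eq (H t j) (hH2 t j)
    rw [show HL t j = (hH2 t j).toLp (H t j) from rfl, h]
    exact orth (fun q => ⟪θ t (π q), g j q⟫) (((hθ t).comp hπ).inner (hg j)) (hH2 t j)
  have inner0 : ∀ t j, ⟪YL - ML, ML - HL t j⟫ = 0 := by
    intro t j
    rw [inner_sub_right, inner0M, inner0H t j, sub_zero]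
  -- Pythagoras
  have pyth : ∀ t j, ‖YL - HL t j‖ ^ 2 = ‖YL - ML‖ ^ 2 + ‖ML - HL t j‖ ^ 2 := by
    intro t j
    have hdecomp : YL - HL t j = (YL - ML) + (ML - HL t j) := by abel
    rw [hdecomp, norm_add_sq_real, inner0 t j]
    ring
  -- the true risk decomposes
  have hR : ∀ t j, (∫ ω, (Y ω - ⟪θ t (π (Q ω)), g j (Q ω)⟫) ^ 2 ∂P)
      = ‖YL - ML‖ ^ 2 + ‖ML - HL t j‖ ^ 2 := by
    intro t j
    rw [← pyth t j]
    exact sq_eq Y (H t j) hY2 (hH2 t j)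
  -- first-stage difference bound
  have hdiff : ∀ t i, ‖HL t (ghat i) - FL t i‖ ^ 2 ≤ Bθ ^ 2 * ε₁ := by
    intro t i
    have e : ‖HL t (ghat i) - FL t i‖ ^ 2
        = ∫ ω, (H t (ghat i) ω - F t i ω) ^ 2 ∂P :=
      (sq_eq (H t (ghat i)) (F t i) (hH2 t (ghat i)) (hF2 t i)).symm
    rw [e]
    have hintR : Integrable (fun ω => Bθ ^ 2 * ‖g (ghat i) (Q ω) - μ i (Q ω)‖ ^ 2) P := by
      have hsub : MemLp (fun ω => g (ghat i) (Q ω) - μ i (Q ω)) 2 P :=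
        (hgQ2 (ghat i)).sub (hμQ2 i)
      exact hsub.norm.integrable_sq.const_mul _
    have hle : ∀ ω, (H t (ghat i) ω - F t i ω) ^ 2
        ≤ Bθ ^ 2 * ‖g (ghat i) (Q ω) - μ i (Q ω)‖ ^ 2 := by
      intro ω
      have h1 : H t (ghat i) ω - F t i ω
          = ⟪θ t (π (Q ω)), g (ghat i) (Q ω) - μ i (Q ω)⟫ :=
        (inner_sub_right _ _ _).symm
      have h2 : |⟪θ t (π (Q ω)), g (ghat i) (Q ω) - μ i (Q ω)⟫|
          ≤ Bθ * ‖g (ghat i) (Q ω) - μ i (Q ω)‖ :=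
        (abs_real_inner_le_norm _ _).trans
          (mul_le_mul_of_nonneg_right (hθbd _ _) (norm_nonneg _))
      have h0 := abs_nonneg (⟪θ t (π (Q ω)), g (ghat i) (Q ω) - μ i (Q ω)⟫ : ℝ)
      calc (H t (ghat i) ω - F t i ω) ^ 2
          = |⟪θ t (π (Q ω)), g (ghat i) (Q ω) - μ i (Q ω)⟫| ^ 2 := by rw [h1, sq_abs]
        _ ≤ (Bθ * ‖g (ghat i) (Q ω) - μ i (Q ω)‖) ^ 2 := by nlinarith
        _ = Bθ ^ 2 * ‖g (ghat i) (Q ω) - μ i (Q ω)‖ ^ 2 := by ring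
    have h3 : ∫ ω, (H t (ghat i) ω - F t i ω) ^ 2 ∂P
        ≤ ∫ ω, Bθ ^ 2 * ‖g (ghat i) (Q ω) - μ i (Q ω)‖ ^ 2 ∂P :=
      integral_mono_of_nonneg (Filter.Eventually.of_forall fun ω => sq_nonneg _)
        hintR (Filter.Eventually.of_forall hle)
    have h4 : ∫ ω, Bθ ^ 2 * ‖g (ghat i) (Q ω) - μ i (Q ω)‖ ^ 2 ∂P
        = Bθ ^ 2 * ∫ ω, ‖g (ghat i) (Q ω) - μ i (Q ω)‖ ^ 2 ∂P := integral_const_mul _ _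
    rw [h4] at h3
    exact h3.trans (mul_le_mul_of_nonneg_left (hstage1 i) (sq_nonneg _))
  -- main comparison for the selected pair
  have key : ∀ t i, ‖ML - HL θhat (ghat ihat)‖ ^ 2
      ≤ 2 * ‖ML - FL t i‖ ^ 2 + 2 * (Bθ ^ 2 * ε₁) + 2 * Δ₂ := by
    intro t i
    have d1 := abs_le.mp (hdev θhat (ghat ihat))
    have d2 := abs_le.mp (hdev t (ghat i))
    rw [hR θhat (ghat ihat)] at d1
    rw [hR t (ghat i)] at d2
    have hmin' := hmin t i
    have tri : ‖ML - HL t (ghat i)‖ ≤ ‖ML - FL t i‖ + ‖FL t i - HL t (ghat i)‖ := by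
      have hdec : ML - HL t (ghat i) = (ML - FL t i) + (FL t i - HL t (ghat i)) := by abel
      rw [hdec]; exact norm_add_le _ _
    have hd : ‖FL t i - HL t (ghat i)‖ ^ 2 ≤ Bθ ^ 2 * ε₁ := by
      rw [norm_sub_rev]; exact hdiff t i
    have hx2 : ‖ML - HL t (ghat i)‖ ^ 2
        ≤ 2 * ‖ML - FL t i‖ ^ 2 + 2 * ‖FL t i - HL t (ghat i)‖ ^ 2 :=
      sq_le_two_sq_add_two_sq (norm_nonneg _) tri
    linarith [d1.1, d1.2, d2.1, d2.2]
  -- final deterministic bound against any competitor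
  have final : ∀ p : Θ × I,
      (∫ ω, (F θhat ihat ω - M ω) ^ 2 ∂P)
        ≤ 4 * (∫ ω, (M ω - F p.1 p.2 ω) ^ 2 ∂P) + 6 * Bθ ^ 2 * ε₁ + 4 * Δ₂ := by
    rintro ⟨t, i⟩
    have eL : (∫ ω, (F θhat ihat ω - M ω) ^ 2 ∂P) = ‖FL θhat ihat - ML‖ ^ 2 :=
      sq_eq _ _ (hF2 θhat ihat) hM2
    have eR : (∫ ω, (M ω - F t i ω) ^ 2 ∂P) = ‖ML - FL t i‖ ^ 2 :=
      sq_eq _ _ hM2 (hF2 t i)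
    rw [eL, eR]
    have tri2 : ‖FL θhat ihat - ML‖
        ≤ ‖FL θhat ihat - HL θhat (ghat ihat)‖ + ‖ML - HL θhat (ghat ihat)‖ := by
      have hdec : FL θhat ihat - ML
          = (FL θhat ihat - HL θhat (ghat ihat)) + (HL θhat (ghat ihat) - ML) := by abel
      rw [hdec]
      refine (norm_add_le _ _).trans ?_
      rw [norm_sub_rev (HL θhat (ghat ihat)) ML]
    have hd2 : ‖FL θhat ihat - HL θhat (ghat ihat)‖ ^ 2 ≤ Bθ ^ 2 * ε₁ := by
      rw [norm_sub_rev]; exact hdiff θhat ihat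
    have hk := key t i
    have hx2 : ‖FL θhat ihat - ML‖ ^ 2
        ≤ 2 * ‖FL θhat ihat - HL θhat (ghat ihat)‖ ^ 2
          + 2 * ‖ML - HL θhat (ghat ihat)‖ ^ 2 :=
      sq_le_two_sq_add_two_sq (norm_nonneg _) tri2
    linarith
  -- pass to the infimum
  have hinf : ((∫ ω, (F θhat ihat ω - M ω) ^ 2 ∂P) - 6 * Bθ ^ 2 * ε₁ - 4 * Δ₂) / 4
      ≤ ⨅ p : Θ × I,
          ∫ ω, (m0 (Q ω) - ⟪θ p.1 (π (Q ω)), μ p.2 (Q ω)⟫) ^ 2 ∂P := by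
    refine le_ciInf fun p => ?_
    show _ ≤ ∫ ω, (M ω - F p.1 p.2 ω) ^ 2 ∂P
    have := final p
    linarith
  have hgoal : (∫ ω, (F θhat ihat ω - M ω) ^ 2 ∂P)
      ≤ 4 * (⨅ p : Θ × I,
              ∫ ω, (m0 (Q ω) - ⟪θ p.1 (π (Q ω)), μ p.2 (Q ω)⟫) ^ 2 ∂P)
        + 6 * Bθ ^ 2 * ε₁ + 4 * Δ₂ := by
    linarith
  exact hgoal
end
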